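/- arXiv:math/0610556 — 14 statements merged into one kernel-verified Lean document; each statement's English description precedes it below -/
import Mathlib

section
/- Let G be a finite group, n m : ℕ, and let the tuple of relators r : Fin m → FreeGroup (Fin n) be a presentation P of G. Then the cardinality of the automorphism group of G equals the cardinality of S_P, i.e., Nat.card (MulAut G) = Nat.card {a : Fin n → G | a is a presentation n-tuple of P}. -/
/-!
A presentation tuple `a` is the same thing as a surjective homomorphism `lift a` from the free
group that kills the relators, i.e. whose kernel contains the kernel of the presentation map
`f : FreeGroup (Fin n) → G`. Such homomorphisms factor uniquely as `ψ ∘ f` with `ψ` a surjective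
endomorphism of `G`, and since `G` is finite these are exactly its automorphisms.
-/

open Function

namespace MulAut

noncomputable def equivSurjectiveEnd (G : Type*) [Group G] [Finite G] :
    MulAut G ≃ {ψ : G →* G // Surjective ψ} where
  toFun φ := ⟨φ.toMonoidHom, φ.surjective⟩
  invFun ψ := MulEquiv.ofBijective ψ.1 ⟨Finite.injective_iff_surjective.mpr ψ.2, ψ.2⟩
  left_inv _ := by ext; rfl
  right_inv _ := rfl

noncomputable def equivSurjectiveHomOfKerLe {F G : Type*} [Group F] [Group G] [Finite G]
    (f : F →* G) (hf : Surjective f) :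
    MulAut G ≃ {g : F →* G // f.ker ≤ g.ker ∧ Surjective g} :=
  (equivSurjectiveEnd G).trans <|
    ((f.liftOfSurjective hf).symm.subtypeEquiv fun ψ => (Surjective.of_comp_iff ψ hf).symm).trans
      (Equiv.subtypeSubtypeEquivSubtypeInter _ _)

end MulAut

theorem MonoidHom.normalClosure_range_le_ker_iff {F H ι : Type*} [Group F] [Group H]
    (g : F →* H) (r : ι → F) :
    Subgroup.normalClosure (Set.range r) ≤ g.ker ↔ ∀ k, g (r k) = 1 := by
  rw [← Subgroup.normalClosure_subset_iff, Set.range_subset_iff]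
  rfl

/-- `|Aut(G)| = |S_P|` for every finite-rank presentation `P` of a finite
group `G`. -/
theorem stmt_1 {G : Type*} [Group G] [Finite G] {n m : ℕ}
    (r : Fin m → FreeGroup (Fin n))
    (hP : ∃ f : FreeGroup (Fin n) →* G, Function.Surjective f ∧
      f.ker = Subgroup.normalClosure (Set.range r)) :
    Nat.card (MulAut G) =
      Nat.card {a : Fin n → G //
        Function.Surjective (FreeGroup.lift a) ∧ ∀ k, FreeGroup.lift a (r k) = 1} := by
  obtain ⟨f, hf, hker⟩ := hP
  rw [Nat.card_congr (MulAut.equivSurjectiveHomOfKerLe f hf)]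
  refine Nat.card_congr (FreeGroup.lift.subtypeEquiv fun a => ?_).symm
  rw [hker, MonoidHom.normalClosure_range_le_ker_iff, and_comm]
end

section
/- Let Ĝ and G be finite groups and π : Ĝ → G a surjective homomorphism whose kernel is a characteristic subgroup of Ĝ; let ζ : MulAut Ĝ → MulAut G be the unique homomorphism with ζ(ψ) ∘ π = π ∘ ψ for all ψ. Let r̂ : Fin m̂ → FreeGroup (Fin n) be a presentation P̂ of Ĝ with presentation n-tuple â, and r : Fin m → FreeGroup (Fin n) a presentation P of G such that π ∘ â is a presentation n-tuple of P. Then: (a) for every presentation n-tuple b̂ of P̂, the tuple π ∘ b̂ is a presentation n-tuple of P; and (b) Nat.card (ker ζ) = Nat.card {b̂ : Fin n → Ĝ | b̂ is a presentation n-tuple of P̂ and π ∘ b̂ = π ∘ â}. -/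
/-!
Because `Ĝ` is finite, a presentation tuple `â` of `P̂` determines all the others: for any
presentation tuple `b̂`, the kernels of `lift â` and `lift b̂` both contain the normal closure of
the relators, which is exactly `ker (lift â)`, and they have the same finite index, so they are
equal and `lift b̂ = ψ ∘ lift â` for a unique `ψ ∈ Aut Ĝ`. Hence `π ∘ b̂ = ζ ψ ∘ (π ∘ â)` is
again a presentation tuple of `P`, and since `π ∘ â` generates `G`, `ψ` lies in `ker ζ`
exactly when `π ∘ b̂ = π ∘ â`.
-/
open Function FreeGroup

theorem MonoidHom.ker_eq_of_le_of_surjective {F H : Type*} [Group F] [Group H] [Finite H]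
    {f g : F →* H} (hf : Surjective f) (hg : Surjective g) (h : f.ker ≤ g.ker) :
    f.ker = g.ker := by
  have index_ker_eq {φ : F →* H} (hφ : Surjective φ) : φ.ker.index = Nat.card H := by
    rw [Subgroup.index_ker, MonoidHom.range_eq_top.mpr hφ, Subgroup.card_top]
  by_contra hne
  have := Subgroup.index_strictAnti (h.lt_of_ne hne)
  rw [index_ker_eq hf, index_ker_eq hg] at this
  exact this.false

theorem MonoidHom.exists_mulEquiv_comp_eq_of_ker_eq {F H K : Type*} [Group F] [Group H] [Group K]
    {f : F →* H} {g : F →* K} (hf : Surjective f) (hg : Surjective g) (h : f.ker = g.ker) :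
    ∃ ψ : H ≃* K, ψ.toMonoidHom.comp f = g := by
  refine ⟨((QuotientGroup.quotientKerEquivOfSurjective f hf).symm.trans
      (QuotientGroup.quotientMulEquivOfEq h)).trans
      (QuotientGroup.quotientKerEquivOfSurjective g hg), MonoidHom.ext fun x => ?_⟩
  have : (QuotientGroup.quotientKerEquivOfSurjective f hf).symm (f x) = x :=
    (MulEquiv.symm_apply_eq _).2 rfl
  simp only [MulEquiv.toMonoidHom_eq_coe, MulEquiv.coe_monoidHom_trans, coe_comp, coe_coe,
    Function.comp_apply, this, QuotientGroup.quotientMulEquivOfEq_mk]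
  rfl

namespace FreeGroup

variable {α G H : Type*} [Group G] [Group H]

theorem lift_comp_monoidHom (φ : G →* H) (a : α → G) : lift (φ ∘ a) = φ.comp (lift a) :=
  ext_hom _ _ fun _ => by simp

theorem mulAut_comp_injective {a : α → G} (ha : Surjective (lift a)) :
    Injective fun ψ : MulAut G => ⇑ψ ∘ a := by
  intro ψ ψ' h
  have : ψ.toMonoidHom.comp (lift a) = ψ'.toMonoidHom.comp (lift a) := by
    rw [← lift_comp_monoidHom, ← lift_comp_monoidHom]
    exact congrArg lift h
  exact MulEquiv.toMonoidHom_injective ((MonoidHom.cancel_right ha).1 this)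

end FreeGroup

def IsPresentationTuple {α ι G : Type*} [Group G] (r : ι → FreeGroup α) (a : α → G) : Prop :=
  Surjective (lift a) ∧ ∀ k, lift a (r k) = 1

namespace IsPresentationTuple

variable {α ι G H : Type*} [Group G] [Group H] {r : ι → FreeGroup α} {a b : α → G}

theorem mulEquiv_comp (ha : IsPresentationTuple r a) (ψ : G ≃* H) :
    IsPresentationTuple r (ψ ∘ a) := by
  have hlift : lift (⇑ψ ∘ a) = ψ.toMonoidHom.comp (lift a) := lift_comp_monoidHom ψ.toMonoidHom a
  exact ⟨hlift ▸ ψ.surjective.comp ha.1, fun k => by simp [hlift, ha.2 k]⟩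

theorem normalClosure_le_ker (ha : IsPresentationTuple r a) :
    Subgroup.normalClosure (Set.range r) ≤ (lift a).ker :=
  Subgroup.normalClosure_le_normal <| Set.range_subset_iff.2 ha.2

theorem ker_lift_eq_normalClosure [Finite G] (ha : IsPresentationTuple r a)
    (hP : ∃ f : FreeGroup α →* G, Surjective f ∧ f.ker = Subgroup.normalClosure (Set.range r)) :
    (lift a).ker = Subgroup.normalClosure (Set.range r) := by
  obtain ⟨f, hf, hker⟩ := hP
  rw [← hker, MonoidHom.ker_eq_of_le_of_surjective hf ha.1 (hker ▸ ha.normalClosure_le_ker)]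

theorem exists_mulAut_comp_eq [Finite G] (ha : Surjective (lift a))
    (hker : (lift a).ker = Subgroup.normalClosure (Set.range r)) (hb : IsPresentationTuple r b) :
    ∃ ψ : MulAut G, ⇑ψ ∘ a = b := by
  obtain ⟨ψ, hψ⟩ := MonoidHom.exists_mulEquiv_comp_eq_of_ker_eq ha hb.1 <|
    MonoidHom.ker_eq_of_le_of_surjective ha hb.1 (hker ▸ hb.normalClosure_le_ker)
  exact ⟨ψ, funext fun j => by simpa using DFunLike.congr_fun hψ (of j)⟩

theorem range_mulAut_comp [Finite G] (ha : IsPresentationTuple r a)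
    (hker : (lift a).ker = Subgroup.normalClosure (Set.range r)) :
    Set.range (fun ψ : MulAut G => ⇑ψ ∘ a) = {b | IsPresentationTuple r b} := by
  ext b
  constructor
  · rintro ⟨ψ, rfl⟩
    exact ha.mulEquiv_comp ψ
  · exact exists_mulAut_comp_eq ha.1 hker

end IsPresentationTuple

section MulAutLift

variable {α Ghat G : Type*} [Group Ghat] [Group G] (π : Ghat →* G) (ζ : MulAut Ghat →* MulAut G)

theorem comp_mulAut_comp_eq (hζ : ∀ (ψ : MulAut Ghat) (g : Ghat), ζ ψ (π g) = π (ψ g))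
    (ψ : MulAut Ghat) (a : α → Ghat) : ⇑π ∘ ⇑ψ ∘ a = ⇑(ζ ψ) ∘ ⇑π ∘ a :=
  funext fun j => (hζ ψ (a j)).symm

theorem coe_ker_eq_preimage_mulAut_comp
    (hζ : ∀ (ψ : MulAut Ghat) (g : Ghat), ζ ψ (π g) = π (ψ g))
    {a : α → Ghat} (ha : Surjective (lift (π ∘ a))) :
    (ζ.ker : Set (MulAut Ghat)) = (fun ψ : MulAut Ghat => ⇑ψ ∘ a) ⁻¹' {b | π ∘ b = π ∘ a} := by
  ext ψ
  change ζ ψ = 1 ↔ ⇑π ∘ ⇑ψ ∘ a = ⇑π ∘ a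
  rw [comp_mulAut_comp_eq π ζ hζ]
  exact (mulAut_comp_injective ha).eq_iff.symm

end MulAutLift

theorem stmt_3_general {Ghat G : Type*} [Group Ghat] [Group G] [Finite Ghat]
    (π : Ghat →* G)
    (ζ : MulAut Ghat →* MulAut G)
    (hζ : ∀ (ψ : MulAut Ghat) (g : Ghat), ζ ψ (π g) = π (ψ g))
    {n mhat m : ℕ} (rhat : Fin mhat → FreeGroup (Fin n)) (r : Fin m → FreeGroup (Fin n))
    (hPhat : ∃ f : FreeGroup (Fin n) →* Ghat, Function.Surjective f ∧
      f.ker = Subgroup.normalClosure (Set.range rhat))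
    (ahat : Fin n → Ghat)
    (hahat : Function.Surjective (FreeGroup.lift ahat) ∧
      ∀ k, FreeGroup.lift ahat (rhat k) = 1)
    (hπahat : Function.Surjective (FreeGroup.lift (π ∘ ahat)) ∧
      ∀ k, FreeGroup.lift (π ∘ ahat) (r k) = 1) :
    (∀ bhat : Fin n → Ghat,
      (Function.Surjective (FreeGroup.lift bhat) ∧ ∀ k, FreeGroup.lift bhat (rhat k) = 1) →
      (Function.Surjective (FreeGroup.lift (π ∘ bhat)) ∧
        ∀ k, FreeGroup.lift (π ∘ bhat) (r k) = 1)) ∧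
    Nat.card ζ.ker =
      Nat.card {bhat : Fin n → Ghat //
        (Function.Surjective (FreeGroup.lift bhat) ∧ ∀ k, FreeGroup.lift bhat (rhat k) = 1) ∧
        π ∘ bhat = π ∘ ahat} := by
  have ha : IsPresentationTuple rhat ahat := hahat
  have hπa : IsPresentationTuple r (π ∘ ahat) := hπahat
  have hker := ha.ker_lift_eq_normalClosure hPhat
  refine ⟨fun bhat hb => ?_, ?_⟩
  · obtain ⟨ψ, rfl⟩ := IsPresentationTuple.exists_mulAut_comp_eq ha.1 hker hb
    rw [comp_mulAut_comp_eq π ζ hζ]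
    exact hπa.mulEquiv_comp (ζ ψ)
  · change Nat.card (ζ.ker : Set (MulAut Ghat)) = _
    rw [← Nat.card_image_of_injective (mulAut_comp_injective ha.1),
      coe_ker_eq_preimage_mulAut_comp π ζ hζ hπa.1, Set.image_preimage_eq_range_inter,
      ha.range_mulAut_comp hker]
    rfl

/-- Theorem `sizeker` (a) and (b): for a covering `π : Ĝ → G` with
characteristic kernel, images under `π` of presentation tuples of `P̂` are presentation
tuples of `P`, and `|Ker ζ| = |{b̂ ∈ S_P̂ ∣ π ∘ b̂ = π ∘ â}|`. -/
theorem stmt_3 {Ghat G : Type*} [Group Ghat] [Group G] [Finite Ghat] [Finite G]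
    (π : Ghat →* G) (hπ : Function.Surjective π) (hchar : π.ker.Characteristic)
    (ζ : MulAut Ghat →* MulAut G)
    (hζ : ∀ (ψ : MulAut Ghat) (g : Ghat), ζ ψ (π g) = π (ψ g))
    {n mhat m : ℕ} (rhat : Fin mhat → FreeGroup (Fin n)) (r : Fin m → FreeGroup (Fin n))
    (hPhat : ∃ f : FreeGroup (Fin n) →* Ghat, Function.Surjective f ∧
      f.ker = Subgroup.normalClosure (Set.range rhat))
    (hP : ∃ f : FreeGroup (Fin n) →* G, Function.Surjective f ∧
      f.ker = Subgroup.normalClosure (Set.range r))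
    (ahat : Fin n → Ghat)
    (hahat : Function.Surjective (FreeGroup.lift ahat) ∧
      ∀ k, FreeGroup.lift ahat (rhat k) = 1)
    (hπahat : Function.Surjective (FreeGroup.lift (π ∘ ahat)) ∧
      ∀ k, FreeGroup.lift (π ∘ ahat) (r k) = 1) :
    (∀ bhat : Fin n → Ghat,
      (Function.Surjective (FreeGroup.lift bhat) ∧ ∀ k, FreeGroup.lift bhat (rhat k) = 1) →
      (Function.Surjective (FreeGroup.lift (π ∘ bhat)) ∧
        ∀ k, FreeGroup.lift (π ∘ bhat) (r k) = 1)) ∧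
    Nat.card ζ.ker =
      Nat.card {bhat : Fin n → Ghat //
        (Function.Surjective (FreeGroup.lift bhat) ∧ ∀ k, FreeGroup.lift bhat (rhat k) = 1) ∧
        π ∘ bhat = π ∘ ahat} :=
  stmt_3_general π ζ hζ rhat r hPhat ahat hahat hπahat
end

section
/- Let n m : ℕ and r : Fin m → FreeGroup (Fin n) be relators such that the presentation is of simple type with degree d (d = number of odd relators). Then d ≤ n, and the image of the mod-2 exponent-sum homomorphism ρ : (Fin n → ZMod 2) → (Fin m → ZMod 2) is a subgroup of index 2^(m−d) in (Fin m → ZMod 2). -/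
/-- The `i`-th exponent-sum homomorphism `FreeGroup (Fin n) → ℤ` (written multiplicatively),
sending the `i`-th generator to `1` and all other generators to `0`. -/
noncomputable def expSum {n : ℕ} (i : Fin n) : FreeGroup (Fin n) →* Multiplicative ℤ :=
  FreeGroup.lift fun j => Multiplicative.ofAdd (if j = i then (1 : ℤ) else 0)

/-- The mod-2 exponent-sum homomorphism `ρ : C₂ⁿ → C₂ᵐ` of a tuple of relators,
`ρ(I)(k) = Σ_i ((r_k)_i mod 2) · I(i)`. -/
noncomputable def rho {n m : ℕ} (r : Fin m → FreeGroup (Fin n)) :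
    (Fin n → ZMod 2) →+ (Fin m → ZMod 2) :=
  (Matrix.mulVecLin
    (Matrix.of fun k i =>
      ((Multiplicative.toAdd (expSum i (r k)) : ℤ) : ZMod 2))).toAddMonoidHom

private lemma zmod2_eq_one (a : ZMod 2) (h : a ≠ 0) : a = 1 := by
  revert a; decide

private lemma atMostOne {α : Type*} [Finite α] (h : Nat.card α ≤ 1) (a b : α) : a = b := by
  cases nonempty_fintype α
  rw [Nat.card_eq_fintype_card] at h
  exact Fintype.card_le_one_iff.mp h a b

/-- For a presentation of simple type of degree `d` (the number of odd
relators), `d ≤ n` and the image of `ρ` has index `2^(m-d)` in `C₂ᵐ`. -/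
theorem stmt_5 {n m : ℕ} (r : Fin m → FreeGroup (Fin n)) (d : ℕ)
    (hsimple1 : ∀ k : Fin m,
      Nat.card {i : Fin n // Odd (Multiplicative.toAdd (expSum i (r k)))} ≤ 1)
    (hsimple2 : ∀ i : Fin n,
      Nat.card {k : Fin m // Odd (Multiplicative.toAdd (expSum i (r k)))} ≤ 1)
    (hd : d = Nat.card {k : Fin m // ∃ i, Odd (Multiplicative.toAdd (expSum i (r k)))}) :
    d ≤ n ∧ (AddMonoidHom.range (rho r)).index = 2 ^ (m - d) := by
  classical
  set A : Matrix (Fin m) (Fin n) (ZMod 2) :=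
    Matrix.of (fun k i => ((Multiplicative.toAdd (expSum i (r k)) : ℤ) : ZMod 2)) with hAdef
  have hrho : ∀ I k, rho r I k = ∑ i, A k i * I i := fun I k => rfl
  have hoddA : ∀ k i, Odd (Multiplicative.toAdd (expSum i (r k))) ↔ A k i ≠ 0 := by
    intro k i
    have h2 := ZMod.intCast_zmod_eq_zero_iff_dvd (Multiplicative.toAdd (expSum i (r k))) 2
    norm_num at h2
    rw [Int.not_even_iff_odd.symm, even_iff_two_dvd, ← h2]
    exact Iff.rfl
  set Ω := {k : Fin m // ∃ i, Odd (Multiplicative.toAdd (expSum i (r k)))} with hΩ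
  have hc : ∀ k : Ω, ∃ i, A k.1 i ≠ 0 := fun k => ⟨k.2.choose, (hoddA _ _).mp k.2.choose_spec⟩
  choose c hcne using hc
  have hcodd : ∀ k : Ω, Odd (Multiplicative.toAdd (expSum (c k) (r k.1))) :=
    fun k => (hoddA _ _).mpr (hcne k)
  have hcinj : Function.Injective c := by
    intro k k' h
    have h2 : Odd (Multiplicative.toAdd (expSum (c k) (r k'.1))) := h ▸ hcodd k'
    have := atMostOne (hsimple2 (c k)) ⟨k.1, hcodd k⟩ ⟨k'.1, h2⟩
    have h3 := congrArg Subtype.val this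
    exact Subtype.ext h3
  -- row uniqueness: in an odd row, the only nonzero entry is at `c k`
  have hrowuniq : ∀ (k : Ω) (i : Fin n), A k.1 i ≠ 0 → i = c k := by
    intro k i hi
    have hi' : Odd (Multiplicative.toAdd (expSum i (r k.1))) := (hoddA _ _).mpr hi
    have := atMostOne (hsimple1 k.1) ⟨i, hi'⟩ ⟨c k, hcodd k⟩
    exact congrArg Subtype.val this
  -- even rows are zero
  have hevenrow : ∀ k : Fin m, ¬(∃ i, Odd (Multiplicative.toAdd (expSum i (r k)))) →
      ∀ i, A k i = 0 := by
    intro k hk i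
    by_contra h
    exact hk ⟨i, (hoddA k i).mpr h⟩
  have hzero : ∀ v ∈ AddMonoidHom.range (rho r), ∀ k : Fin m,
      ¬(∃ i, Odd (Multiplicative.toAdd (expSum i (r k)))) → v k = 0 := by
    rintro v ⟨I, rfl⟩ k hk
    rw [hrho]
    exact Finset.sum_eq_zero fun i _ => by rw [hevenrow k hk i, zero_mul]
  -- d ≤ n
  have hdn : d ≤ n := by
    rw [hd]
    have := Nat.card_le_card_of_injective c hcinj
    simpa using this
  -- the restriction map from the range to (Ω → ZMod 2) is bijective
  have key : ∀ w : Ω → ZMod 2, ∃ I : Fin n → ZMod 2,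
      rho r I = fun k => if h : ∃ i, Odd (Multiplicative.toAdd (expSum i (r k)))
        then w ⟨k, h⟩ else 0 := by
    intro w
    refine ⟨fun i => if h : ∃ k : Ω, c k = i then w h.choose else 0, ?_⟩
    funext k
    rw [hrho]
    by_cases hk : ∃ i, Odd (Multiplicative.toAdd (expSum i (r k)))
    · rw [dif_pos hk]
      set k' : Ω := ⟨k, hk⟩
      rw [Finset.sum_eq_single (c k')]
      · have hex : ∃ k₀ : Ω, c k₀ = c k' := ⟨k', rfl⟩
        rw [dif_pos hex]
        have : hex.choose = k' := hcinj hex.choose_spec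
        rw [this]
        rw [zmod2_eq_one _ (hcne k'), one_mul]
      · intro i _ hi
        have : A k i = 0 := by
          by_contra h
          exact hi (hrowuniq k' i h)
        rw [this, zero_mul]
      · intro h; exact absurd (Finset.mem_univ _) h
    · rw [dif_neg hk]
      exact Finset.sum_eq_zero fun i _ => by rw [hevenrow k hk i, zero_mul]
  have hbij : ∃ e : (AddMonoidHom.range (rho r)) → (Ω → ZMod 2), Function.Bijective e := by
    refine ⟨fun v k => v.1 k.1, ?_, ?_⟩
    · intro v v' h
      ext k
      by_cases hk : ∃ i, Odd (Multiplicative.toAdd (expSum i (r k)))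
      · exact congrFun h ⟨k, hk⟩
      · rw [hzero v.1 v.2 k hk, hzero v'.1 v'.2 k hk]
    · intro w
      obtain ⟨I, hI⟩ := key w
      refine ⟨⟨rho r I, ⟨I, rfl⟩⟩, ?_⟩
      funext k
      show (rho r I) k.1 = w k
      rw [hI]
      simp only [dif_pos k.2]
      rfl
  obtain ⟨e, he⟩ := hbij
  have hcard : Nat.card (AddMonoidHom.range (rho r)) = 2 ^ d := by
    rw [Nat.card_eq_of_bijective e he, Nat.card_fun, hd]
    norm_num
  have hdm : d ≤ m := by
    rw [hd]
    have := Nat.card_le_card_of_injective (Subtype.val : Ω → Fin m) Subtype.val_injective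
    simpa using this
  have htot : Nat.card (Fin m → ZMod 2) = 2 ^ m := by
    rw [Nat.card_fun]; norm_num
  have hmul := (AddMonoidHom.range (rho r)).index_mul_card
  rw [hcard, htot] at hmul
  refine ⟨hdn, ?_⟩
  have h2 : 2 ^ (m - d) * 2 ^ d = 2 ^ m := by
    rw [← pow_add, Nat.sub_add_cancel hdm]
  exact Nat.eq_of_mul_eq_mul_right (by positivity : 0 < 2 ^ d) (hmul.trans h2.symm)
end

section
/- Let G be a finite group, n m : ℕ, and let r : Fin m → FreeGroup (Fin n) be a presentation P of G. Let C₂ = Multiplicative (ZMod 2) and i = (1, -1) ∈ G × C₂. Suppose J : Fin m → ZMod 2 and â : Fin n → G × C₂ are such that the induced homomorphism lift â : FreeGroup (Fin n) → G × C₂ is surjective and lift â (r_k) = i^((J k).val) for all k. Then J lies in the image of the mod-2 exponent-sum homomorphism ρ : (Fin n → ZMod 2) → (Fin m → ZMod 2). (Equivalently: the direct product G × C₂ has only one presentation class arising from P, namely [P_1].) -/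
/-! A homomorphism from a free group to an abelian group factors through the abelianization,
so its value on a word is determined by the exponent sums of the word. Applied to the
`C₂`-coordinate of `lift â`, this exhibits the second coordinates of `â` as a preimage of `J`
under `ρ`. -/

lemma expSum_of {n : ℕ} (i j : Fin n) :
    Multiplicative.toAdd (expSum i (FreeGroup.of j)) = if j = i then 1 else 0 := by
  simp [expSum]

lemma toAdd_apply_eq_sum_expSum_zsmul {n : ℕ} {A : Type*} [AddCommGroup A]
    (φ : FreeGroup (Fin n) →* Multiplicative A) (w : FreeGroup (Fin n)) :
    Multiplicative.toAdd (φ w) =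
      ∑ i, Multiplicative.toAdd (expSum i w) • Multiplicative.toAdd (φ (FreeGroup.of i)) := by
  induction w using FreeGroup.induction_on with
  | C1 => simp
  | of j => simp [expSum_of]
  | inv_of w ih => simp [ih]
  | mul w v ihw ihv => simp [ihw, ihv, add_zsmul, Finset.sum_add_distrib]

lemma rho_apply {n m : ℕ} (r : Fin m → FreeGroup (Fin n)) (I : Fin n → ZMod 2) (k : Fin m) :
    rho r I k = ∑ i, ((Multiplicative.toAdd (expSum i (r k)) : ℤ) : ZMod 2) * I i := by
  simp [rho, Matrix.mulVec, dotProduct]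

theorem stmt_6_general {G : Type*} [Group G] {n m : ℕ}
    (r : Fin m → FreeGroup (Fin n))
    (J : Fin m → ZMod 2) (ahat : Fin n → G × Multiplicative (ZMod 2))
    (hrel : ∀ k, FreeGroup.lift ahat (r k) =
      ((1 : G), Multiplicative.ofAdd (1 : ZMod 2)) ^ (J k).val) :
    ∃ I : Fin n → ZMod 2, rho r I = J := by
  refine ⟨fun i => Multiplicative.toAdd (ahat i).2, funext fun k => ?_⟩
  have hsnd := toAdd_apply_eq_sum_expSum_zsmul
    ((MonoidHom.snd G (Multiplicative (ZMod 2))).comp (FreeGroup.lift ahat)) (r k)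
  have hJ : Multiplicative.toAdd (FreeGroup.lift ahat (r k)).2 = J k := by
    simp [hrel k, ZMod.natCast_val, ZMod.cast_id]
  simp only [MonoidHom.comp_apply, MonoidHom.coe_snd, FreeGroup.lift_apply_of, zsmul_eq_mul,
    hJ] at hsnd
  rw [rho_apply, hsnd]

/-- Theorem `UniquePClass`: the direct product `G × C₂` has only one
presentation class arising from a presentation `P` of `G`, namely `[P_1]`; that is, any
`J` realized by a lift to `G × C₂` of the presentation lies in the image of `ρ`. -/
theorem stmt_6 {G : Type*} [Group G] [Finite G] {n m : ℕ}
    (r : Fin m → FreeGroup (Fin n))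
    (hP : ∃ f : FreeGroup (Fin n) →* G, Function.Surjective f ∧
      f.ker = Subgroup.normalClosure (Set.range r))
    (J : Fin m → ZMod 2) (ahat : Fin n → G × Multiplicative (ZMod 2))
    (hsurj : Function.Surjective (FreeGroup.lift ahat))
    (hrel : ∀ k, FreeGroup.lift ahat (r k) =
      ((1 : G), Multiplicative.ofAdd (1 : ZMod 2)) ^ (J k).val) :
    ∃ I : Fin n → ZMod 2, rho r I = J :=
  stmt_6_general r J ahat hrel
end

section
/- Let Ĝ and G be finite groups and π : Ĝ → G surjective with kernel of cardinality 2 which is a characteristic subgroup of Ĝ; let i be the nontrivial element of ker π and ζ : MulAut Ĝ → MulAut G the unique homomorphism with ζ(ψ) ∘ π = π ∘ ψ for all ψ. Let r : Fin m → FreeGroup (Fin n) be a presentation P of G, and suppose there exist J : Fin m → ZMod 2 with J ≠ 0 and â : Fin n → Ĝ such that lift â is surjective and lift â (r_k) = i^((J k).val) for all k. Then ζ is surjective if and only if for every b̂ : Fin n → Ĝ with lift b̂ surjective and lift b̂ (r_k) ∈ ker π for all k, the tuple L : Fin m → ZMod 2 defined by lift b̂ (r_k) = i^((L k).val) satisfies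 L ∈ J + (image of ρ), where ρ is the mod-2 exponent-sum homomorphism of the relators. -/
namespace Stmt7Aux

variable {Ghat : Type*} [Group Ghat]

lemma zmod2_cases : ∀ a : ZMod 2, a = 0 ∨ a = 1 := by decide

lemma pow_val_mul (i : Ghat) (h2 : i ^ 2 = 1) (a b : ZMod 2) :
    i ^ (a + b).val = i ^ a.val * i ^ b.val := by
  rw [ZMod.val_add, ← pow_eq_pow_mod _ h2, pow_add]

lemma val_eq_of_pow_eq (i : Ghat) (h1 : i ≠ 1) {a b : ZMod 2}
    (h : i ^ a.val = i ^ b.val) : a = b := by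
  rcases zmod2_cases a with rfl | rfl <;> rcases zmod2_cases b with rfl | rfl <;>
    simp_all [ZMod.val_one]

lemma lift_ofAdd_eq {n : ℕ} (I : Fin n → ZMod 2) (w : FreeGroup (Fin n)) :
    FreeGroup.lift (fun j => Multiplicative.ofAdd (I j)) w
      = Multiplicative.ofAdd
          (∑ j, ((Multiplicative.toAdd (expSum j w) : ℤ) : ZMod 2) * I j) := by
  have hpure : ∀ x : Fin n, (pure x : FreeGroup (Fin n)) = FreeGroup.of x := fun _ => rfl
  induction w using FreeGroup.induction_on with
  | C1 => simp [expSum]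
  | of x =>
      simp only [hpure, FreeGroup.lift_apply_of, expSum, toAdd_ofAdd]
      congr 1
      have hj : ∀ j : Fin n, (((if x = j then (1:ℤ) else 0) : ℤ) : ZMod 2) * I j
          = if x = j then I j else 0 := by intro j; split <;> simp
      rw [Finset.sum_congr rfl fun j _ => hj j, Finset.sum_ite_eq]
      simp
  | inv_of x hx =>
      rw [map_inv, hx, ← ofAdd_neg]
      congr 1
      rw [← Finset.sum_neg_distrib]
      refine Finset.sum_congr rfl fun j _ => ?_
      rw [map_inv, toAdd_inv]
      push_cast
      ring
  | mul x y hx hy =>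
      rw [map_mul, hx, hy, ← ofAdd_add]
      congr 1
      rw [← Finset.sum_add_distrib]
      refine Finset.sum_congr rfl fun j _ => ?_
      rw [map_mul, toAdd_mul]
      push_cast
      ring


lemma rho_apply {n m : ℕ} (r : Fin m → FreeGroup (Fin n)) (I : Fin n → ZMod 2) (k : Fin m) :
    rho r I k = ∑ j, ((Multiplicative.toAdd (expSum j (r k)) : ℤ) : ZMod 2) * I j := by
  simp [rho, Matrix.mulVecLin_apply, Matrix.mulVec, dotProduct]

lemma lift_pow_eq {n : ℕ} (i : Ghat) (h2 : i ^ 2 = 1) (I : Fin n → ZMod 2)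
    (w : FreeGroup (Fin n)) :
    FreeGroup.lift (fun j => i ^ (I j).val) w
      = i ^ ((∑ j, ((Multiplicative.toAdd (expSum j w) : ℤ) : ZMod 2) * I j)).val := by
  let e : Multiplicative (ZMod 2) →* Ghat :=
    MonoidHom.mk' (fun t => i ^ (Multiplicative.toAdd t).val)
      (fun a b => pow_val_mul i h2 a b)
  have he : FreeGroup.lift (fun j => i ^ (I j).val)
      = e.comp (FreeGroup.lift (fun j => Multiplicative.ofAdd (I j))) :=
    FreeGroup.ext_hom _ _ (fun a => by simp [e])
  rw [he, MonoidHom.comp_apply, lift_ofAdd_eq]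
  rfl

lemma lift_pow_rho {n m : ℕ} (i : Ghat) (h2 : i ^ 2 = 1) (r : Fin m → FreeGroup (Fin n))
    (I : Fin n → ZMod 2) (k : Fin m) :
    FreeGroup.lift (fun j => i ^ (I j).val) (r k) = i ^ ((rho r I) k).val := by
  rw [lift_pow_eq i h2, rho_apply]

lemma lift_mul_central {n : ℕ} (i : Ghat) (hcen : ∀ g : Ghat, Commute i g)
    (c : Fin n → Ghat) (e : Fin n → ℕ) (w : FreeGroup (Fin n)) :
    FreeGroup.lift (fun j => c j * i ^ e j) w
      = FreeGroup.lift c w * FreeGroup.lift (fun j => i ^ e j) w := by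
  have hpure : ∀ x : Fin n, (pure x : FreeGroup (Fin n)) = FreeGroup.of x := fun _ => rfl
  have hcom : ∀ v : FreeGroup (Fin n), ∀ g : Ghat,
      Commute (FreeGroup.lift (fun j => i ^ e j) v) g := by
    intro v
    induction v using FreeGroup.induction_on with
    | C1 => intro g; rw [map_one]; exact Commute.one_left g
    | of x => intro g; rw [FreeGroup.lift_apply_of]; exact (hcen g).pow_left _
    | inv_of x hx => intro g; rw [map_inv]; exact (hx g).inv_left
    | mul x y hx hy => intro g; rw [map_mul]; exact (hx g).mul_left (hy g)
  induction w using FreeGroup.induction_on with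
  | C1 => simp
  | of x => simp [hpure, FreeGroup.lift_apply_of]
  | inv_of x _ =>
      simp only [hpure, map_inv, FreeGroup.lift_apply_of, mul_inv_rev]
      exact (((hcen ((c x)⁻¹)).pow_left (e x)).inv_left).eq
  | mul x y hx hy =>
      calc FreeGroup.lift (fun j => c j * i ^ e j) (x * y)
          = (FreeGroup.lift c x * FreeGroup.lift (fun j => i ^ e j) x)
            * (FreeGroup.lift c y * FreeGroup.lift (fun j => i ^ e j) y) := by
            rw [map_mul, hx, hy]
        _ = FreeGroup.lift c x * (FreeGroup.lift (fun j => i ^ e j) x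
              * FreeGroup.lift c y) * FreeGroup.lift (fun j => i ^ e j) y := by group
        _ = FreeGroup.lift c x * (FreeGroup.lift c y
              * FreeGroup.lift (fun j => i ^ e j) x) * FreeGroup.lift (fun j => i ^ e j) y := by
            rw [(hcom x (FreeGroup.lift c y)).eq]
        _ = FreeGroup.lift c (x * y) * FreeGroup.lift (fun j => i ^ e j) (x * y) := by
            rw [map_mul, map_mul]; group

lemma eq_on_normalClosure {A : Type*} [Group A] (c d : A →* Ghat) (s : Set A)
    (hval : ∀ a ∈ s, c a = d a) (hcent : ∀ a ∈ s, ∀ g : Ghat, Commute (c a) g)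
    {w : A} (hw : w ∈ Subgroup.normalClosure s) : c w = d w := by
  have hw' : w ∈ Subgroup.closure (Group.conjugatesOfSet s) := hw
  clear hw
  induction hw' using Subgroup.closure_induction with
  | mem x hx =>
      obtain ⟨a, ha, hconj⟩ := Group.mem_conjugatesOfSet_iff.mp hx
      obtain ⟨u, rfl⟩ := isConj_iff.mp hconj
      have h1 : Commute (c a) (c u) := hcent a ha (c u)
      have h2 : Commute (d a) (d u) := by rw [← hval a ha]; exact hcent a ha (d u)
      have e1 : c (u * a * u⁻¹) = c a := by
        rw [map_mul, map_mul, map_inv, ← h1.eq, mul_inv_cancel_right]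
      have e2 : d (u * a * u⁻¹) = d a := by
        rw [map_mul, map_mul, map_inv, ← h2.eq, mul_inv_cancel_right]
      rw [e1, e2, hval a ha]
  | one => rw [map_one, map_one]
  | mul x y _ _ hcx hcy => rw [map_mul, map_mul, hcx, hcy]
  | inv x _ hcx => rw [map_inv, map_inv, hcx]

lemma exists_mulEquiv {A B : Type*} [Group A] [Group B] [Finite B]
    (f g : A →* B) (hf : Function.Surjective f) (hg : Function.Surjective g)
    (h : f.ker ≤ g.ker) : ∃ e : B ≃* B, ∀ a, e (f a) = g a := by
  set φ := f.liftOfRightInverse (Function.surjInv hf)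
    (Function.rightInverse_surjInv hf) ⟨g, h⟩ with hφdef
  have hφ : ∀ a, φ (f a) = g a := fun a =>
    f.liftOfRightInverse_comp_apply _ _ ⟨g, h⟩ a
  have hs : Function.Surjective φ := by
    intro b; obtain ⟨a, ha⟩ := hg b; exact ⟨f a, by rw [hφ, ha]⟩
  have hinj : Function.Injective φ := Finite.injective_iff_surjective.mpr hs
  exact ⟨MulEquiv.ofBijective φ ⟨hinj, hs⟩, fun a => hφ a⟩

lemma ker_eq_ker {A B : Type*} [Group A] [Group B] [Finite B]
    (f g : A →* B) (hf : Function.Surjective f) (hg : Function.Surjective g)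
    (h : f.ker ≤ g.ker) : g.ker = f.ker := by
  obtain ⟨e, he⟩ := exists_mulEquiv f g hf hg h
  refine le_antisymm (fun x hx => ?_) h
  rw [MonoidHom.mem_ker] at hx ⊢
  have : e (f x) = e 1 := by rw [he, map_one, hx]
  exact e.injective this

lemma eq_one_or_eq {H : Subgroup Ghat} (h2 : Nat.card H = 2) {i : Ghat} (hi : i ∈ H)
    (hi1 : i ≠ 1) : ∀ x ∈ H, x = 1 ∨ x = i := by
  obtain ⟨a, b, hab, huniv⟩ := Nat.card_eq_two_iff.mp h2
  intro x hx
  have hmem : ∀ y : H, y = a ∨ y = b := by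
    intro y
    have : y ∈ ({a, b} : Set H) := huniv ▸ Set.mem_univ y
    simpa using this
  rcases hmem ⟨x, hx⟩ with h3 | h3 <;>
    rcases hmem ⟨1, one_mem H⟩ with h1 | h1 <;>
      rcases hmem ⟨i, hi⟩ with h4 | h4 <;>
        first
          | (left; exact congrArg Subtype.val (h3.trans h1.symm))
          | (right; exact congrArg Subtype.val (h3.trans h4.symm))
          | (exact absurd (congrArg Subtype.val (h4.trans h1.symm)) hi1)

lemma lift_surj {F G' : Type*} [Group F] [Group G'] (π : Ghat →* G') (i : Ghat)
    (hk : ∀ x ∈ π.ker, x = 1 ∨ x = i) (c : F →* Ghat)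
    (hic : ∃ w, c w = i) (hs : Function.Surjective (π.comp c)) :
    Function.Surjective c := by
  intro g
  obtain ⟨w, hw⟩ := hs (π g)
  rw [MonoidHom.comp_apply] at hw
  have hm : g * (c w)⁻¹ ∈ π.ker := by
    rw [MonoidHom.mem_ker, map_mul, map_inv, hw, mul_inv_cancel]
  rcases hk _ hm with h | h
  · exact ⟨w, (mul_inv_eq_one.mp h).symm⟩
  · obtain ⟨w0, hw0⟩ := hic
    refine ⟨w0 * w, ?_⟩
    rw [map_mul, hw0, ← h]
    group

end Stmt7Aux

/-- Theorem `strong`: a double covering `π : Ĝ → G` with characteristic kernel,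
admitting a presentation `P_J` with `J ≠ 1`, is strong iff `[P_J]` is the only presentation
class of `Ĝ`, i.e. every realizable tuple `L` lies in the coset `J + Im ρ`. -/
theorem stmt_7 {Ghat G : Type*} [Group Ghat] [Group G] [Finite Ghat] [Finite G]
    (π : Ghat →* G) (hπ : Function.Surjective π) (hker2 : Nat.card π.ker = 2)
    (hchar : π.ker.Characteristic)
    (i : Ghat) (hi : i ∈ π.ker) (hi1 : i ≠ 1)
    (ζ : MulAut Ghat →* MulAut G)
    (hζ : ∀ (ψ : MulAut Ghat) (g : Ghat), ζ ψ (π g) = π (ψ g))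
    {n m : ℕ} (r : Fin m → FreeGroup (Fin n))
    (hP : ∃ f : FreeGroup (Fin n) →* G, Function.Surjective f ∧
      f.ker = Subgroup.normalClosure (Set.range r))
    (J : Fin m → ZMod 2) (hJ : J ≠ 0)
    (ahat : Fin n → Ghat)
    (hasurj : Function.Surjective (FreeGroup.lift ahat))
    (harel : ∀ k, FreeGroup.lift ahat (r k) = i ^ (J k).val) :
    Function.Surjective ζ ↔
      ∀ bhat : Fin n → Ghat, Function.Surjective (FreeGroup.lift bhat) →
        (∀ k, FreeGroup.lift bhat (r k) ∈ π.ker) →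
        ∀ L : Fin m → ZMod 2, (∀ k, FreeGroup.lift bhat (r k) = i ^ (L k).val) →
          ∃ I : Fin n → ZMod 2, L = J + rho r I := by
  classical
  obtain ⟨f, hfsurj, hfker⟩ := hP
  set N := Subgroup.normalClosure (Set.range r) with hN
  have hπi : π i = 1 := hi
  have hmem2 : ∀ x ∈ π.ker, x = 1 ∨ x = i := Stmt7Aux.eq_one_or_eq hker2 hi hi1
  have hi2 : i ^ 2 = 1 := by
    rcases hmem2 (i ^ 2) (by rw [MonoidHom.mem_ker, map_pow, hπi, one_pow]) with h | h
    · exact h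
    · exact absurd (by rw [pow_two] at h; exact mul_eq_left.mp h : i = 1) hi1
  have hcen : ∀ g : Ghat, Commute i g := by
    intro g
    have hmemc : g * i * g⁻¹ ∈ π.ker := (MonoidHom.normal_ker π).conj_mem i hi g
    rcases hmem2 _ hmemc with h | h
    · exfalso
      apply hi1
      have := congrArg (fun z => g⁻¹ * z * g) h
      simpa [mul_assoc] using this
    · have hgi : g * i = i * g := by
        have := congrArg (fun z => z * g) h
        simpa [mul_assoc] using this
      exact hgi.symm
  -- surjectivity of π ∘ lift ahat
  have surja : Function.Surjective (π.comp (FreeGroup.lift ahat)) := by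
    rw [MonoidHom.coe_comp]; exact hπ.comp hasurj
  have hker_a : (π.comp (FreeGroup.lift ahat)).ker = N := by
    rw [← hfker]
    apply Stmt7Aux.ker_eq_ker f _ hfsurj surja
    rw [hfker, hN]
    apply Subgroup.normalClosure_le_normal
    rintro x ⟨k, rfl⟩
    show r k ∈ (π.comp (FreeGroup.lift ahat)).ker
    rw [MonoidHom.mem_ker, MonoidHom.comp_apply, harel k, map_pow, hπi, one_pow]
  -- existence of some k0 with J k0 = 1
  obtain ⟨k0, hk0⟩ : ∃ k, J k = 1 := by
    by_contra hco
    push_neg at hco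
    apply hJ
    funext k
    rcases Stmt7Aux.zmod2_cases (J k) with h | h
    · exact h
    · exact absurd h (hco k)
  constructor
  · -- forward direction
    intro hsurj bhat hbsurj hbker L hL
    have surjb : Function.Surjective (π.comp (FreeGroup.lift bhat)) := by
      rw [MonoidHom.coe_comp]; exact hπ.comp hbsurj
    have hker_b : (π.comp (FreeGroup.lift bhat)).ker = N := by
      rw [← hfker]
      apply Stmt7Aux.ker_eq_ker f _ hfsurj surjb
      rw [hfker, hN]
      apply Subgroup.normalClosure_le_normal
      rintro x ⟨k, rfl⟩
      show r k ∈ (π.comp (FreeGroup.lift bhat)).ker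
      rw [MonoidHom.mem_ker, MonoidHom.comp_apply]
      exact hbker k
    obtain ⟨α, hα⟩ := Stmt7Aux.exists_mulEquiv (π.comp (FreeGroup.lift ahat))
      (π.comp (FreeGroup.lift bhat)) surja surjb (by rw [hker_a, hker_b])
    obtain ⟨ψ, hψ⟩ := hsurj α
    have hψi : ψ i = i := by
      have h1 : ψ i ∈ π.ker := by
        have h0 : i ∈ Subgroup.comap (MulEquiv.toMonoidHom (ψ : Ghat ≃* Ghat)) π.ker := by
          rw [hchar.fixed ψ]; exact hi
        exact h0
      rcases hmem2 _ h1 with h | h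
      · exact absurd (ψ.injective (by rw [h, map_one])) hi1
      · exact h
    set I : Fin n → ZMod 2 := fun j => if bhat j = ψ (ahat j) then 0 else 1 with hIdef
    have hbj : ∀ j, bhat j = ψ (ahat j) * i ^ (I j).val := by
      intro j
      have hπj : π (ψ (ahat j)) = π (bhat j) := by
        have h1 := hζ ψ (ahat j)
        rw [hψ] at h1
        have h2 := hα (FreeGroup.of j)
        simp only [MonoidHom.comp_apply, FreeGroup.lift_apply_of] at h2
        rw [← h1, h2]
      have hm : (ψ (ahat j))⁻¹ * bhat j ∈ π.ker := by
        rw [MonoidHom.mem_ker, map_mul, map_inv, hπj, inv_mul_cancel]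
      rcases hmem2 _ hm with h | h
      · have heq : bhat j = ψ (ahat j) := (inv_mul_eq_one.mp h).symm
        rw [hIdef]
        simp [heq]
      · have hb : bhat j = ψ (ahat j) * i := by rw [← h]; group
        have hne : ¬ bhat j = ψ (ahat j) := by
          rw [hb]
          intro hcon
          exact hi1 (mul_eq_left.mp hcon)
        rw [hIdef]
        simp [hne, hb, hi1, ZMod.val_one]
    refine ⟨I, funext fun k => ?_⟩
    have hψa : ∀ w, FreeGroup.lift (fun j => ψ (ahat j)) w = ψ (FreeGroup.lift ahat w) := by
      intro w
      have heq : FreeGroup.lift (fun j => ψ (ahat j))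
          = (MulEquiv.toMonoidHom (ψ : Ghat ≃* Ghat)).comp (FreeGroup.lift ahat) :=
        FreeGroup.ext_hom _ _ (fun a => by simp)
      rw [heq]; rfl
    have hcomp : FreeGroup.lift bhat (r k)
        = ψ (FreeGroup.lift ahat (r k)) * i ^ ((rho r I) k).val := by
      have hlift : FreeGroup.lift bhat
          = FreeGroup.lift (fun j => ψ (ahat j) * i ^ (I j).val) :=
        congrArg _ (funext hbj)
      rw [hlift, Stmt7Aux.lift_mul_central i hcen, hψa, Stmt7Aux.lift_pow_rho i hi2]
    rw [harel k, map_pow, hψi, hL k, ← Stmt7Aux.pow_val_mul i hi2] at hcomp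
    have := Stmt7Aux.val_eq_of_pow_eq i hi1 hcomp
    rw [this, Pi.add_apply]
  · -- backward direction
    intro hR α
    choose cfun hcfun using fun j => hπ (α (π (ahat j)))
    have hπc : ∀ w, π (FreeGroup.lift cfun w) = α (π (FreeGroup.lift ahat w)) := by
      intro w
      have heq : π.comp (FreeGroup.lift cfun)
          = (MulEquiv.toMonoidHom (α : G ≃* G)).comp (π.comp (FreeGroup.lift ahat)) :=
        FreeGroup.ext_hom _ _ (fun j => by simp [hcfun j])
      have := congrArg (fun h : FreeGroup (Fin n) →* G => h w) heq
      simpa using this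
    have hsurjπc : Function.Surjective (π.comp (FreeGroup.lift cfun)) := by
      intro g
      obtain ⟨w, hw⟩ := surja (α.symm g)
      refine ⟨w, ?_⟩
      rw [MonoidHom.comp_apply, hπc]
      rw [MonoidHom.comp_apply] at hw
      rw [hw]
      simp
    have hcrelker : ∀ k, FreeGroup.lift cfun (r k) ∈ π.ker := by
      intro k
      rw [MonoidHom.mem_ker, hπc, harel k, map_pow, hπi, one_pow, map_one]
    -- build a surjective bhat with π∘lift bhat = α∘π∘lift ahat and known relator parities
    obtain ⟨bhat, hbsurj, hπb, M, hMrel⟩ :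
        ∃ bhat : Fin n → Ghat, Function.Surjective (FreeGroup.lift bhat) ∧
          (∀ w, π (FreeGroup.lift bhat w) = α (π (FreeGroup.lift ahat w))) ∧
          ∃ M : Fin m → ZMod 2, ∀ k, FreeGroup.lift bhat (r k) = i ^ (M k).val := by
      by_cases hc : Function.Surjective (FreeGroup.lift cfun)
      · refine ⟨cfun, hc, hπc, fun k => if FreeGroup.lift cfun (r k) = 1 then 0 else 1,
          fun k => ?_⟩
        rcases hmem2 _ (hcrelker k) with h | h
        · simp [h]
        · have hne : ¬ FreeGroup.lift cfun (r k) = 1 := by rw [h]; exact hi1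
          simp [hne, h, hi1, ZMod.val_one]
      · -- non-surjective case: the image is a complement, derive J ∈ Im ρ
        have hirange : ¬ ∃ w, FreeGroup.lift cfun w = i := by
          rintro ⟨w, hw⟩
          exact hc (Stmt7Aux.lift_surj π i hmem2 _ ⟨w, hw⟩ hsurjπc)
        have hc1 : ∀ k, FreeGroup.lift cfun (r k) = 1 := by
          intro k
          rcases hmem2 _ (hcrelker k) with h | h
          · exact h
          · exact absurd ⟨r k, h⟩ hirange
        set H := (FreeGroup.lift cfun).range with hH
        have hdec : ∀ g : Ghat, g ∈ H ∨ g * i ∈ H := by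
          intro g
          obtain ⟨w, hw⟩ := hsurjπc (π g)
          rw [MonoidHom.comp_apply] at hw
          have hm : g * (FreeGroup.lift cfun w)⁻¹ ∈ π.ker := by
            rw [MonoidHom.mem_ker, map_mul, map_inv, hw, mul_inv_cancel]
          rcases hmem2 _ hm with h | h
          · exact Or.inl ⟨w, (mul_inv_eq_one.mp h).symm⟩
          · right
            have hgw : g = i * FreeGroup.lift cfun w := by rw [← h]; group
            refine ⟨w, ?_⟩
            rw [hgw, (hcen (FreeGroup.lift cfun w)).eq, mul_assoc, ← pow_two, hi2, mul_one]
        have hiH : i ∉ H := fun hmem => hirange (by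
          obtain ⟨w, hw⟩ := hmem; exact ⟨w, hw⟩)
        let p : Ghat →* Multiplicative (ZMod 2) :=
          MonoidHom.mk' (fun g => Multiplicative.ofAdd (if g ∈ H then 0 else 1)) (by
            intro g g'
            rw [← ofAdd_add]
            by_cases h1 : g ∈ H <;> by_cases h2 : g' ∈ H
            · simp [h1, h2, mul_mem h1 h2]
            · have hmm : ¬ g * g' ∈ H := fun hmem => h2 (by
                have := mul_mem (inv_mem h1) hmem
                simpa [mul_assoc] using this)
              simp [h1, h2, hmm]
            · have hmm : ¬ g * g' ∈ H := fun hmem => h1 (by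
                have := mul_mem hmem (inv_mem h2)
                simpa [mul_assoc] using this)
              simp [h1, h2, hmm]
            · have hgi : g * i ∈ H := (hdec g).resolve_left h1
              have hgi' : g' * i ∈ H := (hdec g').resolve_left h2
              have he : g * i * (g' * i) = g * g' := by
                have h1 := (hcen g').eq
                calc g * i * (g' * i) = g * (i * g') * i := by group
                  _ = g * (g' * i) * i := by rw [h1]
                  _ = g * g' * (i * i) := by group
                  _ = g * g' := by rw [← pow_two, hi2, mul_one]
              have hmm : g * g' ∈ H := by
                have := mul_mem hgi hgi'
                rwa [he] at this
              simp only [h1, h2, hmm, if_neg, if_pos]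
              decide)
        have hpapply : ∀ g : Ghat, p g = Multiplicative.ofAdd (if g ∈ H then 0 else 1) :=
          fun g => rfl
        have hpi : p i = Multiplicative.ofAdd (1 : ZMod 2) := by
          rw [hpapply, if_neg hiH]
        set ε : Fin n → ZMod 2 := fun j => if ahat j ∈ H then 0 else 1 with hεdef
        have hpa : ∀ w, p (FreeGroup.lift ahat w)
            = FreeGroup.lift (fun j => Multiplicative.ofAdd (ε j)) w := by
          intro w
          have heq : p.comp (FreeGroup.lift ahat)
              = FreeGroup.lift (fun j => Multiplicative.ofAdd (ε j)) :=
            FreeGroup.ext_hom _ _ (fun j => by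
              simp only [MonoidHom.comp_apply, FreeGroup.lift_apply_of, hpapply, hεdef])
          have := congrArg (fun h : FreeGroup (Fin n) →* Multiplicative (ZMod 2) => h w) heq
          simpa using this
        have hJε : J = rho r ε := by
          funext k
          have h1 : p (FreeGroup.lift ahat (r k)) = Multiplicative.ofAdd (J k) := by
            rw [harel k, map_pow, hpi]
            rcases Stmt7Aux.zmod2_cases (J k) with h | h <;> rw [h]
            · simp
            · simp [ZMod.val_one]
          have h2 : p (FreeGroup.lift ahat (r k)) = Multiplicative.ofAdd ((rho r ε) k) := by
            rw [hpa, Stmt7Aux.lift_ofAdd_eq, Stmt7Aux.rho_apply]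
          exact Multiplicative.ofAdd.injective (h1.symm.trans h2)
        have hval : ∀ k, FreeGroup.lift (fun j => cfun j * i ^ (ε j).val) (r k)
            = i ^ (J k).val := by
          intro k
          rw [Stmt7Aux.lift_mul_central i hcen, hc1 k, one_mul,
            Stmt7Aux.lift_pow_rho i hi2, ← hJε]
        have hπbnew : ∀ w, π (FreeGroup.lift (fun j => cfun j * i ^ (ε j).val) w)
            = α (π (FreeGroup.lift ahat w)) := by
          intro w
          have heq : π.comp (FreeGroup.lift (fun j => cfun j * i ^ (ε j).val))
              = π.comp (FreeGroup.lift cfun) :=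
            FreeGroup.ext_hom _ _ (fun j => by
              simp [map_mul, map_pow, hπi])
          have h3 := congrArg (fun h : FreeGroup (Fin n) →* G => h w) heq
          simp only [MonoidHom.comp_apply] at h3
          rw [h3, hπc]
        refine ⟨fun j => cfun j * i ^ (ε j).val, ?_, hπbnew, J, hval⟩
        apply Stmt7Aux.lift_surj π i hmem2
        · exact ⟨r k0, by rw [hval k0, hk0, ZMod.val_one, pow_one]⟩
        · intro g
          obtain ⟨w, hw⟩ := surja (α.symm g)
          rw [MonoidHom.comp_apply] at hw
          exact ⟨w, by rw [MonoidHom.comp_apply, hπbnew, hw]; simp⟩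
    -- now use the hypothesis hR
    obtain ⟨I, hI⟩ := hR bhat hbsurj (fun k => by
      rw [MonoidHom.mem_ker, hMrel k, map_pow, hπi, one_pow]) M hMrel
    have hzmod : ∀ a c : ZMod 2, (c + a) + a = c := by decide
    have hrelb' : ∀ k, FreeGroup.lift (fun j => bhat j * i ^ (I j).val) (r k)
        = i ^ (J k).val := by
      intro k
      have hMk : M k + rho r I k = J k := by
        rw [hI, Pi.add_apply]
        exact hzmod _ _
      rw [Stmt7Aux.lift_mul_central i hcen, hMrel k, Stmt7Aux.lift_pow_rho i hi2,
        ← Stmt7Aux.pow_val_mul i hi2, hMk]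
    have hπb2 : ∀ w, π (FreeGroup.lift (fun j => bhat j * i ^ (I j).val) w)
        = α (π (FreeGroup.lift ahat w)) := by
      intro w
      have heq : π.comp (FreeGroup.lift (fun j => bhat j * i ^ (I j).val))
          = π.comp (FreeGroup.lift bhat) :=
        FreeGroup.ext_hom _ _ (fun j => by
          simp [map_mul, map_pow, hπi])
      have h3 := congrArg (fun h : FreeGroup (Fin n) →* G => h w) heq
      simp only [MonoidHom.comp_apply] at h3
      rw [h3, hπb]
    have hb'surj : Function.Surjective (FreeGroup.lift (fun j => bhat j * i ^ (I j).val)) := by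
      apply Stmt7Aux.lift_surj π i hmem2
      · exact ⟨r k0, by rw [hrelb' k0, hk0, ZMod.val_one, pow_one]⟩
      · intro g
        obtain ⟨w, hw⟩ := surja (α.symm g)
        rw [MonoidHom.comp_apply] at hw
        exact ⟨w, by rw [MonoidHom.comp_apply, hπb2, hw]; simp⟩
    have hkk : (FreeGroup.lift ahat).ker
        ≤ (FreeGroup.lift (fun j => bhat j * i ^ (I j).val)).ker := by
      intro w hw
      rw [MonoidHom.mem_ker] at hw
      have hwN : w ∈ N := by
        rw [← hker_a, MonoidHom.mem_ker, MonoidHom.comp_apply, hw, map_one]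
      have hside1 : ∀ a ∈ Set.range r,
          FreeGroup.lift (fun j => bhat j * i ^ (I j).val) a = FreeGroup.lift ahat a := by
        rintro a ⟨k, rfl⟩
        rw [hrelb' k, harel k]
      have hside2 : ∀ a ∈ Set.range r, ∀ g : Ghat,
          Commute (FreeGroup.lift (fun j => bhat j * i ^ (I j).val) a) g := by
        rintro a ⟨k, rfl⟩ g
        rw [hrelb' k]
        exact (hcen g).pow_left _
      rw [MonoidHom.mem_ker,
        Stmt7Aux.eq_on_normalClosure _ _ (Set.range r) hside1 hside2 hwN, hw]
    obtain ⟨e, he⟩ := Stmt7Aux.exists_mulEquiv (FreeGroup.lift ahat)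
      (FreeGroup.lift (fun j => bhat j * i ^ (I j).val)) hasurj hb'surj hkk
    refine ⟨e, MulEquiv.ext fun g => ?_⟩
    obtain ⟨w, hw⟩ := surja g
    rw [MonoidHom.comp_apply] at hw
    calc (ζ e) g = ζ e (π (FreeGroup.lift ahat w)) := by rw [hw]
      _ = π (e (FreeGroup.lift ahat w)) := hζ e _
      _ = π (FreeGroup.lift (fun j => bhat j * i ^ (I j).val) w) := by rw [he w]
      _ = α (π (FreeGroup.lift ahat w)) := hπb2 w
      _ = α g := by rw [hw]
end

section
/- Let Ĝ and G be finite groups and π : Ĝ → G surjective with kernel of cardinality 2 which is a characteristic subgroup of Ĝ; let i be the nontrivial element of ker π and ζ : MulAut Ĝ → MulAut G the unique homomorphism with ζ(ψ) ∘ π = π ∘ ψ for all ψ, and assume ζ is surjective (π is a strong double covering). Let r : Fin m → FreeGroup (Fin n) be a presentation P of G which is of simple type of degree d, and suppose there exist J : Fin m → ZMod 2 with J ≠ 0 and â : Fin n → Ĝ such that lift â is surjective and lift â (r_k) = i^((J k).val) for all k. Then Nat.card (ker ζ) = 2^(n−d). -/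
lemma lift_ofAdd_eq {n : ℕ} (x : Fin n → ZMod 2) (w : FreeGroup (Fin n)) :
    FreeGroup.lift (fun j => Multiplicative.ofAdd (x j)) w
      = Multiplicative.ofAdd (∑ i', ((Multiplicative.toAdd (expSum i' w) : ℤ) : ZMod 2) * x i') := by
  have : FreeGroup.lift (fun j => Multiplicative.ofAdd (x j)) =
      MonoidHom.mk' (fun w => Multiplicative.ofAdd
        (∑ i', ((Multiplicative.toAdd (expSum i' w) : ℤ) : ZMod 2) * x i'))
        (by
          intro a b
          rw [← ofAdd_add]
          congr 1
          rw [← Finset.sum_add_distrib]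
          exact Finset.sum_congr rfl fun i' _ => by
            rw [map_mul, toAdd_mul, Int.cast_add, add_mul]) := by
    symm
    apply FreeGroup.ext_hom
    intro a
    simp only [MonoidHom.mk'_apply, expSum, FreeGroup.lift_apply_of, toAdd_ofAdd]
    congr 1
    simp [apply_ite (fun z : ℤ => (z : ZMod 2)), ite_mul, Finset.sum_ite_eq]
  rw [this]
  rfl

lemma count_lemma {n m : ℕ} (r : Fin m → FreeGroup (Fin n)) (d : ℕ)
    (hsimple1 : ∀ k : Fin m,
      Nat.card {i' : Fin n // Odd (Multiplicative.toAdd (expSum i' (r k)))} ≤ 1)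
    (hsimple2 : ∀ i' : Fin n,
      Nat.card {k : Fin m // Odd (Multiplicative.toAdd (expSum i' (r k)))} ≤ 1)
    (hd : d = Nat.card {k : Fin m // ∃ i', Odd (Multiplicative.toAdd (expSum i' (r k)))}) :
    Nat.card {x : Fin n → ZMod 2 //
      ∀ k, ∑ i', ((Multiplicative.toAdd (expSum i' (r k)) : ℤ) : ZMod 2) * x i' = 0}
      = 2 ^ (n - d) := by
  classical
  set E : Fin m → Fin n → ZMod 2 :=
    fun k i' => ((Multiplicative.toAdd (expSum i' (r k)) : ℤ) : ZMod 2) with hE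
  have hE0 : ∀ k i', E k i' = 0 ↔ ¬ Odd (Multiplicative.toAdd (expSum i' (r k))) := by
    intro k i'
    rw [hE]
    rw [ZMod.intCast_zmod_eq_zero_iff_dvd, Int.dvd_iff_emod_eq_zero, Int.odd_iff]
    push_cast
    omega
  have hzm : ∀ x : ZMod 2, x ≠ 0 → x = 1 := by decide
  have hE1 : ∀ k i', Odd (Multiplicative.toAdd (expSum i' (r k))) → E k i' = 1 :=
    fun k i' h => hzm _ (fun h0 => (hE0 k i').1 h0 h)
  set D : Set (Fin n) := {i' | ∃ k, Odd (Multiplicative.toAdd (expSum i' (r k)))} with hD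
  have huniq1 : ∀ k (a b : Fin n), Odd (Multiplicative.toAdd (expSum a (r k))) →
      Odd (Multiplicative.toAdd (expSum b (r k))) → a = b := by
    intro k a b ha hb
    have hs : Subsingleton {i' // Odd (Multiplicative.toAdd (expSum i' (r k)))} :=
      Finite.card_le_one_iff_subsingleton.mp (hsimple1 k)
    exact Subtype.ext_iff.mp (hs.elim ⟨a, ha⟩ ⟨b, hb⟩)
  have huniq2 : ∀ i' (a b : Fin m), Odd (Multiplicative.toAdd (expSum i' (r a))) →
      Odd (Multiplicative.toAdd (expSum i' (r b))) → a = b := by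
    intro i' a b ha hb
    have hs : Subsingleton {k // Odd (Multiplicative.toAdd (expSum i' (r k)))} :=
      Finite.card_le_one_iff_subsingleton.mp (hsimple2 i')
    exact Subtype.ext_iff.mp (hs.elim ⟨a, ha⟩ ⟨b, hb⟩)
  -- the condition is equivalent to vanishing on D
  have hcond : ∀ x : Fin n → ZMod 2,
      (∀ k, ∑ i', E k i' * x i' = 0) ↔ ∀ i' ∈ D, x i' = 0 := by
    intro x
    constructor
    · intro h i' hi'
      obtain ⟨k, hk⟩ := hi'
      have hsum : ∑ j, E k j * x j = x i' := by
        rw [Finset.sum_eq_single i']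
        · rw [hE1 k i' hk, one_mul]
        · intro j _ hji
          have : E k j = 0 := by
            rw [hE0]
            exact fun hj => hji (huniq1 k j i' hj hk)
          rw [this, zero_mul]
        · intro h'; exact absurd (Finset.mem_univ i') h'
      rw [← hsum]; exact h k
    · intro h k
      refine Finset.sum_eq_zero fun j _ => ?_
      by_cases hj : Odd (Multiplicative.toAdd (expSum j (r k)))
      · rw [h j ⟨k, hj⟩, mul_zero]
      · rw [(hE0 k j).2 hj, zero_mul]
  -- card of D equals d
  have hcardD : Nat.card D = d := by
    rw [hd]
    refine Nat.card_eq_of_bijective (fun i'' : D => (⟨i''.2.choose,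
      ⟨i''.1, i''.2.choose_spec⟩⟩ :
        {k : Fin m // ∃ i', Odd (Multiplicative.toAdd (expSum i' (r k)))})) ⟨?_, ?_⟩
    · rintro ⟨a, ha⟩ ⟨b, hb⟩ hab
      have hk : ha.choose = hb.choose := Subtype.ext_iff.mp hab
      exact Subtype.ext (huniq1 ha.choose a b ha.choose_spec (by rw [hk]; exact hb.choose_spec))
    · rintro ⟨k, i', hi'⟩
      refine ⟨⟨i', ⟨k, hi'⟩⟩, Subtype.ext ?_⟩
      exact huniq2 i' _ k (Exists.choose_spec (⟨k, hi'⟩ : ∃ k', Odd (Multiplicative.toAdd (expSum i' (r k'))))) hi'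
  have e2 : {x : Fin n → ZMod 2 // ∀ k, ∑ i', E k i' * x i' = 0} ≃
      ({i' : Fin n // i' ∉ D} → ZMod 2) := by
    refine (Equiv.subtypeEquivRight hcond).trans ?_
    exact {
      toFun := fun x j => x.1 j.1
      invFun := fun y => ⟨fun i' => if h : i' ∈ D then 0 else y ⟨i', h⟩,
        fun i' hi' => by simp [hi']⟩
      left_inv := by
        rintro ⟨x, hx⟩
        refine Subtype.ext (funext fun i' => ?_)
        by_cases h : i' ∈ D
        · simp [h, hx i' h]
        · simp [h]
      right_inv := by
        intro y; funext j; simp [j.2] }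
  rw [Nat.card_congr e2, Nat.card_eq_fintype_card, Fintype.card_fun]
  have h2 : Fintype.card (ZMod 2) = 2 := by simp
  have hc : Fintype.card {i' : Fin n // i' ∉ D} = n - d := by
    rw [Fintype.card_subtype_compl, Fintype.card_fin, ← hcardD, Nat.card_eq_fintype_card]
  rw [h2, hc]

lemma card_hom {G : Type*} [Group G] {n m : ℕ} (r : Fin m → FreeGroup (Fin n))
    (f : FreeGroup (Fin n) →* G) (hf : Function.Surjective f)
    (hker : f.ker = Subgroup.normalClosure (Set.range r)) :
    Nat.card (G →* Multiplicative (ZMod 2)) =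
      Nat.card {x : Fin n → ZMod 2 //
        ∀ k, ∑ i', ((Multiplicative.toAdd (expSum i' (r k)) : ℤ) : ZMod 2) * x i' = 0} := by
  classical
  have e1 : {g : FreeGroup (Fin n) →* Multiplicative (ZMod 2) // f.ker ≤ g.ker} ≃
      (G →* Multiplicative (ZMod 2)) :=
    f.liftOfRightInverse (Function.surjInv hf) (Function.rightInverse_surjInv hf)
  have e2 : {g : FreeGroup (Fin n) →* Multiplicative (ZMod 2) // f.ker ≤ g.ker} ≃
      {g : FreeGroup (Fin n) →* Multiplicative (ZMod 2) // ∀ k, g (r k) = 1} := by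
    refine Equiv.subtypeEquivRight fun g => ⟨fun h k => ?_, fun h => ?_⟩
    · exact h (hker ▸ Subgroup.subset_normalClosure ⟨k, rfl⟩)
    · rw [hker]
      refine Subgroup.normalClosure_le_normal ?_
      rintro _ ⟨k, rfl⟩
      exact h k
  have e3 : {x : Fin n → ZMod 2 //
        ∀ k, ∑ i', ((Multiplicative.toAdd (expSum i' (r k)) : ℤ) : ZMod 2) * x i' = 0} ≃
      {g : FreeGroup (Fin n) →* Multiplicative (ZMod 2) // ∀ k, g (r k) = 1} := by
    refine Equiv.subtypeEquiv
      ((Equiv.piCongrRight fun _ => Multiplicative.ofAdd).trans FreeGroup.lift) fun x => ?_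
    simp only [Equiv.trans_apply, Equiv.piCongrRight_apply]
    have hpi : ((Equiv.piCongrRight fun _ : Fin n =>
        (Multiplicative.ofAdd : ZMod 2 ≃ Multiplicative (ZMod 2))) x)
        = fun j => Multiplicative.ofAdd (x j) := by
      funext j; simp
    rw [hpi]
    have hb : ∀ w, FreeGroup.lift (fun j => (Multiplicative.ofAdd : ZMod 2 ≃ _) (x j)) w
        = Multiplicative.ofAdd
        (∑ i', ((Multiplicative.toAdd (expSum i' w) : ℤ) : ZMod 2) * x i') := fun w =>
      lift_ofAdd_eq x w
    constructor
    · intro h k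
      rw [hb, h k]
      rfl
    · intro h k
      have := h k
      rw [hb] at this
      exact ofAdd_eq_one.mp this
  exact (Nat.card_congr ((e3.trans e2.symm).trans e1)).symm

lemma card_ker_zeta {Ghat G : Type*} [Group Ghat] [Group G] [Finite Ghat] [Finite G]
    (π : Ghat →* G) (hπ : Function.Surjective π) (hker2 : Nat.card π.ker = 2)
    (i : Ghat) (hi : i ∈ π.ker) (hi1 : i ≠ 1)
    (ζ : MulAut Ghat →* MulAut G)
    (hζ : ∀ (ψ : MulAut Ghat) (g : Ghat), ζ ψ (π g) = π (ψ g)) :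
    Nat.card ζ.ker = Nat.card (G →* Multiplicative (ZMod 2)) := by
  classical
  have hπi : π i = 1 := hi
  -- the kernel is exactly {1, i}
  have hker_eq : ∀ x ∈ π.ker, x = 1 ∨ x = i := by
    have hset : ({1, i} : Set Ghat) = (π.ker : Set Ghat) := by
      apply Set.eq_of_subset_of_ncard_le
      · rintro x (rfl | rfl)
        · exact π.ker.one_mem
        · exact hi
      · rw [← Nat.card_coe_set_eq, Set.ncard_pair (Ne.symm hi1)]
        exact le_of_eq hker2
      · exact Set.toFinite _
    intro x hx
    have : x ∈ ({1, i} : Set Ghat) := hset ▸ hx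
    simpa using this
  have hii : i * i = 1 := by
    rcases hker_eq (i * i) (π.ker.mul_mem hi hi) with h | h
    · exact h
    · exact absurd (mul_left_cancel (a := i) (by rw [h, mul_one])) hi1
  have hcent : ∀ g : Ghat, g * i = i * g := by
    intro g
    rcases hker_eq (g * i * g⁻¹) (by
      have : π (g * i * g⁻¹) = 1 := by simp [map_mul, hπi]
      exact this) with h | h
    · exact absurd (by
        have := congrArg (· * g) h
        simpa [mul_assoc] using this) (by simpa [eq_comm] using hi1)
    · have := congrArg (· * g) h
      simpa [mul_assoc] using this
  have hcentk : ∀ x ∈ π.ker, ∀ y : Ghat, y * x = x * y := by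
    intro x hx y
    rcases hker_eq x hx with rfl | rfl
    · simp
    · exact hcent y
  have hpow : ∀ k : ℕ, i ^ k = i ^ (k % 2) := by
    intro k
    conv_lhs => rw [← Nat.mod_add_div k 2]
    rw [pow_add, pow_mul, show i ^ 2 = 1 by rw [pow_two, hii], one_pow, mul_one]
  have hval : ∀ x : ZMod 2, x = 0 ∨ x = 1 := by decide
  have hvalinj : ∀ x y : ZMod 2, i ^ x.val = i ^ y.val → x = y := by
    intro x y h
    have e0 : (0 : ZMod 2).val = 0 := rfl
    have e1 : (1 : ZMod 2).val = 1 := rfl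
    rcases hval x with rfl | rfl <;> rcases hval y with rfl | rfl
    · rfl
    · rw [e0, e1, pow_zero, pow_one] at h
      exact absurd h.symm hi1
    · rw [e0, e1, pow_zero, pow_one] at h
      exact absurd h hi1
    · rfl
  -- the involution attached to a character
  have hcommp : ∀ (g : Ghat) (k : ℕ), g * i ^ k = i ^ k * g :=
    fun g k => ((Commute.pow_right (hcent g) k))
  set F : (G →* Multiplicative (ZMod 2)) → Ghat → Ghat :=
    fun ε g => g * i ^ (Multiplicative.toAdd (ε (π g))).val with hF
  have hπF : ∀ ε g, π (F ε g) = π g := by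
    intro ε g
    simp [hF, map_mul, map_pow, hπi]
  have hinv : ∀ ε g, F ε (F ε g) = g := by
    intro ε g
    have h1 : π (F ε g) = π g := hπF ε g
    rw [hF]
    simp only
    rw [h1]
    set a := (Multiplicative.toAdd (ε (π g))).val
    show g * i ^ a * i ^ a = g
    rw [mul_assoc, ← pow_add, hpow (a + a), show (a + a) % 2 = 0 by omega, pow_zero, mul_one]
  have hmul : ∀ ε (g h : Ghat), F ε (g * h) = F ε g * F ε h := by
    intro ε g h
    rw [hF]
    simp only
    set a := (Multiplicative.toAdd (ε (π g))).val with ha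
    set b := (Multiplicative.toAdd (ε (π h))).val with hb
    have h1 : i ^ (Multiplicative.toAdd (ε (π (g * h)))).val = i ^ a * i ^ b := by
      rw [map_mul, map_mul, toAdd_mul, ZMod.val_add, ← hpow, pow_add]
    rw [h1]
    have hc : h * i ^ a = i ^ a * h := hcommp h a
    calc g * h * (i ^ a * i ^ b) = g * (h * i ^ a) * i ^ b := by
          rw [mul_assoc g h _, ← mul_assoc h _ _, ← mul_assoc g _ _]
      _ = g * (i ^ a * h) * i ^ b := by rw [hc]
      _ = g * i ^ a * (h * i ^ b) := by rw [← mul_assoc g (i ^ a) h, mul_assoc]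
  let Φ : (G →* Multiplicative (ZMod 2)) → MulAut Ghat := fun ε =>
    { toFun := F ε, invFun := F ε, left_inv := hinv ε, right_inv := hinv ε,
      map_mul' := hmul ε }
  have hΦapp : ∀ ε g, Φ ε g = F ε g := fun _ _ => rfl
  have hΦker : ∀ ε, Φ ε ∈ ζ.ker := by
    intro ε
    rw [MonoidHom.mem_ker]
    apply MulEquiv.ext
    intro x
    obtain ⟨g, rfl⟩ := hπ x
    rw [hζ (Φ ε) g, hΦapp, hπF]
    simp
  refine (Nat.card_eq_of_bijective (fun ε => (⟨Φ ε, hΦker ε⟩ : ζ.ker)) ⟨?_, ?_⟩).symm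
  · intro ε ε' h
    have h2 : Φ ε = Φ ε' := Subtype.ext_iff.mp h
    refine MonoidHom.ext fun x => ?_
    obtain ⟨g, rfl⟩ := hπ x
    have h3 : F ε g = F ε' g := by
      rw [← hΦapp, ← hΦapp, h2]
    rw [hF] at h3
    simp only at h3
    have h4 := mul_left_cancel h3
    have h5 := hvalinj _ _ h4
    exact Multiplicative.toAdd.injective h5
  · rintro ⟨ψ, hψ⟩
    have hψ1 : ζ ψ = 1 := MonoidHom.mem_ker.mp hψ
    have hfix : ∀ g, π (ψ g) = π g := by
      intro g
      rw [← hζ ψ g, hψ1]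
      simp
    set c : Ghat → Ghat := fun g => ψ g * g⁻¹ with hcdef
    have hck : ∀ g, c g ∈ π.ker := by
      intro g
      have : π (c g) = 1 := by simp [hcdef, map_mul, hfix g]
      exact this
    have hψi : ψ i = i := by
      rcases hker_eq (ψ i) (show ψ i ∈ π.ker from by
        have : π (ψ i) = 1 := by rw [hfix]; exact hπi
        exact this) with h | h
      · exact absurd (ψ.injective (by rw [h, map_one])) hi1
      · exact h
    have hfiber : ∀ g h, π g = π h → c g = c h := by
      intro g h hgh
      have hk : g * h⁻¹ ∈ π.ker := by
        have : π (g * h⁻¹) = 1 := by simp [map_mul, hgh]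
        exact this
      rcases hker_eq _ hk with h1 | h1
      · have hgh2 : g = h := by
          have := congrArg (· * h) h1
          simpa [mul_assoc] using this
        rw [hgh2]
      · have hg : g = i * h := by
          have := congrArg (· * h) h1
          simpa [mul_assoc] using this
        rw [hg, hcdef]
        simp only
        calc ψ (i * h) * (i * h)⁻¹ = i * (ψ h * h⁻¹) * i⁻¹ := by
              rw [map_mul, hψi, mul_inv_rev]
              group
          _ = (ψ h * h⁻¹) * i * i⁻¹ := by rw [← hcent (ψ h * h⁻¹), mul_assoc, mul_assoc]
          _ = ψ h * h⁻¹ := by rw [mul_assoc, mul_inv_cancel , mul_one]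
    have hchom : ∀ g h, c (g * h) = c g * c h := by
      intro g h
      show ψ (g * h) * (g * h)⁻¹ = (ψ g * g⁻¹) * (ψ h * h⁻¹)
      rw [map_mul, mul_inv_rev]
      have hcomm : g⁻¹ * (ψ h * h⁻¹) = (ψ h * h⁻¹) * g⁻¹ :=
        hcentk _ (hck h) g⁻¹
      calc ψ g * ψ h * (h⁻¹ * g⁻¹) = ψ g * ((ψ h * h⁻¹) * g⁻¹) := by group
        _ = ψ g * (g⁻¹ * (ψ h * h⁻¹)) := by rw [← hcomm]
        _ = ψ g * g⁻¹ * (ψ h * h⁻¹) := by group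
    set e : Ghat → ZMod 2 := fun x => if x = 1 then 0 else 1 with hedef
    have he1 : e 1 = 0 := by simp [hedef]
    have hei : e i = 1 := by simp [hedef, hi1]
    have headd : ∀ x y, x ∈ π.ker → y ∈ π.ker → e (x * y) = e x + e y := by
      intro x y hx hy
      rcases hker_eq x hx with rfl | rfl <;> rcases hker_eq y hy with rfl | rfl
      · simp [he1]
      · simp [he1, hei]
      · simp [he1, hei]
      · rw [hii, he1, hei]
        decide
    have hfib2 : ∀ g h, π g = π h → e (c g) = e (c h) := fun g h hh => by
      rw [hfiber g h hh]
    set s : G → Ghat := Function.surjInv hπ with hsdef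
    have hs : ∀ x, π (s x) = x := fun x => Function.surjInv_eq hπ x
    refine ⟨MonoidHom.mk' (fun x => Multiplicative.ofAdd (e (c (s x)))) (by
      intro x y
      rw [← ofAdd_add]
      congr 1
      have h1 : π (s (x * y)) = π (s x * s y) := by rw [hs, map_mul, hs, hs]
      rw [hfib2 _ _ h1, hchom, headd _ _ (hck _) (hck _)]), ?_⟩
    apply Subtype.ext
    apply MulEquiv.ext
    intro g
    rw [hΦapp, hF]
    simp only [MonoidHom.mk'_apply]
    show g * i ^ (Multiplicative.toAdd (Multiplicative.ofAdd (e (c (s (π g)))))).val = ψ g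
    rw [toAdd_ofAdd, hfib2 _ _ (hs (π g))]
    rcases hker_eq (c g) (hck g) with h1 | h1
    · have hgg : ψ g = g := by
        have h1' : ψ g * g⁻¹ = 1 := h1
        exact mul_inv_eq_one.mp h1'
      rw [h1, he1, show (0 : ZMod 2).val = 0 from rfl, pow_zero, mul_one]
      exact hgg.symm
    · have hgg : ψ g = i * g := by
        have h1' : ψ g * g⁻¹ = i := h1
        have := congrArg (· * g) h1'
        simpa [mul_assoc] using this
      rw [h1, hei, show (1 : ZMod 2).val = 1 from rfl, pow_one, hcent, hgg]

/-- Corollary `q-simpletype`: a `q`-strong double covering of `G`, where `G`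
has a presentation of simple type of degree `d` and rank `n`, and the covering group has a
presentation `P_J` with `J ≠ 1`, satisfies `q = |Ker ζ| = 2^(n-d)`. -/
theorem stmt_8 {Ghat G : Type*} [Group Ghat] [Group G] [Finite Ghat] [Finite G]
    (π : Ghat →* G) (hπ : Function.Surjective π) (hker2 : Nat.card π.ker = 2)
    (hchar : π.ker.Characteristic)
    (i : Ghat) (hi : i ∈ π.ker) (hi1 : i ≠ 1)
    (ζ : MulAut Ghat →* MulAut G)
    (hζ : ∀ (ψ : MulAut Ghat) (g : Ghat), ζ ψ (π g) = π (ψ g))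
    (hstrong : Function.Surjective ζ)
    {n m : ℕ} (r : Fin m → FreeGroup (Fin n))
    (hP : ∃ f : FreeGroup (Fin n) →* G, Function.Surjective f ∧
      f.ker = Subgroup.normalClosure (Set.range r))
    (d : ℕ)
    (hsimple1 : ∀ k : Fin m,
      Nat.card {i' : Fin n // Odd (Multiplicative.toAdd (expSum i' (r k)))} ≤ 1)
    (hsimple2 : ∀ i' : Fin n,
      Nat.card {k : Fin m // Odd (Multiplicative.toAdd (expSum i' (r k)))} ≤ 1)
    (hd : d = Nat.card {k : Fin m // ∃ i', Odd (Multiplicative.toAdd (expSum i' (r k)))})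
    (J : Fin m → ZMod 2) (hJ : J ≠ 0)
    (ahat : Fin n → Ghat)
    (hasurj : Function.Surjective (FreeGroup.lift ahat))
    (harel : ∀ k, FreeGroup.lift ahat (r k) = i ^ (J k).val) :
    Nat.card ζ.ker = 2 ^ (n - d) := by
  obtain ⟨f, hf, hker⟩ := hP
  rw [card_ker_zeta π hπ hker2 i hi hi1 ζ hζ, card_hom r f hf hker,
    count_lemma r d hsimple1 hsimple2 hd]
end

section
/- Let G be a group, C₂ = Multiplicative (ZMod 2), and π : G × C₂ → G the first projection. Then the kernel of π (the subgroup {1} × C₂) is a characteristic subgroup of G × C₂ if and only if G has no central involution. -/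
private lemma pow_val_add {G : Type*} [Group G] {g : G} (hg : g ^ 2 = 1)
    (a b : ZMod 2) : g ^ (a + b).val = g ^ a.val * g ^ b.val := by
  rw [ZMod.val_add, ← pow_eq_pow_mod _ hg, pow_add]

/-- The twist automorphism of `G × C₂` given a central involution `g`. -/
private def twist {G : Type*} [Group G] (g : G) (hc : g ∈ Subgroup.center G)
    (hg : g ^ 2 = 1) : (G × Multiplicative (ZMod 2)) ≃* (G × Multiplicative (ZMod 2)) where
  toFun p := (p.1 * g ^ (Multiplicative.toAdd p.2).val, p.2)
  invFun p := (p.1 * g ^ (Multiplicative.toAdd p.2).val, p.2)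
  left_inv p := by
    ext
    · show p.1 * g ^ _ * g ^ _ = p.1
      rw [mul_assoc, ← pow_add, ← two_mul, pow_mul, hg, one_pow, mul_one]
    · rfl
  right_inv p := by
    ext
    · show p.1 * g ^ _ * g ^ _ = p.1
      rw [mul_assoc, ← pow_add, ← two_mul, pow_mul, hg, one_pow, mul_one]
    · rfl
  map_mul' p q := by
    have hcom : q.1 * g ^ (Multiplicative.toAdd p.2).val
        = g ^ (Multiplicative.toAdd p.2).val * q.1 :=
      (Commute.pow_right ((Subgroup.mem_center_iff.mp hc q.1)) _)
    ext
    · show p.1 * q.1 * g ^ ((Multiplicative.toAdd p.2) + (Multiplicative.toAdd q.2)).val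
        = p.1 * g ^ _ * (q.1 * g ^ _)
      rw [pow_val_add hg, mul_assoc p.1, mul_assoc p.1]
      congr 1
      rw [← mul_assoc, hcom, mul_assoc]
    · rfl

/-- Theorem `KerCharGxC2`: the kernel of the first projection
`π : G × C₂ → G` is characteristic in `G × C₂` iff `G` has no central involution. -/
theorem stmt_9 {G : Type*} [Group G] :
    (MonoidHom.fst G (Multiplicative (ZMod 2))).ker.Characteristic ↔
      ¬ ∃ g : G, g ∈ Subgroup.center G ∧ g ≠ 1 ∧ g ^ 2 = 1 := by
  constructor
  · rintro h ⟨g, hc, hne, hg⟩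
    have hfix := h.fixed (twist g hc hg)
    have hmem : ((1 : G), Multiplicative.ofAdd (1 : ZMod 2)) ∈
        (MonoidHom.fst G (Multiplicative (ZMod 2))).ker := rfl
    rw [← hfix, Subgroup.mem_comap] at hmem
    have hmem' : (1 : G) * g ^ (1 : ZMod 2).val = 1 := hmem
    have hval : (1 : ZMod 2).val = 1 := rfl
    rw [hval, one_mul, pow_one] at hmem'
    exact hne hmem'
  · intro h
    rw [Subgroup.characteristic_iff_map_le]
    intro φ x hx
    rw [Subgroup.mem_map] at hx
    obtain ⟨y, hy, rfl⟩ := hx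
    have hy1 : y.1 = 1 := hy
    have hyc : y ∈ Subgroup.center (G × Multiplicative (ZMod 2)) := by
      rw [Subgroup.mem_center_iff]
      intro z
      ext
      · simp [hy1]
      · exact mul_comm z.2 y.2
    have ht2 : ∀ t : Multiplicative (ZMod 2), t ^ 2 = 1 := by decide
    have hy2 : y ^ 2 = 1 := by
      ext
      · show y.1 ^ 2 = 1
        simp [hy1]
      · show y.2 ^ 2 = 1
        exact ht2 _
    have hφc : φ y ∈ Subgroup.center (G × Multiplicative (ZMod 2)) := by
      have := (Subgroup.centerCharacteristic (G := G × Multiplicative (ZMod 2))).fixed φ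
      rw [← this, Subgroup.mem_comap] at hyc
      exact hyc
    have h1 : (φ y).1 ∈ Subgroup.center G := by
      rw [Subgroup.mem_center_iff]
      intro z
      have := (Subgroup.mem_center_iff.mp hφc) (z, 1)
      exact congrArg Prod.fst this
    have h2 : (φ y).1 ^ 2 = 1 := by
      have : (φ y) ^ 2 = 1 := by rw [← map_pow, hy2, map_one]
      exact congrArg Prod.fst this
    rw [MonoidHom.mem_ker]
    by_contra hne
    exact h ⟨(φ y).1, h1, hne, h2⟩
end

section
/- Let G be a group, C₂ = Multiplicative (ZMod 2), and π : G × C₂ → G the first projection. Then π is a strong double covering of G — i.e., the kernel of π is a characteristic subgroup of G × C₂ and for every automorphism φ of G there exists an automorphism ψ of G × C₂ with π ∘ ψ = φ ∘ π — if and only if G has no central involution. -/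
/-- Corollary `StrongGxC2`: the first projection `π : G × C₂ → G` is a strong
double covering of `G` (its kernel is characteristic and every automorphism of `G` lifts
through `π` to an automorphism of `G × C₂`) iff `G` has no central involution. -/
theorem stmt_10 {G : Type*} [Group G] :
    ((MonoidHom.fst G (Multiplicative (ZMod 2))).ker.Characteristic ∧
      ∀ φ : MulAut G, ∃ ψ : MulAut (G × Multiplicative (ZMod 2)),
        ∀ x : G × Multiplicative (ZMod 2),
          MonoidHom.fst G (Multiplicative (ZMod 2)) (ψ x) =
            φ (MonoidHom.fst G (Multiplicative (ZMod 2)) x)) ↔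
      ¬ ∃ g : G, g ∈ Subgroup.center G ∧ g ≠ 1 ∧ g ^ 2 = 1 := by
  constructor
  · rintro ⟨hchar, -⟩ ⟨g, hg, hg1, hg2⟩
    set f : Multiplicative (ZMod 2) → G := fun t => if t = 1 then 1 else g with hf
    have hmul2 : ∀ a b : Multiplicative (ZMod 2), a ≠ 1 → b ≠ 1 → a * b = 1 := by decide
    have hff : ∀ t, f t * f t = 1 := by
      intro t
      by_cases h : t = 1 <;> simp [hf, h, ← pow_two, hg2]
    have hcent : ∀ t (y : G), y * f t = f t * y := by
      intro t y
      by_cases h : t = 1 <;> simp [hf, h, (Subgroup.mem_center_iff.mp hg y)]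
    have hfm : ∀ a b, f (a * b) = f a * f b := by
      intro a b
      by_cases ha : a = 1
      · simp [hf, ha]
      · by_cases hb : b = 1
        · simp [hf, hb]
        · simp [hf, hmul2 a b ha hb, ha, hb, ← pow_two, hg2]
    set e : (G × Multiplicative (ZMod 2)) ≃* (G × Multiplicative (ZMod 2)) :=
      { toFun := fun p => (p.1 * f p.2, p.2)
        invFun := fun p => (p.1 * f p.2, p.2)
        left_inv := fun p => by simp [mul_assoc, hff]
        right_inv := fun p => by simp [mul_assoc, hff]
        map_mul' := fun p q => by
          ext
          · simp only [Prod.fst_mul, Prod.snd_mul, hfm, mul_assoc]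
            rw [← mul_assoc q.1, hcent p.2 q.1, mul_assoc]
          · rfl } with he
    have hfix := hchar.fixed e
    set u : Multiplicative (ZMod 2) := Multiplicative.ofAdd 1 with hu
    have hu1 : u ≠ 1 := by decide
    have hmem : ((1 : G), u) ∈ (MonoidHom.fst G (Multiplicative (ZMod 2))).ker :=
      MonoidHom.mem_ker.mpr rfl
    rw [← hfix, Subgroup.mem_comap] at hmem
    rw [MonoidHom.mem_ker] at hmem
    simp [he, hf, hu1] at hmem
    exact hg1 hmem
  · intro hno
    have key : ∀ ϕ : MulAut (G × Multiplicative (ZMod 2)),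
        ∀ x : G × Multiplicative (ZMod 2), x.1 = 1 → (ϕ x).1 = 1 := by
      intro ϕ x hx
      have hxc : x ∈ Subgroup.center (G × Multiplicative (ZMod 2)) := by
        rw [Subgroup.mem_center_iff]
        intro h
        ext
        · simp [hx]
        · exact mul_comm h.2 x.2
      have hsq2 : ∀ t : Multiplicative (ZMod 2), t ^ 2 = 1 := by decide
      have hx2 : x ^ 2 = 1 := by
        ext
        · simp [hx]
        · simp [hsq2]
      have hc : ϕ x ∈ Subgroup.center (G × Multiplicative (ZMod 2)) := by
        have := (inferInstance : (Subgroup.center (G × Multiplicative (ZMod 2))).Characteristic).fixed ϕ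
        rw [← this, Subgroup.mem_comap] at hxc
        simpa using hxc
      have hc1 : (ϕ x).1 ∈ Subgroup.center G := by
        rw [Subgroup.mem_center_iff]
        intro y
        have := Subgroup.mem_center_iff.mp hc (y, 1)
        exact congrArg Prod.fst this
      have hsq : (ϕ x).1 ^ 2 = 1 := by
        have : (ϕ x) ^ 2 = 1 := by rw [← map_pow, hx2, map_one]
        have := congrArg Prod.fst this
        simpa using this
      by_contra hne
      exact hno ⟨(ϕ x).1, hc1, hne, hsq⟩
    constructor
    · constructor
      intro ϕ
      ext x
      rw [Subgroup.mem_comap, MonoidHom.mem_ker, MonoidHom.mem_ker]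
      constructor
      · intro h
        have := key ϕ⁻¹ (ϕ x) h
        simpa using this
      · intro h
        exact key ϕ x h
    · intro φ
      exact ⟨MulEquiv.prodCongr φ (MulEquiv.refl _), fun x => rfl⟩
end

section
/- Let G be a simple group with Nat.card G ≠ 2 (i.e., G not isomorphic to C₂), and let C₂ = Multiplicative (ZMod 2). Then Nat.card (MulAut (G × C₂)) = Nat.card (MulAut G). -/
private lemma aux_hom_trivial {G : Type*} [Group G] [IsSimpleGroup G] (hG : Nat.card G ≠ 2)
    (f : G →* Multiplicative (ZMod 2)) (g : G) : f g = 1 := by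
  rcases IsSimpleGroup.eq_bot_or_eq_top_of_normal f.ker inferInstance with h | h
  · exfalso
    have hinj : Function.Injective f := (MonoidHom.ker_eq_bot_iff f).mp h
    have : Finite G := Finite.of_injective f hinj
    have h2 : Nat.card G ≤ Nat.card (Multiplicative (ZMod 2)) :=
      Nat.card_le_card_of_injective f hinj
    have hc : Nat.card (Multiplicative (ZMod 2)) = 2 := by
      rw [Nat.card_eq_fintype_card]; rfl
    have h3 : 1 < Nat.card G := Finite.one_lt_card_iff_nontrivial.mpr inferInstance
    omega
  · exact MonoidHom.mem_ker.mp (h ▸ Subgroup.mem_top g)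

private lemma aux_fix {G : Type*} [Group G] [IsSimpleGroup G] (hG : Nat.card G ≠ 2)
    (φ : MulAut (G × Multiplicative (ZMod 2))) (c : Multiplicative (ZMod 2)) :
    φ (1, c) = (1, c) := by
  have hcases : ∀ c : Multiplicative (ZMod 2), c = 1 ∨ c = Multiplicative.ofAdd 1 := by decide
  rcases hcases c with rfl | rfl
  · exact map_one φ
  set x : Multiplicative (ZMod 2) := Multiplicative.ofAdd 1 with hx
  set z := φ (1, x) with hz
  have hxx : x * x = 1 := by decide
  have hz2 : z * z = 1 := by
    have hone : ((1 : G), x) * ((1 : G), x) = (1 : G × Multiplicative (ZMod 2)) := by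
      simp [Prod.ext_iff, hxx]
    rw [hz, ← map_mul, hone, map_one]
  have hzne : z ≠ 1 := by
    intro h
    have h2 : ((1 : G), x) = 1 := φ.injective (by rw [map_one, ← hz]; exact h)
    have h3 : x = (1 : Multiplicative (ZMod 2)) := congrArg Prod.snd h2
    revert h3
    decide
  -- z is central
  have hzc : ∀ w : G × Multiplicative (ZMod 2), z * w = w * z := by
    intro w
    obtain ⟨u, rfl⟩ := φ.surjective w
    rw [hz, ← map_mul, ← map_mul]
    congr 1
    ext
    · simp
    · simp [mul_comm]
  have hz1 : z.1 = 1 := by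
    have hcen : z.1 ∈ Subgroup.center G := by
      rw [Subgroup.mem_center_iff]
      intro g
      have := hzc (g, 1)
      exact (congrArg Prod.fst this).symm
    rcases IsSimpleGroup.eq_bot_or_eq_top_of_normal (Subgroup.center G) inferInstance with h | h
    · simpa [h] using hcen
    · -- G abelian: use zpowers z.1 is normal
      by_contra hne
      have hcomm : ∀ a b : G, a * b = b * a := fun a b =>
        Subgroup.mem_center_iff.mp (h ▸ Subgroup.mem_top b) a
      have hnorm : (Subgroup.zpowers z.1).Normal := by
        constructor
        intro n hn g
        rw [hcomm g n, mul_assoc, mul_inv_cancel, mul_one]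
        exact hn
      rcases IsSimpleGroup.eq_bot_or_eq_top_of_normal _ hnorm with h' | h'
      · exact hne (by simpa [h'] using Subgroup.mem_zpowers z.1)
      · have hord : orderOf z.1 = 2 := by
          have hsq : z.1 * z.1 = 1 := congrArg Prod.fst hz2
          have : orderOf z.1 ∣ 2 := orderOf_dvd_of_pow_eq_one (by rw [pow_two]; exact hsq)
          rcases (Nat.prime_two.eq_one_or_self_of_dvd _ this) with h1 | h2
          · exact absurd (orderOf_eq_one_iff.mp h1) hne
          · exact h2
        have : Nat.card G = 2 := by
          rw [← hord, ← Nat.card_zpowers, h']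
          exact (Nat.card_congr Subgroup.topEquiv.toEquiv).symm
        exact hG this
  have hz2' : z.2 = x := by
    have hc2 := hcases z.2
    rcases hc2 with h2 | h2
    · exact absurd (Prod.ext hz1 h2) hzne
    · exact h2
  exact Prod.ext hz1 hz2'

private lemma aux_snd {G : Type*} [Group G] [IsSimpleGroup G] (hG : Nat.card G ≠ 2)
    (φ : MulAut (G × Multiplicative (ZMod 2))) (g : G) : (φ (g, 1)).2 = 1 :=
  aux_hom_trivial hG
    ((MonoidHom.snd G (Multiplicative (ZMod 2))).comp
      (φ.toMonoidHom.comp (MonoidHom.inl G (Multiplicative (ZMod 2))))) g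

/-- If `G` is simple and not `C₂`, then `|Aut(G × C₂)| = |Aut(G)|`. -/
theorem stmt_12 {G : Type*} [Group G] [IsSimpleGroup G] (hG : Nat.card G ≠ 2) :
    Nat.card (MulAut (G × Multiplicative (ZMod 2))) = Nat.card (MulAut G) := by
  have key : ∀ (φ : MulAut (G × Multiplicative (ZMod 2))) (g : G) (c : Multiplicative (ZMod 2)),
      φ (g, c) = ((φ (g, 1)).1, c) := by
    intro φ g c
    have : (g, c) = (g, (1 : Multiplicative (ZMod 2))) * (1, c) := by simp
    rw [this, map_mul, aux_fix hG φ c]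
    ext
    · simp
    · simp [aux_snd hG φ g]
  refine Nat.card_congr ⟨fun φ => ?_, fun α => α.prodCongr (MulEquiv.refl _), ?_, ?_⟩
  · exact
      { toFun := fun g => (φ (g, 1)).1
        invFun := fun g => (φ.symm (g, 1)).1
        left_inv := fun g => by
          show ((MulEquiv.symm φ) ((φ (g, 1)).1, 1)).1 = g
          have h1 : ((φ (g, 1)).1, (1 : Multiplicative (ZMod 2))) = φ (g, 1) :=
            Prod.ext rfl (aux_snd hG φ g).symm
          rw [h1]
          simp
        right_inv := fun g => by
          show (φ (((MulEquiv.symm φ) (g, 1)).1, 1)).1 = g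
          have h1 : ((φ.symm (g, 1)).1, (1 : Multiplicative (ZMod 2))) = φ.symm (g, 1) :=
            Prod.ext rfl (aux_snd hG φ.symm g).symm
          rw [h1]
          simp
        map_mul' := fun g h => by
          show (φ ((g * h : G), 1)).1 = (φ (g, 1)).1 * (φ (h, 1)).1
          have heq : ((g * h : G), (1 : Multiplicative (ZMod 2))) = (g, 1) * (h, 1) := by simp
          rw [heq, map_mul]; rfl }
  · intro φ
    ext ⟨g, c⟩ <;>
      simp [MulEquiv.prodCongr, key φ g c]
  · intro α
    ext g
    simp [MulEquiv.prodCongr]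
end

section
/- Let G be a simple group with Nat.card G ≠ 2 (i.e., G not isomorphic to C₂), let C₂ = Multiplicative (ZMod 2), and let π : G × C₂ → G be the first projection. Then ker π is a characteristic subgroup of G × C₂, and the unique group homomorphism ζ : MulAut (G × C₂) → MulAut G satisfying ζ(ψ) ∘ π = π ∘ ψ for all ψ is bijective; that is, π is a 1-strong double covering of G. -/
set_option linter.unnecessarySimpa false

section Aux
variable {G : Type*} [Group G] [IsSimpleGroup G]

abbrev C2 := Multiplicative (ZMod 2)

lemma c2_sq (c : C2) : c * c = 1 := by
  have h : ∀ a : ZMod 2, a + a = 0 := by decide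
  have := congrArg Multiplicative.ofAdd (h (Multiplicative.toAdd c))
  exact this

lemma key {G : Type*} [Group G] [IsSimpleGroup G] (hG : Nat.card G ≠ 2)
    (ψ : MulAut (G × C2)) (c : C2) : (ψ (1, c)).1 = 1 := by
  set z := (ψ (1, c)).1 with hz
  have hcentral : ∀ w : G × C2, w * ψ (1, c) = ψ (1, c) * w := by
    intro w
    obtain ⟨p, rfl⟩ := ψ.surjective w
    rw [← map_mul, ← map_mul]
    congr 1
    ext
    · simp
    · simp [mul_comm]
  have hcomm : ∀ w : G, Commute w z := by
    intro w
    have := congrArg Prod.fst (hcentral (w, 1))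
    simpa [Commute, SemiconjBy] using this
  have h1 : ((1 : G), c) * (1, c) = 1 := by
    ext
    · simp
    · exact c2_sq c
  have hsq : z * z = 1 := by
    have h2 : ψ (1, c) * ψ (1, c) = 1 := by rw [← map_mul, h1, map_one]
    have := congrArg Prod.fst h2
    simpa using this
  by_contra hne
  have hnorm : (Subgroup.zpowers z).Normal := by
    constructor
    intro n hn g
    rcases Subgroup.mem_zpowers_iff.mp hn with ⟨k, rfl⟩
    have h3 : Commute g (z ^ k) := (hcomm g).zpow_right k
    rw [h3.eq, mul_assoc, mul_inv_cancel, mul_one]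
    exact Subgroup.mem_zpowers_iff.mpr ⟨k, rfl⟩
  rcases IsSimpleGroup.eq_bot_or_eq_top_of_normal _ hnorm with h | h
  · exact hne (by simpa [h] using Subgroup.mem_zpowers z)
  · apply hG
    have hcard : Nat.card G = orderOf z := by
      rw [← Nat.card_zpowers, h]
      exact (Nat.card_congr Subgroup.topEquiv.toEquiv).symm
    rw [hcard, orderOf_eq_prime (by rw [sq]; exact hsq) hne]

end Aux

section Aux2
variable {G : Type*} [Group G] [IsSimpleGroup G]

lemma fst_psi (hG : Nat.card G ≠ 2) (ψ : MulAut (G × C2)) (p : G × C2) :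
    (ψ p).1 = (ψ (p.1, 1)).1 := by
  have hp : p = (p.1, 1) * (1, p.2) := by ext <;> simp
  rw [hp, map_mul]
  simp [key hG ψ p.2]

def zfun (hG : Nat.card G ≠ 2) (ψ : MulAut (G × C2)) : MulAut G where
  toFun x := (ψ (x, 1)).1
  invFun x := (ψ⁻¹ (x, 1)).1
  left_inv x := by
    show (ψ⁻¹ ((ψ (x, 1)).1, 1)).1 = x
    rw [← fst_psi hG ψ⁻¹ (ψ (x, 1))]
    simp
  right_inv x := by
    show (ψ ((ψ⁻¹ (x, 1)).1, 1)).1 = x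
    rw [← fst_psi hG ψ (ψ⁻¹ (x, 1))]
    simp
  map_mul' x y := by
    rw [← Prod.fst_mul, ← map_mul]
    simp

lemma zfun_apply (hG : Nat.card G ≠ 2) (ψ : MulAut (G × C2)) (x : G) :
    zfun hG ψ x = (ψ (x, 1)).1 := rfl

def zeta (hG : Nat.card G ≠ 2) : MulAut (G × C2) →* MulAut G where
  toFun := zfun hG
  map_one' := by ext x; simp [zfun_apply]
  map_mul' ψ φ := by
    ext x
    simp only [zfun_apply, MulAut.mul_apply]
    exact fst_psi hG ψ (φ (x, 1))

end Aux2

section Aux3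
variable {G : Type*} [Group G] [IsSimpleGroup G]

lemma card_c2 : Nat.card C2 = 2 := by
  simp [Nat.card_eq_fintype_card]

lemma c2_ne_one (a b : C2) (ha : a ≠ 1) (hb : b ≠ 1) : a = b := by
  have h : ∀ x y : ZMod 2, x ≠ 0 → y ≠ 0 → x = y := by decide
  have := h (Multiplicative.toAdd a) (Multiplicative.toAdd b)
    (fun hc => ha (by simpa using congrArg Multiplicative.ofAdd hc))
    (fun hc => hb (by simpa using congrArg Multiplicative.ofAdd hc))
  simpa using congrArg Multiplicative.ofAdd this

lemma zeta_inj (hG : Nat.card G ≠ 2) : Function.Injective (zeta hG) := by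
  rw [injective_iff_map_eq_one]
  intro ψ hψ
  have h : ∀ x : G, (ψ (x, 1)).1 = x := by
    intro x
    have := congrArg (fun e : MulAut G => e x) hψ
    simpa [zeta, zfun_apply] using this
  -- second coordinate homomorphism
  set f : G →* C2 :=
    (MonoidHom.snd G C2).comp (ψ.toMonoidHom.comp (MonoidHom.inl G C2)) with hf
  have hftriv : ∀ x : G, f x = 1 := by
    by_contra hc
    push_neg at hc
    obtain ⟨x, hx⟩ := hc
    have hker : f.ker ≠ ⊤ := fun ht => hx (by
      have : x ∈ f.ker := ht ▸ Subgroup.mem_top x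
      exact this)
    rcases IsSimpleGroup.eq_bot_or_eq_top_of_normal f.ker inferInstance with hb | ht
    · have hinj : Function.Injective f := (MonoidHom.ker_eq_bot_iff f).mp hb
      have : Finite G := Finite.of_injective f hinj
      have hle : Nat.card G ≤ 2 := by
        rw [← card_c2]
        exact Nat.card_le_card_of_injective f hinj
      have hlt : 1 < Nat.card G := Finite.one_lt_card
      omega
    · exact hker ht
  have hψ1 : ∀ x : G, ψ (x, 1) = (x, 1) := by
    intro x
    ext
    · exact h x
    · exact hftriv x
  have hψ2 : ∀ c : C2, ψ (1, c) = (1, c) := by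
    intro c
    by_cases hc : c = 1
    · subst hc; exact map_one ψ
    · ext
      · exact key hG ψ c
      · show (ψ (1, c)).2 = c
        have hne : (ψ (1, c)).2 ≠ 1 := by
          intro hcontra
          have : ψ (1, c) = 1 := by
            ext
            · exact key hG ψ c
            · exact hcontra
          have := ψ.injective (by simpa using this : ψ (1, c) = ψ 1)
          exact hc (by simpa using congrArg Prod.snd this)
        exact c2_ne_one _ _ hne hc
  ext p
  · show (ψ p).1 = p.1
    have hp : p = (p.1, 1) * (1, p.2) := by ext <;> simp
    rw [hp, map_mul, hψ1, hψ2]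
  · show (ψ p).2 = p.2
    have hp : p = (p.1, 1) * (1, p.2) := by ext <;> simp
    rw [hp, map_mul, hψ1, hψ2]

lemma zeta_surj (hG : Nat.card G ≠ 2) : Function.Surjective (zeta hG) := by
  intro e
  refine ⟨MulEquiv.prodCongr e (MulEquiv.refl C2), ?_⟩
  ext x
  rfl

end Aux3

lemma ker_char {G : Type*} [Group G] [IsSimpleGroup G] (hG : Nat.card G ≠ 2) :
    (MonoidHom.fst G C2).ker.Characteristic := by
  constructor
  intro φ
  ext p
  simp only [Subgroup.mem_comap, MonoidHom.mem_ker, MonoidHom.coe_fst,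
    MulEquiv.coe_toMonoidHom]
  constructor
  · intro hp
    have h2 : (φ⁻¹ ((φ p).1, (φ p).2)).1 = p.1 := by simp
    rw [hp] at h2
    calc p.1 = (φ⁻¹ (1, (φ p).2)).1 := h2.symm
    _ = 1 := key hG φ⁻¹ _
  · intro hp
    have hp2 : p = (1, p.2) := by ext <;> simp [hp]
    rw [hp2]
    exact key hG φ p.2

/-- Corollary `SimpleStrong`: for a simple group `G` not isomorphic to `C₂`,
the projection `π : G × C₂ → G` has characteristic kernel and the unique homomorphism
`ζ : MulAut (G × C₂) → MulAut G` with `ζ(ψ) ∘ π = π ∘ ψ` is bijective, i.e. `π` is a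
1-strong double covering. -/
theorem stmt_13 {G : Type*} [Group G] [IsSimpleGroup G] (hG : Nat.card G ≠ 2) :
    (MonoidHom.fst G (Multiplicative (ZMod 2))).ker.Characteristic ∧
    ∃ ζ : MulAut (G × Multiplicative (ZMod 2)) →* MulAut G,
      (∀ (ψ : MulAut (G × Multiplicative (ZMod 2))) (x : G × Multiplicative (ZMod 2)),
        ζ ψ (MonoidHom.fst G (Multiplicative (ZMod 2)) x) =
          MonoidHom.fst G (Multiplicative (ZMod 2)) (ψ x)) ∧
      (∀ ζ' : MulAut (G × Multiplicative (ZMod 2)) →* MulAut G,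
        (∀ (ψ : MulAut (G × Multiplicative (ZMod 2))) (x : G × Multiplicative (ZMod 2)),
          ζ' ψ (MonoidHom.fst G (Multiplicative (ZMod 2)) x) =
            MonoidHom.fst G (Multiplicative (ZMod 2)) (ψ x)) → ζ' = ζ) ∧
      Function.Bijective ζ := by
  refine ⟨ker_char hG, zeta hG, ?_, ?_, zeta_inj hG, zeta_surj hG⟩
  · intro ψ x
    show zfun hG ψ x.1 = (ψ x).1
    rw [zfun_apply, ← fst_psi hG ψ x]
  · intro ζ' hζ'
    apply MonoidHom.ext
    intro ψ
    apply MulEquiv.ext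
    intro x
    have := hζ' ψ (x, 1)
    exact (by simpa using this : ζ' ψ x = (ψ (x, 1)).1)
end

section
/- Let m and n be natural numbers with m positive and even and n ≥ 1, and let s be an integer such that m divides s^n − 1 (hence m also divides (s+m)^n − 1). Then the integers (s^n − 1)/m and ((s+m)^n − 1)/m have the same parity (are congruent modulo 2) if and only if n is even. -/
/-!
Since `m` is even and `m ∣ sⁿ - 1` with `n ≥ 1`, `s` is odd. Expanding, `(s + m)ⁿ = sⁿ + m t` with
`t ≡ n sⁿ⁻¹ ≡ n (mod 2)`, so the second quotient is the first plus `t`, and the two have the same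
parity exactly when `n` is even.
-/

lemma Int.odd_of_dvd_pow_sub_one {m s : ℤ} {n : ℕ} (hn : n ≠ 0) (hm : Even m)
    (hd : m ∣ s ^ n - 1) : Odd s := by
  have hsub : Even (s ^ n - 1) := even_iff_two_dvd.mpr (hm.two_dvd.trans hd)
  rw [Int.even_sub_one, Int.not_even_iff_odd, Int.odd_pow' hn] at hsub
  exact hsub

lemma Int.exists_add_pow_eq_pow_add_mul {s m : ℤ} (hs : Odd s) (hm : Even m) (n : ℕ) :
    ∃ t : ℤ, (s + m) ^ n = s ^ n + m * t ∧ (Even t ↔ Even n) := by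
  induction n with
  | zero => exact ⟨0, by ring, by simp⟩
  | succ n ih =>
    obtain ⟨t, ht, hparity⟩ := ih
    refine ⟨s ^ n + t * s + m * t, by rw [pow_succ, ht]; ring, ?_⟩
    have hsn : Odd (s ^ n) := hs.pow
    rw [← Int.not_even_iff_odd] at hs hsn
    simp only [Int.even_add, Int.even_mul, hparity, hs, hsn, hm, Nat.even_add_one]
    tauto

/-- If `m` is positive and even, `n ≥ 1` and `m ∣ sⁿ − 1`, then
`(sⁿ − 1)/m` and `((s+m)ⁿ − 1)/m` have the same parity iff `n` is even. -/
theorem stmt_14 (m n : ℕ) (hm : 0 < m) (hme : Even m) (hn : 1 ≤ n) (s : ℤ)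
    (hd : (m : ℤ) ∣ s ^ n - 1) :
    (s ^ n - 1) / (m : ℤ) % 2 = ((s + m) ^ n - 1) / (m : ℤ) % 2 ↔ Even n := by
  have hmeZ : Even (m : ℤ) := hme.natCast
  have hs : Odd s := Int.odd_of_dvd_pow_sub_one (by omega) hmeZ hd
  obtain ⟨t, ht, hparity⟩ := Int.exists_add_pow_eq_pow_add_mul hs hmeZ n
  have hquot : ((s + m) ^ n - 1) / (m : ℤ) = (s ^ n - 1) / (m : ℤ) + t := by
    rw [ht, show s ^ n + (m : ℤ) * t - 1 = (s ^ n - 1) + m * t by ring,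
      Int.add_mul_ediv_left _ _ (by positivity)]
  rw [hquot, ← hparity, Int.even_iff]
  omega
end

section
/- Let m, n, r, s be natural numbers with m, n ≥ 1 satisfying the metacyclic conditions s^n ≡ 1 (mod m) and r·s ≡ r (mod m), and let ε ∈ {0,1}. Let Ĝ be the presented group on three generators x, y, i with relators x^m, y^n·x^{−r}·i^{−ε}, y^{−1}·x·y·x^{−s}·i^{−1}, i², i^{−1}·x^{−1}·i·x, and i^{−1}·y^{−1}·i·y (i.e., the group P_{(1, i^ε, i)} = ⟨x, y, i ∣ x^m = 1, y^n = x^r i^ε, x^y = x^s i, i² = 1, i central⟩). Then Nat.card Ĝ = 2·m·n (i.e., P_{(1,i^ε,i)} is a double covering of the metacyclic group M(m,n,r,s)) if and only if m, n and r are all even. -/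
set_option linter.unusedSectionVars false
set_option maxHeartbeats 1000000

/-- Relators of the presentation `P_{(1, i^ε, i)} = ⟨x, y, i ∣ x^m = 1, y^n = x^r i^ε,
x^y = x^s i, i² = 1, [i,x] = 1, [i,y] = 1⟩`, on generators `x = of 0`, `y = of 1`,
`i = of 2` of the free group on `Fin 3`. -/
def relsP1εi (m n r s ε : ℕ) : Set (FreeGroup (Fin 3)) :=
  { FreeGroup.of 0 ^ m,
    FreeGroup.of 1 ^ n * (FreeGroup.of 0 ^ r * FreeGroup.of 2 ^ ε)⁻¹,
    (FreeGroup.of 1)⁻¹ * FreeGroup.of 0 * FreeGroup.of 1 *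
      (FreeGroup.of 0 ^ s * FreeGroup.of 2)⁻¹,
    FreeGroup.of 2 ^ 2,
    (FreeGroup.of 2)⁻¹ * (FreeGroup.of 0)⁻¹ * FreeGroup.of 2 * FreeGroup.of 0,
    (FreeGroup.of 2)⁻¹ * (FreeGroup.of 1)⁻¹ * FreeGroup.of 2 * FreeGroup.of 1 }
section
variable {G : Type*} [Group G] (X Y I : G) (m n r s ε : ℕ)
variable (R1 : X ^ m = 1) (R2 : Y ^ n = X ^ r * I ^ ε)
variable (R3 : Y⁻¹ * X * Y = X ^ s * I) (R4 : I ^ 2 = 1)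
variable (R5 : Commute I X) (R6 : Commute I Y)

namespace NF

include R1 in
lemma Xmod {a b : ℕ} (hab : a ≡ b [MOD m]) : X ^ a = X ^ b := by
  obtain hle | hle := le_total a b
  · obtain ⟨k, hk⟩ := (Nat.modEq_iff_dvd' hle).mp hab
    have hb : b = a + m * k := by omega
    rw [hb, pow_add, pow_mul, R1, one_pow, mul_one]
  · obtain ⟨k, hk⟩ := (Nat.modEq_iff_dvd' hle).mp hab.symm
    have ha : a = b + m * k := by omega
    rw [ha, pow_add, pow_mul, R1, one_pow, mul_one]

include R4 in
lemma Imod {a b : ℕ} (h : a ≡ b [MOD 2]) : I ^ a = I ^ b := Xmod I 2 R4 h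

include R4 in
lemma Iinv (c : ℕ) : (I ^ c)⁻¹ = I ^ c := by
  rw [inv_eq_iff_mul_eq_one, ← pow_add, Imod I R4 (b := 0) (by unfold Nat.ModEq; omega), pow_zero]

include R1 in
lemma Xinv (hm : 1 ≤ m) (a : ℕ) : (X ^ a)⁻¹ = X ^ (a * (m - 1)) := by
  obtain ⟨k, rfl⟩ : ∃ k, m = k + 1 := ⟨m - 1, by omega⟩
  rw [inv_eq_iff_mul_eq_one, ← pow_add]
  have h1 : a + a * (k + 1 - 1) = (k + 1) * a := by
    simp only [Nat.add_sub_cancel]; ring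
  rw [h1, pow_mul, R1, one_pow]

include R3 R5 in
lemma conjpow (a : ℕ) : Y⁻¹ * X ^ a * Y = X ^ (s * a) * I ^ a := by
  have h1 : ∀ k : ℕ, Y⁻¹ * X ^ k * Y = (Y⁻¹ * X * Y) ^ k := by
    intro k; induction k with
    | zero => simp
    | succ k ih => rw [pow_succ, pow_succ, ← ih]; group
  rw [h1, R3, (R5.symm.pow_left s).mul_pow, ← pow_mul]

include R3 R5 in
lemma XpowY (a : ℕ) : X ^ a * Y = Y * (X ^ (s * a) * I ^ a) := by
  rw [← conjpow X Y I s R3 R5 a]; group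

include R1 R3 R4 R5 in
lemma YXpow (hs : s * s ^ (n - 1) ≡ 1 [MOD m]) (a : ℕ) :
    Y * X ^ a = X ^ (s ^ (n - 1) * a) * Y * I ^ (s ^ (n - 1) * a) := by
  set t := s ^ (n - 1)
  have h := XpowY X Y I s R3 R5 (t * a)
  have hx : X ^ (s * (t * a)) = X ^ a := by
    refine Xmod X m R1 ?_
    calc s * (t * a) = (s * t) * a := by ring
    _ ≡ 1 * a [MOD m] := Nat.ModEq.mul_right a hs
    _ = a := by ring
  rw [hx] at h
  have h2 : I ^ (t * a + t * a) = (1 : G) := by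
    refine (Imod I R4 (b := 0) ?_).trans (pow_zero I)
    unfold Nat.ModEq; omega
  rw [h, mul_assoc, mul_assoc, ← pow_add, h2, mul_one]

include R1 R3 R4 R5 R6 in
lemma YpowXpow (hs : s * s ^ (n - 1) ≡ 1 [MOD m]) (b : ℕ) :
    ∀ a : ℕ, ∃ a₂ c₂ : ℕ, Y ^ b * X ^ a = X ^ a₂ * Y ^ b * I ^ c₂ := by
  induction b with
  | zero => exact fun a => ⟨a, 0, by simp⟩
  | succ b ih =>
    intro a
    obtain ⟨a₂, c₂, h⟩ := ih (s ^ (n - 1) * a)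
    refine ⟨a₂, c₂ + s ^ (n - 1) * a, ?_⟩
    have hY := YXpow X Y I m n s R1 R3 R4 R5 hs a
    have hc : I ^ c₂ * Y = Y * I ^ c₂ := (R6.pow_left c₂).eq
    calc Y ^ (b+1) * X ^ a = Y ^ b * (Y * X ^ a) := by rw [pow_succ]; group
    _ = Y ^ b * (X ^ (s^(n-1)*a) * Y * I ^ (s^(n-1)*a)) := by rw [hY]
    _ = (Y ^ b * X ^ (s^(n-1)*a)) * Y * I ^ (s^(n-1)*a) := by group
    _ = (X ^ a₂ * Y ^ b * I ^ c₂) * Y * I ^ (s^(n-1)*a) := by rw [h]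
    _ = X ^ a₂ * (Y ^ b * (I ^ c₂ * Y)) * I ^ (s^(n-1)*a) := by group
    _ = X ^ a₂ * (Y ^ b * (Y * I ^ c₂)) * I ^ (s^(n-1)*a) := by rw [hc]
    _ = X ^ a₂ * Y ^ (b+1) * I ^ (c₂ + s^(n-1)*a) := by rw [pow_add, pow_succ]; group

include R1 R3 R4 R5 R6 in
lemma nf_mul (hs : s * s ^ (n - 1) ≡ 1 [MOD m]) (a b c a' b' c' : ℕ) :
    ∃ A B C : ℕ, (X^a*Y^b*I^c)*(X^a'*Y^b'*I^c') = X^A*Y^B*I^C := by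
  obtain ⟨a₂, c₂, h⟩ := YpowXpow X Y I m n s R1 R3 R4 R5 R6 hs b a'
  have hcx : I ^ c * X ^ a' = X ^ a' * I ^ c := (R5.pow_pow c a').eq
  have hcy1 : I ^ c₂ * Y ^ b' = Y ^ b' * I ^ c₂ := (R6.pow_pow c₂ b').eq
  have hcy2 : I ^ c * Y ^ b' = Y ^ b' * I ^ c := (R6.pow_pow c b').eq
  refine ⟨a + a₂, b + b', c₂ + (c + c'), ?_⟩
  calc (X^a*Y^b*I^c)*(X^a'*Y^b'*I^c')
      = X^a * Y^b * (I^c * X^a') * Y^b' * I^c' := by group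
    _ = X^a * Y^b * (X^a' * I^c) * Y^b' * I^c' := by rw [hcx]
    _ = X^a * (Y^b * X^a') * (I^c * Y^b') * I^c' := by group
    _ = X^a * (X^a₂ * Y^b * I^c₂) * (Y^b' * I^c) * I^c' := by rw [h, hcy2]
    _ = X^a * X^a₂ * Y^b * (I^c₂ * Y^b') * (I^c * I^c') := by group
    _ = X^a * X^a₂ * Y^b * (Y^b' * I^c₂) * (I^c * I^c') := by rw [hcy1]
    _ = X^(a+a₂) * Y^(b+b') * I^(c₂+(c+c')) := by
        rw [pow_add X a a₂, pow_add Y b b', pow_add I c₂ (c+c'), pow_add I c c']; group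

include R1 R2 R4 R5 R6 in
lemma nf_bound (hm : 1 ≤ m) (a b c : ℕ) :
    ∃ A B C : ℕ, A < m ∧ (B < n ∨ (n = 0 ∧ B = b)) ∧ C < 2 ∧
      X^a*Y^b*I^c = X^A*Y^B*I^C := by
  rcases Nat.eq_zero_or_pos n with hn | hn
  · refine ⟨a % m, b, c % 2, Nat.mod_lt _ hm, Or.inr ⟨hn, rfl⟩, Nat.mod_lt _ (by omega), ?_⟩
    rw [Xmod X m R1 (Nat.mod_modEq a m).symm, Imod I R4 (Nat.mod_modEq c 2).symm]
  obtain ⟨q, b0, hb0, rfl⟩ : ∃ q b0, b0 < n ∧ b = n*q + b0 :=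
    ⟨b/n, b%n, Nat.mod_lt _ hn, (Nat.div_add_mod b n).symm⟩
  have hyb : Y ^ (n*q + b0) = X^(r*q) * I^(ε*q) * Y^b0 := by
    rw [pow_add, pow_mul, R2, (R5.symm.pow_pow r ε).mul_pow, ← pow_mul, ← pow_mul]
  have hIY : I^(ε*q) * Y^b0 = Y^b0 * I^(ε*q) := (R6.pow_pow _ _).eq
  have hIY2 : I^(ε*q + c) = I^(ε*q) * I^c := pow_add I _ _
  refine ⟨(a + r*q) % m, b0, (ε*q + c) % 2, Nat.mod_lt _ hm, Or.inl hb0,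
    Nat.mod_lt _ (by omega), ?_⟩
  rw [Xmod X m R1 (Nat.mod_modEq (a + r*q) m), Imod I R4 (Nat.mod_modEq (ε*q + c) 2)]
  calc X^a * Y^(n*q+b0) * I^c = X^a * (X^(r*q) * I^(ε*q) * Y^b0) * I^c := by rw [hyb]
    _ = X^a * X^(r*q) * (I^(ε*q) * Y^b0) * I^c := by group
    _ = X^a * X^(r*q) * (Y^b0 * I^(ε*q)) * I^c := by rw [hIY]
    _ = X^(a + r*q) * Y^b0 * (I^(ε*q) * I^c) := by rw [pow_add X a (r*q)]; group
    _ = X^(a + r*q) * Y^b0 * I^(ε*q + c) := by rw [hIY2]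

include R1 R3 R4 R5 in
lemma Im_one : I ^ m = 1 := by
  have h := conjpow X Y I s R3 R5 m
  rw [R1] at h
  have hx : X ^ (s * m) = 1 := by
    rw [Xmod X m R1 (b := 0) (by unfold Nat.ModEq; simp [Nat.mul_mod_left]), pow_zero]
  rw [hx, one_mul] at h
  rw [← h]; group

include R1 R2 R3 R4 R5 R6 in
lemma Ir_one (hr : r * s ≡ r [MOD m]) : I ^ r = 1 := by
  have h := conjpow X Y I s R3 R5 r
  have hyn : Y⁻¹ * (X ^ r * I ^ ε) * Y = X ^ r * I ^ ε := by
    rw [← R2]; group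
  have hIc : Y⁻¹ * I ^ ε * Y = I ^ ε := by
    have hh := (R6.pow_left ε).eq
    rw [mul_assoc, hh, ← mul_assoc, inv_mul_cancel, one_mul]
  have hsplit : Y⁻¹ * (X ^ r * I ^ ε) * Y = (Y⁻¹ * X ^ r * Y) * (Y⁻¹ * I ^ ε * Y) := by group
  rw [hsplit, h, hIc] at hyn
  have hx : X ^ (s * r) = X ^ r := Xmod X m R1 (by rw [mul_comm]; exact hr)
  rw [hx] at hyn
  -- hyn : X ^ r * I ^ r * I ^ ε = X ^ r * I ^ ε
  have h3 : X ^ r * (I ^ r * I ^ ε) = X ^ r * I ^ ε := by rw [← mul_assoc]; exact hyn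
  have h4 : I ^ r * I ^ ε = I ^ ε := mul_left_cancel h3
  have h5 : I ^ r * I ^ ε = 1 * I ^ ε := by rw [one_mul]; exact h4
  exact mul_right_cancel h5

include R1 R2 R3 R4 R5 R6 in
lemma IT_one (hs : s ^ n ≡ 1 [MOD m]) :
    I ^ (∑ j ∈ Finset.range n, s ^ j) = 1 := by
  have key : ∀ k : ℕ, (Y ^ k)⁻¹ * X * Y ^ k = X ^ (s ^ k) * I ^ (∑ j ∈ Finset.range k, s ^ j) := by
    intro k; induction k with
    | zero => simp
    | succ k ih =>
      have h1 : (Y ^ (k+1))⁻¹ * X * Y ^ (k+1) = Y⁻¹ * ((Y ^ k)⁻¹ * X * Y ^ k) * Y := by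
        rw [pow_succ]; group
      rw [h1, ih]
      have h2 : Y⁻¹ * (X ^ (s^k) * I ^ (∑ j ∈ Finset.range k, s ^ j)) * Y
          = (Y⁻¹ * X ^ (s^k) * Y) * (Y⁻¹ * I ^ (∑ j ∈ Finset.range k, s ^ j) * Y) := by group
      have hIc : Y⁻¹ * I ^ (∑ j ∈ Finset.range k, s ^ j) * Y = I ^ (∑ j ∈ Finset.range k, s ^ j) := by
        have hh := (R6.pow_left (∑ j ∈ Finset.range k, s ^ j)).eq
        rw [mul_assoc, hh, ← mul_assoc, inv_mul_cancel, one_mul]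
      rw [h2, hIc, conjpow X Y I s R3 R5]
      have e1 : s ^ (k+1) = s * s ^ k := by rw [pow_succ, mul_comm]
      rw [Finset.sum_range_succ, e1, mul_assoc, ← pow_add I, Nat.add_comm (s^k)]
  have hn' := key n
  have hcom : X * Y ^ n = Y ^ n * X := by
    rw [R2]
    exact (((Commute.refl X).pow_right r).mul_right (R5.symm.pow_right ε)).eq
  have h2 : (Y^n)⁻¹ * X * Y^n = X := by
    rw [mul_assoc, hcom, ← mul_assoc, inv_mul_cancel, one_mul]
  rw [h2] at hn'
  have hx : X ^ (s^n) = X ^ 1 := Xmod X m R1 hs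
  rw [hx, pow_one] at hn'
  exact mul_eq_left.mp hn'.symm

include R1 R2 R3 R4 R5 R6 in
lemma Yinv_nf (hm : 1 ≤ m) (hn : 1 ≤ n) (hs : s * s ^ (n-1) ≡ 1 [MOD m]) :
    ∃ A B C : ℕ, Y⁻¹ = X^A * Y^B * I^C := by
  have h1 : Y * Y ^ (n-1) = Y ^ n := by rw [← pow_succ']; congr 1; omega
  have h2 : Y⁻¹ = Y ^ (n-1) * (Y^n)⁻¹ := by
    rw [← h1, mul_inv_rev, ← mul_assoc, mul_inv_cancel, one_mul]
  rw [R2, mul_inv_rev, Iinv I R4, Xinv X m R1 hm] at h2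
  obtain ⟨a₂, c₂, h⟩ := YpowXpow X Y I m n s R1 R3 R4 R5 R6 hs (n-1) (r*(m-1))
  refine ⟨a₂, n-1, c₂ + ε, ?_⟩
  have hswap : I^ε * X^(r*(m-1)) = X^(r*(m-1)) * I^ε := (R5.pow_pow _ _).eq
  rw [h2, hswap, ← mul_assoc, h, pow_add I]
  group

include R4 in
lemma I_pow_odd_eq (k : ℕ) (hk : Odd k) (h1 : I ^ k = 1) : I = 1 := by
  have hmod : k ≡ 1 [MOD 2] := by
    unfold Nat.ModEq; rw [Nat.odd_iff] at hk; omega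
  rw [Imod I R4 hmod, pow_one] at h1; exact h1

include R1 R2 R3 R4 R5 R6 in
lemma I_eq_one (hn : 1 ≤ n) (hmc1 : s ^ n ≡ 1 [MOD m]) (hmc2 : r * s ≡ r [MOD m])
    (hodd : ¬(Even m ∧ Even n ∧ Even r)) : I = 1 := by
  by_cases hm2 : Even m
  · have hs_odd : Odd s := by
      have h2 : s ^ n ≡ 1 [MOD 2] := hmc1.of_dvd (even_iff_two_dvd.mp hm2)
      have h3 : Odd (s ^ n) := by
        rw [Nat.odd_iff]; unfold Nat.ModEq at h2; omega
      rcases Nat.even_or_odd s with he | ho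
      · exfalso
        have hse : Even (s ^ n) := by
          obtain ⟨k, rfl⟩ : ∃ k, n = k + 1 := ⟨n - 1, by omega⟩
          rw [pow_succ]; exact he.mul_left _
        exact (Nat.not_odd_iff_even.mpr hse) h3
      · exact ho
    by_cases hn2 : Even n
    · have hr : Odd r := by
        rcases Nat.even_or_odd r with he | ho
        · exact absurd ⟨hm2, hn2, he⟩ hodd
        · exact ho
      exact I_pow_odd_eq I R4 r hr (Ir_one X Y I m n r s ε R1 R2 R3 R4 R5 R6 hmc2)
    · have hT : Odd (∑ j ∈ Finset.range n, s ^ j) := by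
        have hmod : ∀ k : ℕ, (∑ j ∈ Finset.range k, s ^ j) % 2 = k % 2 := by
          intro k; induction k with
          | zero => simp
          | succ k ih =>
            have hsk : s ^ k % 2 = 1 := Nat.odd_iff.mp (hs_odd.pow)
            rw [Finset.sum_range_succ, Nat.add_mod, ih, hsk]; omega
        rw [Nat.odd_iff, hmod n, ← Nat.odd_iff]
        exact Nat.not_even_iff_odd.mp hn2
      exact I_pow_odd_eq I R4 _ hT (IT_one X Y I m n r s ε R1 R2 R3 R4 R5 R6 hmc1)
  · exact I_pow_odd_eq I R4 m (Nat.not_even_iff_odd.mp hm2)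
      (Im_one X Y I m s R1 R3 R4 R5)

end NF
end

section Construction

variable {m n r s ε : ℕ}

/-- The additive automorphism `(a, c) ↦ (v a, c + cast (v a))` of `ZMod m × ZMod 2`. -/
def psiAdd (h2m : 2 ∣ m) (u v : ZMod m) (huv : u * v = 1) :
    (ZMod m × ZMod 2) ≃+ (ZMod m × ZMod 2) where
  toFun p := (v * p.1, p.2 + ZMod.castHom h2m (ZMod 2) (v * p.1))
  invFun p := (u * p.1, p.2 + ZMod.castHom h2m (ZMod 2) p.1)
  left_inv p := by
    have h22 : ∀ x : ZMod 2, x + x = 0 := by decide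
    ext
    · show u * (v * p.1) = p.1
      rw [← mul_assoc, huv, one_mul]
    · show p.2 + ZMod.castHom h2m (ZMod 2) (v * p.1) + ZMod.castHom h2m (ZMod 2) (v * p.1) = p.2
      rw [add_assoc, h22, add_zero]
  right_inv p := by
    have h22 : ∀ x : ZMod 2, x + x = 0 := by decide
    ext
    · show v * (u * p.1) = p.1
      rw [← mul_assoc, mul_comm v u, huv, one_mul]

    · show p.2 + ZMod.castHom h2m (ZMod 2) p.1 +
        ZMod.castHom h2m (ZMod 2) (v * (u * p.1)) = p.2
      rw [← mul_assoc, mul_comm v u, huv, one_mul, add_assoc, h22, add_zero]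
  map_add' p q := by
    ext
    · show v * (p.1 + q.1) = v * p.1 + v * q.1
      ring
    · show (p.2 + q.2) + ZMod.castHom h2m (ZMod 2) (v * (p.1 + q.1)) =
        (p.2 + ZMod.castHom h2m (ZMod 2) (v * p.1)) + (q.2 + ZMod.castHom h2m (ZMod 2) (v * q.1))
      rw [mul_add, map_add]
      ring

lemma exists_witness_group (hm : 1 ≤ m) (hn : 1 ≤ n)
    (hmc1 : s ^ n ≡ 1 [MOD m]) (hmc2 : r * s ≡ r [MOD m])
    (hem : Even m) (hen : Even n) (her : Even r) :
    ∃ (G : Type) (_ : Group G) (Xg Yg Ig : G),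
      Nat.card G = 2 * m * n ∧
      Xg ^ m = 1 ∧ Yg ^ n = Xg ^ r * Ig ^ ε ∧ Yg⁻¹ * Xg * Yg = Xg ^ s * Ig ∧
      Ig ^ 2 = 1 ∧ Commute Ig Xg ∧ Commute Ig Yg ∧
      Subgroup.closure {Xg, Yg, Ig} = ⊤ := by
  haveI : NeZero m := ⟨by omega⟩
  haveI : NeZero n := ⟨by omega⟩
  have h2m : 2 ∣ m := hem.two_dvd
  have h2n : 2 ∣ n := hen.two_dvd
  have h2r : 2 ∣ r := her.two_dvd
  -- s and t := s^(n-1) are odd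
  have hsodd : Odd s := by
    have h2 : s ^ n ≡ 1 [MOD 2] := hmc1.of_dvd h2m
    have h3 : Odd (s ^ n) := by rw [Nat.odd_iff]; unfold Nat.ModEq at h2; omega
    rcases Nat.even_or_odd s with he | ho
    · exfalso
      obtain ⟨k, rfl⟩ : ∃ k, n = k + 1 := ⟨n - 1, by omega⟩
      exact (Nat.not_odd_iff_even.mpr ((pow_succ s k) ▸ (he.mul_left _))) h3
    · exact ho
  set tn : ℕ := s ^ (n - 1) with htn
  have htodd : Odd tn := hsodd.pow
  have hst : s * tn ≡ 1 [MOD m] := by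
    have h : s * tn = s ^ n := by rw [htn, ← pow_succ']; congr 1; omega
    rw [h]; exact hmc1
  -- cast versions
  have hstZ : (s : ZMod m) * (tn : ZMod m) = 1 := by
    have := (ZMod.natCast_eq_natCast_iff _ _ _).mpr hst
    push_cast at this
    simpa using this
  have hrsZ : (r : ZMod m) * (s : ZMod m) = (r : ZMod m) := by
    have := (ZMod.natCast_eq_natCast_iff _ _ _).mpr hmc2
    push_cast at this
    simpa using this
  have htrZ : (tn : ZMod m) * (r : ZMod m) = (r : ZMod m) := by
    calc (tn : ZMod m) * r = (tn : ZMod m) * ((r : ZMod m) * s) := by rw [hrsZ]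
    _ = (r : ZMod m) * ((s : ZMod m) * tn) := by ring
    _ = r := by rw [hstZ, mul_one]
  have htnZ : ((tn : ZMod m)) ^ n = 1 := by
    have hmod : tn ^ n ≡ 1 [MOD m] := by
      have : tn ^ n = (s ^ n) ^ (n - 1) := by rw [htn, ← pow_mul, ← pow_mul, Nat.mul_comm]
      rw [this]
      calc (s ^ n) ^ (n-1) ≡ 1 ^ (n-1) [MOD m] := hmc1.pow _
      _ = 1 := one_pow _
    have := (ZMod.natCast_eq_natCast_iff _ _ _).mpr hmod
    push_cast at this
    simpa using this
  -- casts to ZMod 2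
  have hcast_t : ZMod.castHom h2m (ZMod 2) ((tn : ZMod m)) = 1 := by
    have h1 : tn % 2 = 1 := Nat.odd_iff.mp htodd
    rw [map_natCast, ← ZMod.natCast_mod tn 2, h1, Nat.cast_one]
  have hcast_r : ZMod.castHom h2m (ZMod 2) ((r : ZMod m)) = 0 := by
    rw [map_natCast]
    rw [(ZMod.natCast_eq_zero_iff r 2).mpr h2r]
  have hn2 : ((n : ZMod 2)) = 0 := (ZMod.natCast_eq_zero_iff n 2).mpr h2n
  -- the automorphism
  set ψ : (ZMod m × ZMod 2) ≃+ (ZMod m × ZMod 2) :=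
    psiAdd h2m (s : ZMod m) (tn : ZMod m) hstZ with hψ
  have hψ_apply : ∀ p : ZMod m × ZMod 2,
      ψ p = ((tn : ZMod m) * p.1, p.2 + ZMod.castHom h2m (ZMod 2) p.1) := by
    intro p
    show ((tn : ZMod m) * p.1, p.2 + ZMod.castHom h2m (ZMod 2) ((tn:ZMod m) * p.1)) = _
    rw [map_mul, hcast_t, one_mul]
  have hψ_symm_apply : ∀ p : ZMod m × ZMod 2,
      ψ.symm p = ((s : ZMod m) * p.1, p.2 + ZMod.castHom h2m (ZMod 2) p.1) := by
    intro p; rfl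
  set Φ : MulAut (Multiplicative (ZMod m × ZMod 2)) := AddEquiv.toMultiplicative ψ with hΦdef
  have hΦ_apply : ∀ p : ZMod m × ZMod 2, Φ (Multiplicative.ofAdd p) = Multiplicative.ofAdd (ψ p) :=
    fun p => rfl
  have hΦ_pow : ∀ (k : ℕ) (p : ZMod m × ZMod 2), (Φ ^ k) (Multiplicative.ofAdd p) =
      Multiplicative.ofAdd (((tn : ZMod m)) ^ k * p.1,
        p.2 + (k : ZMod 2) * ZMod.castHom h2m (ZMod 2) p.1) := by
    intro k
    induction k with
    | zero => intro p; simp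
    | succ k ih =>
      intro p
      rw [pow_succ', MulAut.mul_apply, ih, hΦ_apply, hψ_apply]
      congr 1
      ext
      · show (tn : ZMod m) * ((tn:ZMod m) ^ k * p.1) = (tn : ZMod m) ^ (k+1) * p.1
        ring
      · show p.2 + (k : ZMod 2) * ZMod.castHom h2m (ZMod 2) p.1 +
          ZMod.castHom h2m (ZMod 2) ((tn:ZMod m) ^ k * p.1) =
          p.2 + (((k : ℕ) + 1 : ℕ) : ZMod 2) * ZMod.castHom h2m (ZMod 2) p.1
        rw [map_mul, map_pow, hcast_t, one_pow, one_mul]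
        push_cast
        ring
  have hΦn : Φ ^ n = 1 := by
    ext x : 1
    rw [show x = Multiplicative.ofAdd (Multiplicative.toAdd x) from rfl, hΦ_pow]
    rw [htnZ, hn2]
    simp
  -- β
  set β : Multiplicative ℤ →* MulAut (Multiplicative (ZMod m × ZMod 2)) :=
    zpowersHom _ Φ with hβdef
  have hβ_apply : ∀ k : Multiplicative ℤ, β k = Φ ^ (Multiplicative.toAdd k) := fun _ => rfl
  -- the fixed element w
  set wE : Multiplicative (ZMod m × ZMod 2) :=
    Multiplicative.ofAdd ((r : ZMod m), (ε : ZMod 2)) with hwE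
  have hΦ_fix : Φ wE = wE := by
    rw [hwE, hΦ_apply, hψ_apply]
    show Multiplicative.ofAdd ((tn : ZMod m) * r, (ε : ZMod 2) + ZMod.castHom h2m (ZMod 2) (r : ZMod m)) = _
    rw [htrZ, hcast_r, add_zero]
  have hΦ_inv_fix : Φ⁻¹ wE = wE := by
    conv_lhs => rw [← hΦ_fix]
    show (Φ⁻¹ * Φ) wE = wE
    rw [inv_mul_cancel]; rfl
  have hΦ_fix_z : ∀ k : ℤ, (Φ ^ k) wE = wE := by
    intro k
    induction k using Int.induction_on with
    | zero => rfl
    | succ k ih => rw [zpow_add_one, MulAut.mul_apply, hΦ_fix, ih]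
    | pred k ih => rw [zpow_sub_one, MulAut.mul_apply, hΦ_inv_fix, ih]
  have hΦn' : Φ ^ (n : ℤ) = 1 := by rw [zpow_natCast, hΦn]
  -- the central element z
  set z : Multiplicative (ZMod m × ZMod 2) ⋊[β] Multiplicative ℤ :=
    ⟨wE⁻¹, Multiplicative.ofAdd (n : ℤ)⟩ with hz
  have hβ_fix : ∀ (k : Multiplicative ℤ) (j : ℤ), β k (wE ^ j) = wE ^ j := by
    intro k j
    rw [hβ_apply, map_zpow, hΦ_fix_z]
  have hβ_fix_inv : ∀ (k : Multiplicative ℤ), β k wE⁻¹ = wE⁻¹ := by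
    intro k
    rw [hβ_apply, map_inv, hΦ_fix_z]
  have hz_comm : ∀ g : Multiplicative (ZMod m × ZMod 2) ⋊[β] Multiplicative ℤ,
      Commute z g := by
    intro g
    show z * g = g * z
    ext : 1
    · show z.left * β z.right g.left = g.left * β g.right z.left
      have h1 : β z.right = Φ ^ (n : ℤ) := by rw [hz]; rfl
      rw [h1, hΦn']
      show wE⁻¹ * g.left = g.left * β g.right wE⁻¹
      rw [hβ_fix_inv, mul_comm]
    · show z.right * g.right = g.right * z.right
      exact mul_comm _ _
  have hzpow : ∀ j : ℤ, z ^ j =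
      (⟨wE⁻¹ ^ j, Multiplicative.ofAdd (j * n)⟩ :
        Multiplicative (ZMod m × ZMod 2) ⋊[β] Multiplicative ℤ) := by
    intro j
    induction j using Int.induction_on with
    | zero =>
      rw [zpow_zero]
      ext : 1
      · show (1:Multiplicative (ZMod m × ZMod 2)) = wE⁻¹ ^ (0:ℤ); rw [zpow_zero]
      · show (1:Multiplicative ℤ) = Multiplicative.ofAdd ((0:ℤ) * n); rw [zero_mul]; rfl
    | succ k ih =>
      rw [zpow_add_one, ih]
      ext : 1
      · rw [SemidirectProduct.mul_left]
        show wE⁻¹ ^ (k:ℤ) * β (Multiplicative.ofAdd ((k:ℤ) * n)) wE⁻¹ = wE⁻¹ ^ ((k:ℤ)+1)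
        rw [hβ_fix_inv, ← zpow_add_one]
      · rw [SemidirectProduct.mul_right]
        show Multiplicative.ofAdd ((k:ℤ) * n) * Multiplicative.ofAdd ((n:ℤ))
          = Multiplicative.ofAdd (((k:ℤ)+1) * n)
        rw [← ofAdd_add]
        congr 1
        ring
    | pred k ih =>
      rw [zpow_sub_one, ih]
      have hzinv : z⁻¹ = (⟨wE, Multiplicative.ofAdd (-(n:ℤ))⟩ :
          Multiplicative (ZMod m × ZMod 2) ⋊[β] Multiplicative ℤ) := by
        ext : 1
        · rw [SemidirectProduct.inv_left]
          show β z.right⁻¹ wE⁻¹⁻¹ = wE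
          rw [inv_inv, hβ_apply, hΦ_fix_z]
        · rfl
      rw [hzinv]
      ext : 1
      · rw [SemidirectProduct.mul_left]
        show wE⁻¹ ^ (-(k:ℤ)) * β (Multiplicative.ofAdd (-(k:ℤ) * n)) wE = wE⁻¹ ^ (-(k:ℤ)-1)
        have hfix : β (Multiplicative.ofAdd (-(k:ℤ) * n)) wE = wE := by
          rw [hβ_apply, hΦ_fix_z]
        rw [hfix, zpow_sub_one, inv_inv]
      · rw [SemidirectProduct.mul_right]
        show Multiplicative.ofAdd (-(k:ℤ) * n) * Multiplicative.ofAdd (-(n:ℤ))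
          = Multiplicative.ofAdd ((-(k:ℤ)-1) * n)
        rw [← ofAdd_add]
        congr 1
        ring
  have hβ_fix_invpow : ∀ (k : Multiplicative ℤ) (j : ℤ), β k (wE⁻¹ ^ j) = wE⁻¹ ^ j := by
    intro k j
    rw [inv_zpow, map_inv, hβ_fix]
  set H : Subgroup (Multiplicative (ZMod m × ZMod 2) ⋊[β] Multiplicative ℤ) :=
    Subgroup.zpowers z with hH
  haveI hHn : H.Normal := by
    constructor
    intro x hx g
    obtain ⟨j, rfl⟩ := Subgroup.mem_zpowers_iff.mp hx
    have hc : g * z ^ j * g⁻¹ = z ^ j := by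
      have hcz := ((hz_comm g).zpow_left j).eq
      rw [← hcz]; group
    rw [hc]
    exact Subgroup.zpow_mem H (Subgroup.mem_zpowers z) j
  have hnz : (n:ℤ) ≠ 0 := by exact_mod_cast (by omega : n ≠ 0)
  set F : (Multiplicative (ZMod m × ZMod 2) ⋊[β] Multiplicative ℤ) → (ZMod m × ZMod 2) × ZMod n :=
    fun g => (Multiplicative.toAdd (g.left * wE ^ (Multiplicative.toAdd g.right / (n:ℤ))),
      ((Multiplicative.toAdd g.right : ℤ) : ZMod n)) with hF
  have hmulz : ∀ (g : Multiplicative (ZMod m × ZMod 2) ⋊[β] Multiplicative ℤ) (j : ℤ),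
      F (g * z ^ j) = F g := by
    intro g j
    rw [hzpow]
    have hleft : (g * (⟨wE⁻¹ ^ j, Multiplicative.ofAdd (j * n)⟩ :
        Multiplicative (ZMod m × ZMod 2) ⋊[β] Multiplicative ℤ)).left = g.left * wE⁻¹ ^ j := by
      rw [SemidirectProduct.mul_left]
      congr 1
      exact hβ_fix_invpow _ _
    have hright : (g * (⟨wE⁻¹ ^ j, Multiplicative.ofAdd (j * n)⟩ :
        Multiplicative (ZMod m × ZMod 2) ⋊[β] Multiplicative ℤ)).right =
        g.right * Multiplicative.ofAdd (j * n) := rfl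
    rw [hF]
    simp only [hleft, hright]
    have htadd : Multiplicative.toAdd (g.right * Multiplicative.ofAdd (j * n)) =
        Multiplicative.toAdd g.right + j * n := rfl
    rw [htadd]
    have hdiv : (Multiplicative.toAdd g.right + j * n) / (n:ℤ) =
        Multiplicative.toAdd g.right / (n:ℤ) + j := Int.add_mul_ediv_right _ j hnz
    rw [hdiv]
    congr 1
    · congr 1
      calc g.left * wE⁻¹ ^ j * wE ^ (Multiplicative.toAdd g.right / (n:ℤ) + j)
          = g.left * (wE ^ (-j) * wE ^ (Multiplicative.toAdd g.right / (n:ℤ) + j)) := by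
            rw [mul_assoc, inv_zpow, ← zpow_neg_one, ← zpow_mul]
            congr 2
            ring
        _ = g.left * wE ^ (Multiplicative.toAdd g.right / (n:ℤ)) := by
            rw [← zpow_add]
            congr 1
            ring
    · rw [Int.cast_add, Int.cast_mul, Int.cast_natCast, ZMod.natCast_self, mul_zero, add_zero]
  have hresp : ∀ a b, (QuotientGroup.leftRel H) a b → F a = F b := by
    intro a b hab
    rw [QuotientGroup.leftRel_apply] at hab
    obtain ⟨j, hj⟩ := Subgroup.mem_zpowers_iff.mp hab
    have hb : b = a * z ^ j := by rw [hj]; group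
    rw [hb, hmulz]
  set Fbar : ((Multiplicative (ZMod m × ZMod 2) ⋊[β] Multiplicative ℤ) ⧸ H) →
      (ZMod m × ZMod 2) × ZMod n := Quotient.lift F hresp with hFbar
  have hFbar_mk : ∀ g, Fbar (QuotientGroup.mk g) = F g := fun g => rfl
  have hsurj : Function.Surjective Fbar := by
    rintro ⟨p1, p2⟩
    refine ⟨QuotientGroup.mk ⟨Multiplicative.ofAdd p1, Multiplicative.ofAdd ((p2.val : ℤ))⟩, ?_⟩
    rw [hFbar_mk, hF]
    have hdiv : ((p2.val : ℤ)) / (n:ℤ) = 0 :=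
      Int.ediv_eq_zero_of_lt (by positivity) (by exact_mod_cast ZMod.val_lt p2)
    show (Multiplicative.toAdd (Multiplicative.ofAdd p1 * wE ^ (((p2.val:ℤ)) / (n:ℤ))),
      (((p2.val:ℤ)) : ZMod n)) = (p1, p2)
    rw [hdiv, zpow_zero, mul_one, Int.cast_natCast, ZMod.natCast_val, ZMod.cast_id]
    rfl
  have hinj : Function.Injective Fbar := by
    intro q1 q2
    refine Quotient.inductionOn₂ q1 q2 ?_
    intro a b hab
    rw [hFbar_mk, hFbar_mk, hF] at hab
    have h1 : Multiplicative.toAdd (a.left * wE ^ (Multiplicative.toAdd a.right / (n:ℤ))) =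
        Multiplicative.toAdd (b.left * wE ^ (Multiplicative.toAdd b.right / (n:ℤ))) :=
      congrArg Prod.fst hab
    have h2 : ((Multiplicative.toAdd a.right : ℤ) : ZMod n) =
        ((Multiplicative.toAdd b.right : ℤ) : ZMod n) := congrArg Prod.snd hab
    set ka := Multiplicative.toAdd a.right with hka
    set kb := Multiplicative.toAdd b.right with hkb
    rw [ZMod.intCast_eq_intCast_iff] at h2
    obtain ⟨j, hj⟩ := (Int.ModEq.dvd h2)
    -- hj : kb - ka = n * j
    have heq : a.left * wE ^ (ka / (n:ℤ)) = b.left * wE ^ (kb / (n:ℤ)) :=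
      Multiplicative.toAdd.injective h1
    have hdiv : kb / (n:ℤ) = ka / (n:ℤ) + j := by
      have hkbj : kb = ka + j * (n:ℤ) := by linear_combination hj
      rw [hkbj, Int.add_mul_ediv_right _ j hnz]
    have h3 : a.left * wE ^ (-j) = b.left := by
      have hh : a.left * wE ^ (-j) =
          a.left * wE ^ (ka/(n:ℤ)) * wE ^ (-(ka/(n:ℤ)) - j) := by
        rw [mul_assoc, ← zpow_add]
        congr 1
        ring
      rw [hh, heq, hdiv, mul_assoc, ← zpow_add,
        show ka/(n:ℤ) + j + (-(ka/(n:ℤ)) - j) = 0 from by ring, zpow_zero, mul_one]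
    have hb : b = a * z ^ j := by
      rw [hzpow]
      ext : 1
      · rw [SemidirectProduct.mul_left]
        show b.left = a.left * β a.right (wE⁻¹ ^ j)
        rw [hβ_fix_invpow, inv_zpow, ← zpow_neg]
        exact h3.symm
      · rw [SemidirectProduct.mul_right]
        show kb = Multiplicative.toAdd (a.right * Multiplicative.ofAdd (j * n))
        show kb = ka + j * n
        linear_combination hj
    show QuotientGroup.mk a = QuotientGroup.mk b
    rw [QuotientGroup.eq, hb]
    have hred : a⁻¹ * (a * z ^ j) = z ^ j := by group
    rw [hred]
    exact Subgroup.zpow_mem H (Subgroup.mem_zpowers z) j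
  have hcardG : Nat.card ((Multiplicative (ZMod m × ZMod 2) ⋊[β] Multiplicative ℤ) ⧸ H)
      = 2 * m * n := by
    rw [Nat.card_eq_of_bijective Fbar ⟨hinj, hsurj⟩]
    rw [Nat.card_prod, Nat.card_prod, Nat.card_zmod, Nat.card_zmod, Nat.card_zmod]
    ring
  -- generators
  have hcast_s : ZMod.castHom h2m (ZMod 2) ((s : ZMod m)) = 1 := by
    have h1 : s % 2 = 1 := Nat.odd_iff.mp hsodd
    rw [map_natCast, ← ZMod.natCast_mod s 2, h1, Nat.cast_one]
  set Qm := QuotientGroup.mk' H with hQm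
  set e1 : Multiplicative (ZMod m × ZMod 2) :=
    Multiplicative.ofAdd ((1 : ZMod m), (0 : ZMod 2)) with he1
  set e2 : Multiplicative (ZMod m × ZMod 2) :=
    Multiplicative.ofAdd ((0 : ZMod m), (1 : ZMod 2)) with he2
  set y1 : Multiplicative ℤ := Multiplicative.ofAdd (1 : ℤ) with hy1
  have hpow_pair : ∀ (a : ZMod m) (c : ZMod 2) (k : ℕ),
      (Multiplicative.ofAdd (a, c)) ^ k =
        Multiplicative.ofAdd ((k : ZMod m) * a, (k : ZMod 2) * c) := by
    intro a c k
    rw [← ofAdd_nsmul]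
    congr 1
    rw [Prod.smul_mk, nsmul_eq_mul, nsmul_eq_mul]
  have he1r : ∀ k : ℕ, e1 ^ k = Multiplicative.ofAdd (((k : ZMod m)), (0 : ZMod 2)) := by
    intro k
    rw [he1, hpow_pair, mul_one, mul_zero]
  have he2k : ∀ k : ℕ, e2 ^ k = Multiplicative.ofAdd ((0 : ZMod m), ((k : ZMod 2))) := by
    intro k
    rw [he2, hpow_pair, mul_one, mul_zero]
  have he1m : e1 ^ m = 1 := by
    rw [he1r, ZMod.natCast_self]
    rfl
  have he22 : e2 ^ 2 = 1 := by
    rw [he2k]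
    have h2z : ((2:ℕ) : ZMod 2) = 0 := by decide
    rw [h2z]
    rfl
  have hy1n : y1 ^ n = Multiplicative.ofAdd ((n:ℤ)) := by
    rw [hy1, ← ofAdd_nsmul]
    congr 1
    simp
  have hzinv2 : z⁻¹ = (⟨wE, Multiplicative.ofAdd (-(n:ℤ))⟩ :
      Multiplicative (ZMod m × ZMod 2) ⋊[β] Multiplicative ℤ) := by
    ext : 1
    · rw [SemidirectProduct.inv_left]
      show β z.right⁻¹ wE⁻¹⁻¹ = wE
      rw [inv_inv, hβ_apply, hΦ_fix_z]
    · rfl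
  have hβy1 : β y1 = Φ := by
    rw [hβ_apply, hy1]
    exact zpow_one Φ
  have hR1 : Qm (SemidirectProduct.inl e1) ^ m = 1 := by
    rw [← map_pow Qm, ← map_pow (SemidirectProduct.inl (φ := β)), he1m, map_one, map_one]
  have hR4 : Qm (SemidirectProduct.inl e2) ^ 2 = 1 := by
    rw [← map_pow Qm, ← map_pow (SemidirectProduct.inl (φ := β)), he22, map_one, map_one]
  have harg : e1 ^ r * e2 ^ ε = wE := by
    rw [he1r, he2k, ← ofAdd_add, hwE, Prod.mk_add_mk, add_zero, zero_add]
  have hR2 : Qm (SemidirectProduct.inr y1) ^ n =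
      Qm (SemidirectProduct.inl e1) ^ r * Qm (SemidirectProduct.inl e2) ^ ε := by
    rw [← map_pow Qm, ← map_pow (SemidirectProduct.inr (φ := β)), hy1n,
      ← map_pow Qm, ← map_pow Qm, ← map_pow (SemidirectProduct.inl (φ := β)),
      ← map_pow (SemidirectProduct.inl (φ := β)), ← map_mul Qm,
      ← map_mul (SemidirectProduct.inl (φ := β)), harg, hQm]
    refine (QuotientGroup.mk'_eq_mk' H).mpr ⟨z⁻¹, Subgroup.inv_mem H (Subgroup.mem_zpowers z), ?_⟩
    rw [hzinv2]
    ext : 1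
    · rw [SemidirectProduct.mul_left]
      show (1 : Multiplicative (ZMod m × ZMod 2)) *
        β (Multiplicative.ofAdd ((n:ℤ))) wE = wE
      rw [one_mul, hβ_apply, hΦ_fix_z]
    · rw [SemidirectProduct.mul_right]
      show Multiplicative.ofAdd ((n:ℤ)) * Multiplicative.ofAdd (-(n:ℤ)) = 1
      rw [← ofAdd_add, add_neg_cancel]
      rfl
  have hΦinv_e1 : (β y1)⁻¹ e1 = Multiplicative.ofAdd (((s : ZMod m)), (1 : ZMod 2)) := by
    rw [hβy1]
    have hfst : (tn : ZMod m) * s = 1 := by rw [mul_comm]; exact hstZ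
    have hsnd : (1 : ZMod 2) + 1 = 0 := by decide
    have h : Φ (Multiplicative.ofAdd (((s : ZMod m)), (1 : ZMod 2))) = e1 := by
      rw [hΦ_apply, hψ_apply]
      show Multiplicative.ofAdd ((tn : ZMod m) * s,
        (1 : ZMod 2) + ZMod.castHom h2m (ZMod 2) ((s:ZMod m))) = e1
      rw [hcast_s, hfst, hsnd, he1]
    rw [← h]
    show (Φ⁻¹ * Φ) _ = _
    rw [inv_mul_cancel]
    rfl
  have hR3 : (Qm (SemidirectProduct.inr y1))⁻¹ * Qm (SemidirectProduct.inl e1) *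
      Qm (SemidirectProduct.inr y1) =
      Qm (SemidirectProduct.inl e1) ^ s * Qm (SemidirectProduct.inl e2) := by
    rw [← map_inv Qm, ← map_mul Qm, ← map_mul Qm, ← map_pow Qm, ← map_mul Qm]
    congr 1
    rw [← map_inv (SemidirectProduct.inr (φ := β)), ← SemidirectProduct.inl_aut_inv, hΦinv_e1,
      ← map_pow (SemidirectProduct.inl (φ := β)), ← map_mul (SemidirectProduct.inl (φ := β))]
    congr 1
    rw [he1r, he2, ← ofAdd_add, Prod.mk_add_mk, add_zero, zero_add]
  have hR5 : Commute (Qm (SemidirectProduct.inl e2)) (Qm (SemidirectProduct.inl e1)) := by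
    show _ * _ = _ * _
    rw [← map_mul Qm, ← map_mul (SemidirectProduct.inl (φ := β)),
      ← map_mul Qm, ← map_mul (SemidirectProduct.inl (φ := β)), mul_comm e2 e1]
  have hΦe2 : β y1 e2 = e2 := by
    rw [hβy1, he2, hΦ_apply, hψ_apply]
    show Multiplicative.ofAdd ((tn : ZMod m) * 0,
      (1 : ZMod 2) + ZMod.castHom h2m (ZMod 2) ((0:ZMod m))) = _
    rw [mul_zero, map_zero, add_zero]
  have hR6 : Commute (Qm (SemidirectProduct.inl e2)) (Qm (SemidirectProduct.inr y1)) := by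
    show _ * _ = _ * _
    rw [← map_mul Qm, ← map_mul Qm]
    congr 1
    have key : (SemidirectProduct.inl e2 : Multiplicative (ZMod m × ZMod 2) ⋊[β] Multiplicative ℤ) =
        SemidirectProduct.inr y1 * SemidirectProduct.inl e2 * SemidirectProduct.inr y1⁻¹ := by
      rw [← SemidirectProduct.inl_aut, hΦe2]
    calc SemidirectProduct.inl e2 * SemidirectProduct.inr y1
        = (SemidirectProduct.inr y1 * SemidirectProduct.inl e2 *
            SemidirectProduct.inr y1⁻¹) * SemidirectProduct.inr y1 := by rw [← key]
      _ = SemidirectProduct.inr y1 * SemidirectProduct.inl e2 := by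
          rw [map_inv]; group
  have hclosure : Subgroup.closure ({Qm (SemidirectProduct.inl e1), Qm (SemidirectProduct.inr y1),
      Qm (SemidirectProduct.inl e2)} :
      Set ((Multiplicative (ZMod m × ZMod 2) ⋊[β] Multiplicative ℤ) ⧸ H)) = ⊤ := by
    set S : Set ((Multiplicative (ZMod m × ZMod 2) ⋊[β] Multiplicative ℤ) ⧸ H) :=
      {Qm (SemidirectProduct.inl e1), Qm (SemidirectProduct.inr y1),
        Qm (SemidirectProduct.inl e2)} with hS
    rw [Subgroup.eq_top_iff']
    intro g
    refine QuotientGroup.induction_on g ?_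
    intro x
    have hXmem : Qm (SemidirectProduct.inl e1) ∈ Subgroup.closure S :=
      Subgroup.subset_closure (by rw [hS]; left; rfl)
    have hYmem : Qm (SemidirectProduct.inr y1) ∈ Subgroup.closure S :=
      Subgroup.subset_closure (by rw [hS]; right; left; rfl)
    have hImem : Qm (SemidirectProduct.inl e2) ∈ Subgroup.closure S :=
      Subgroup.subset_closure (by rw [hS]; right; right; rfl)
    have hx : (QuotientGroup.mk x : (Multiplicative (ZMod m × ZMod 2) ⋊[β] Multiplicative ℤ) ⧸ H)
        = Qm (SemidirectProduct.inl x.left) * Qm (SemidirectProduct.inr x.right) := by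
      rw [← map_mul Qm]
      show QuotientGroup.mk x = Qm (SemidirectProduct.inl x.left * SemidirectProduct.inr x.right)
      rw [SemidirectProduct.inl_left_mul_inr_right]
      rfl
    rw [hx]
    apply Subgroup.mul_mem
    · have hsplit : x.left = e1 ^ (Multiplicative.toAdd x.left).1.val *
          e2 ^ (Multiplicative.toAdd x.left).2.val := by
        rw [he1r, he2k, ← ofAdd_add, Prod.mk_add_mk, add_zero, zero_add,
          ZMod.natCast_val, ZMod.cast_id, ZMod.natCast_val, ZMod.cast_id]
        rfl
      rw [hsplit, map_mul (SemidirectProduct.inl (φ := β)), map_mul Qm,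
        map_pow (SemidirectProduct.inl (φ := β)), map_pow Qm,
        map_pow (SemidirectProduct.inl (φ := β)), map_pow Qm]
      exact Subgroup.mul_mem _ (Subgroup.pow_mem _ hXmem _) (Subgroup.pow_mem _ hImem _)
    · have hyr : x.right = y1 ^ (Multiplicative.toAdd x.right) := by
        rw [hy1, ← ofAdd_zsmul, smul_eq_mul, mul_one]
        rfl
      rw [hyr, map_zpow (SemidirectProduct.inr (φ := β)), map_zpow Qm]
      exact Subgroup.zpow_mem _ hYmem _
  exact ⟨_, inferInstance, Qm (SemidirectProduct.inl e1), Qm (SemidirectProduct.inr y1),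
    Qm (SemidirectProduct.inl e2), hcardG, hR1, hR2, hR3, hR4, hR5, hR6, hclosure⟩

end Construction

namespace Stmt15


variable (m n r s ε : ℕ)

abbrev P := PresentedGroup (relsP1εi m n r s ε)

def X : P m n r s ε := PresentedGroup.of 0
def Y : P m n r s ε := PresentedGroup.of 1
def I : P m n r s ε := PresentedGroup.of 2

lemma rel_one {w : FreeGroup (Fin 3)} (h : w ∈ relsP1εi m n r s ε) :
    PresentedGroup.mk (relsP1εi m n r s ε) w = 1 :=
  (QuotientGroup.eq_one_iff w).2 (Subgroup.subset_normalClosure h)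

lemma R1 : (X m n r s ε) ^ m = 1 := by
  have := rel_one m n r s ε (w := FreeGroup.of 0 ^ m) (by left; rfl)
  simpa [X, PresentedGroup.of, map_pow] using this

lemma R2 : (Y m n r s ε) ^ n = X m n r s ε ^ r * I m n r s ε ^ ε := by
  have := rel_one m n r s ε
    (w := FreeGroup.of 1 ^ n * (FreeGroup.of 0 ^ r * FreeGroup.of 2 ^ ε)⁻¹)
    (by right; left; rfl)
  simp only [map_mul, map_pow, map_inv] at this
  rw [mul_inv_eq_one] at this
  simpa [X, Y, I, PresentedGroup.of] using this

lemma R3 : (Y m n r s ε)⁻¹ * X m n r s ε * Y m n r s ε =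
    X m n r s ε ^ s * I m n r s ε := by
  have := rel_one m n r s ε
    (w := (FreeGroup.of 1)⁻¹ * FreeGroup.of 0 * FreeGroup.of 1 *
      (FreeGroup.of 0 ^ s * FreeGroup.of 2)⁻¹)
    (by right; right; left; rfl)
  simp only [map_mul, map_pow, map_inv] at this
  rw [mul_inv_eq_one] at this
  simpa [X, Y, I, PresentedGroup.of] using this

lemma R4 : (I m n r s ε) ^ 2 = 1 := by
  have := rel_one m n r s ε (w := FreeGroup.of 2 ^ 2) (by right; right; right; left; rfl)
  simpa [I, PresentedGroup.of, map_pow] using this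

lemma R5 : Commute (I m n r s ε) (X m n r s ε) := by
  have := rel_one m n r s ε
    (w := (FreeGroup.of 2)⁻¹ * (FreeGroup.of 0)⁻¹ * FreeGroup.of 2 * FreeGroup.of 0)
    (by right; right; right; right; left; rfl)
  simp only [map_mul, map_inv] at this
  have h : (I m n r s ε)⁻¹ * (X m n r s ε)⁻¹ * I m n r s ε * X m n r s ε = 1 := by
    simpa [X, I, PresentedGroup.of] using this
  have h' : ((X m n r s ε) * (I m n r s ε))⁻¹ * ((I m n r s ε) * (X m n r s ε)) = 1 := by
    rw [← h]; group
  exact (inv_mul_eq_one.mp h').symm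

lemma R6 : Commute (I m n r s ε) (Y m n r s ε) := by
  have := rel_one m n r s ε
    (w := (FreeGroup.of 2)⁻¹ * (FreeGroup.of 1)⁻¹ * FreeGroup.of 2 * FreeGroup.of 1)
    (by right; right; right; right; right; rfl)
  simp only [map_mul, map_inv] at this
  have h : (I m n r s ε)⁻¹ * (Y m n r s ε)⁻¹ * I m n r s ε * Y m n r s ε = 1 := by
    simpa [Y, I, PresentedGroup.of] using this
  have h' : ((Y m n r s ε) * (I m n r s ε))⁻¹ * ((I m n r s ε) * (Y m n r s ε)) = 1 := by
    rw [← h]; group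
  exact (inv_mul_eq_one.mp h').symm


section Plevel
variable {m n r s ε : ℕ}

lemma hs_aux (hn : 1 ≤ n) (hmc1 : s ^ n ≡ 1 [MOD m]) : s * s ^ (n-1) ≡ 1 [MOD m] := by
  have h : s * s ^ (n-1) = s ^ n := by rw [← pow_succ']; congr 1; omega
  rw [h]; exact hmc1

lemma nf_exists (hm : 1 ≤ m) (hn : 1 ≤ n) (hmc1 : s ^ n ≡ 1 [MOD m])
    (g : P m n r s ε) :
    ∃ a b c : ℕ, g = X m n r s ε ^ a * Y m n r s ε ^ b * I m n r s ε ^ c := by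
  have r1 := R1 m n r s ε
  have r2 := R2 m n r s ε
  have r3 := R3 m n r s ε
  have r4 := R4 m n r s ε
  have r5 := R5 m n r s ε
  have r6 := R6 m n r s ε
  have hs := hs_aux hn hmc1
  refine PresentedGroup.induction_on
    (C := fun g => ∃ a b c : ℕ, g = X m n r s ε ^ a * Y m n r s ε ^ b * I m n r s ε ^ c) g ?_
  intro w
  refine FreeGroup.induction_on
    (C := fun z => ∃ a b c : ℕ, PresentedGroup.mk (relsP1εi m n r s ε) z =
      X m n r s ε ^ a * Y m n r s ε ^ b * I m n r s ε ^ c) w ⟨0,0,0, by simp⟩ ?_ ?_ ?_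
  · intro z
    fin_cases z
    · exact ⟨1,0,0, by simp; rfl⟩
    · exact ⟨0,1,0, by simp; rfl⟩
    · exact ⟨0,0,1, by simp; rfl⟩
  · intro z _
    fin_cases z
    · refine ⟨1*(m-1), 0, 0, ?_⟩
      rw [map_inv]
      show (X m n r s ε)⁻¹ = _
      rw [← pow_one (X m n r s ε), NF.Xinv _ m r1 hm 1]
      simp
    · obtain ⟨A,B,C,h⟩ := NF.Yinv_nf (X m n r s ε) (Y m n r s ε) (I m n r s ε)
        m n r s ε r1 r2 r3 r4 r5 r6 hm hn hs
      refine ⟨A,B,C, ?_⟩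
      rw [map_inv]
      show (Y m n r s ε)⁻¹ = _
      rw [h]
    · refine ⟨0,0,1, ?_⟩
      rw [map_inv]
      show (I m n r s ε)⁻¹ = _
      rw [← pow_one (I m n r s ε), NF.Iinv _ r4 1]
      simp
  · intro u v hu hv
    obtain ⟨a,b,c,hu⟩ := hu
    obtain ⟨a',b',c',hv⟩ := hv
    obtain ⟨A,B,C,h⟩ := NF.nf_mul (X m n r s ε) (Y m n r s ε) (I m n r s ε)
      m n s r1 r3 r4 r5 r6 hs a b c a' b' c'
    exact ⟨A,B,C, by rw [map_mul, hu, hv, h]⟩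

lemma nf_surjective (hm : 1 ≤ m) (hn : 1 ≤ n) (hmc1 : s ^ n ≡ 1 [MOD m]) :
    Function.Surjective (fun t : Fin m × Fin n × Fin 2 =>
      X m n r s ε ^ (t.1 : ℕ) * Y m n r s ε ^ (t.2.1 : ℕ) * I m n r s ε ^ (t.2.2 : ℕ)) := by
  intro g
  obtain ⟨a,b,c,rfl⟩ := nf_exists hm hn hmc1 g
  obtain ⟨A,B,C,hA,hB,hC,h⟩ := NF.nf_bound (X m n r s ε) (Y m n r s ε) (I m n r s ε)
    m n r ε (R1 m n r s ε) (R2 m n r s ε) (R4 m n r s ε) (R5 m n r s ε)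
    (R6 m n r s ε) hm a b c
  rcases hB with hB | ⟨hn0, _⟩
  · exact ⟨(⟨A,hA⟩,⟨B,hB⟩,⟨C,hC⟩), h.symm⟩
  · omega

lemma finiteP (hm : 1 ≤ m) (hn : 1 ≤ n) (hmc1 : s ^ n ≡ 1 [MOD m]) :
    Finite (P m n r s ε) :=
  Finite.of_surjective _ (nf_surjective hm hn hmc1)

lemma card_le_2mn (hm : 1 ≤ m) (hn : 1 ≤ n) (hmc1 : s ^ n ≡ 1 [MOD m]) :
    Nat.card (P m n r s ε) ≤ 2 * m * n := by
  have hle := Nat.card_le_card_of_surjective _ (nf_surjective (ε := ε) (r := r) hm hn hmc1)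
  have hcards : Nat.card (Fin m × Fin n × Fin 2) = 2 * m * n := by
    simp [Nat.card_prod]; ring
  rw [hcards] at hle
  exact hle

lemma card_le_mn (hm : 1 ≤ m) (hn : 1 ≤ n) (hmc1 : s ^ n ≡ 1 [MOD m])
    (hI : I m n r s ε = 1) :
    Nat.card (P m n r s ε) ≤ m * n := by
  have hsurj : Function.Surjective (fun t : Fin m × Fin n =>
      X m n r s ε ^ (t.1 : ℕ) * Y m n r s ε ^ (t.2 : ℕ)) := by
    intro g
    obtain ⟨a,b,c,rfl⟩ := nf_exists hm hn hmc1 g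
    obtain ⟨A,B,C,hA,hB,hC,h⟩ := NF.nf_bound (X m n r s ε) (Y m n r s ε) (I m n r s ε)
      m n r ε (R1 m n r s ε) (R2 m n r s ε) (R4 m n r s ε) (R5 m n r s ε)
      (R6 m n r s ε) hm a b c
    rcases hB with hB | ⟨hn0, _⟩
    · exact ⟨(⟨A,hA⟩,⟨B,hB⟩), by rw [h, hI, one_pow, mul_one]⟩
    · omega
  have hle := Nat.card_le_card_of_surjective _ hsurj
  have hcards : Nat.card (Fin m × Fin n) = m * n := by simp [Nat.card_prod]
  rw [hcards] at hle
  exact hle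

lemma forward (hm : 1 ≤ m) (hn : 1 ≤ n) (hmc1 : s ^ n ≡ 1 [MOD m])
    (hmc2 : r * s ≡ r [MOD m])
    (hcard : Nat.card (P m n r s ε) = 2 * m * n) : Even m ∧ Even n ∧ Even r := by
  by_contra hodd
  have hI : I m n r s ε = 1 := NF.I_eq_one (X m n r s ε) (Y m n r s ε) (I m n r s ε)
    m n r s ε (R1 m n r s ε) (R2 m n r s ε) (R3 m n r s ε) (R4 m n r s ε)
    (R5 m n r s ε) (R6 m n r s ε) hn hmc1 hmc2 hodd
  have hle := card_le_mn hm hn hmc1 hI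
  rw [hcard] at hle
  nlinarith

lemma card_eq_even (hm : 1 ≤ m) (hn : 1 ≤ n) (hmc1 : s ^ n ≡ 1 [MOD m])
    (hmc2 : r * s ≡ r [MOD m]) (hem : Even m) (hen : Even n) (her : Even r) :
    Nat.card (P m n r s ε) = 2 * m * n := by
  obtain ⟨G, _, Xg, Yg, Ig, hcard, hr1, hr2, hr3, hr4, hr5, hr6, hclos⟩ :=
    exists_witness_group (ε := ε) hm hn hmc1 hmc2 hem hen her
  set f : Fin 3 → G := ![Xg, Yg, Ig] with hf
  have hrels : ∀ w ∈ relsP1εi m n r s ε, FreeGroup.lift f w = 1 := by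
    intro w hw
    simp only [relsP1εi, Set.mem_insert_iff, Set.mem_singleton_iff] at hw
    rcases hw with rfl|rfl|rfl|rfl|rfl|rfl
    · rw [map_pow, FreeGroup.lift_apply_of]
      show Xg ^ m = 1
      exact hr1
    · simp only [map_mul, map_pow, map_inv, FreeGroup.lift_apply_of]
      show Yg ^ n * (Xg ^ r * Ig ^ ε)⁻¹ = 1
      rw [← hr2, mul_inv_cancel]
    · simp only [map_mul, map_pow, map_inv, FreeGroup.lift_apply_of]
      show Yg⁻¹ * Xg * Yg * (Xg ^ s * Ig)⁻¹ = 1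
      rw [← hr3]
      group
    · rw [map_pow, FreeGroup.lift_apply_of]
      show Ig ^ 2 = 1
      exact hr4
    · simp only [map_mul, map_inv, FreeGroup.lift_apply_of]
      show Ig⁻¹ * Xg⁻¹ * Ig * Xg = 1
      have h : Ig⁻¹ * Xg⁻¹ * Ig * Xg = (Xg * Ig)⁻¹ * (Ig * Xg) := by group
      rw [h, hr5.eq, inv_mul_cancel]
    · simp only [map_mul, map_inv, FreeGroup.lift_apply_of]
      show Ig⁻¹ * Yg⁻¹ * Ig * Yg = 1
      have h : Ig⁻¹ * Yg⁻¹ * Ig * Yg = (Yg * Ig)⁻¹ * (Ig * Yg) := by group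
      rw [h, hr6.eq, inv_mul_cancel]
  have hsurj : Function.Surjective (PresentedGroup.toGroup hrels) := by
    rw [← MonoidHom.range_eq_top, eq_top_iff, ← hclos, Subgroup.closure_le]
    intro x hx
    rcases hx with rfl | rfl | rfl
    · exact ⟨PresentedGroup.of 0, PresentedGroup.toGroup.of hrels⟩
    · exact ⟨PresentedGroup.of 1, PresentedGroup.toGroup.of hrels⟩
    · exact ⟨PresentedGroup.of 2, PresentedGroup.toGroup.of hrels⟩
  haveI : Finite (P m n r s ε) := finiteP hm hn hmc1
  have hge := Nat.card_le_card_of_surjective _ hsurj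
  rw [hcard] at hge
  have hle := card_le_2mn (r := r) (ε := ε) hm hn hmc1
  exact le_antisymm hle hge

end Plevel

end Stmt15

/-- Theorem `Plxi`: for `m, n ≥ 1` satisfying the metacyclic conditions and
`ε ∈ {0,1}`, the presented group `P_{(1,i^ε,i)}` is a double covering of `M(m,n,r,s)`
(i.e. has order `2mn`) iff `m`, `n` and `r` are all even. -/
theorem stmt_15 (m n r s ε : ℕ) (hm : 1 ≤ m) (hn : 1 ≤ n)
    (hmc1 : s ^ n ≡ 1 [MOD m]) (hmc2 : r * s ≡ r [MOD m]) (hε : ε = 0 ∨ ε = 1) :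
    Nat.card (PresentedGroup (relsP1εi m n r s ε)) = 2 * m * n ↔
      Even m ∧ Even n ∧ Even r := by
  constructor
  · intro hcard
    exact Stmt15.forward hm hn hmc1 hmc2 hcard
  · rintro ⟨hem, hen, her⟩
    exact Stmt15.card_eq_even hm hn hmc1 hmc2 hem hen her
end

section
/- Let m ≥ 3 be an odd natural number, Ĝ a group, and π : Ĝ → DihedralGroup m a surjective group homomorphism whose kernel has cardinality 2 (a double covering of the dihedral group D_m of order 2m). Then Ĝ is isomorphic to DihedralGroup (2m) (which is isomorphic to DihedralGroup m × Multiplicative (ZMod 2)) or to QuaternionGroup m (the dicyclic group Q_{2m} of order 4m). -/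
section Aux

variable {G : Type*} [Group G]

private lemma aux_pow_mod {m : ℕ} {a : G} (ha : orderOf a = 2 * m) (n : ℕ) :
    a ^ (n % (2 * m)) = a ^ n := by
  have h := pow_mod_orderOf a n
  rwa [ha] at h

private lemma aux_g_add {m : ℕ} [NeZero (2 * m)] {a : G} (ha : orderOf a = 2 * m)
    (i j : ZMod (2 * m)) : a ^ (i + j).val = a ^ i.val * a ^ j.val := by
  rw [← pow_add, ZMod.val_add, aux_pow_mod ha]

private lemma aux_g_neg {m : ℕ} [NeZero (2 * m)] {a : G} (ha : orderOf a = 2 * m)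
    (i : ZMod (2 * m)) : a ^ (-i).val = (a ^ i.val)⁻¹ := by
  have h := aux_g_add ha (-i) i
  rw [neg_add_cancel] at h
  have h0 : a ^ (0 : ZMod (2 * m)).val = 1 := by simp
  rw [h0] at h
  exact eq_inv_of_mul_eq_one_left h.symm

private lemma aux_comm {a b : G} (hrel : a * b = b * a⁻¹) (k : ℕ) :
    a ^ k * b = b * (a ^ k)⁻¹ := by
  induction k with
  | zero => simp
  | succ n ih =>
    rw [pow_succ', mul_assoc, ih, ← mul_assoc, hrel, mul_assoc, ← mul_inv_rev, pow_mul_comm']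

private lemma aux_gb {m : ℕ} [NeZero (2 * m)] {a b : G} (ha : orderOf a = 2 * m)
    (hrel : a * b = b * a⁻¹) (i : ZMod (2 * m)) :
    a ^ i.val * b = b * a ^ (-i).val := by
  rw [aux_g_neg ha, aux_comm hrel]

private lemma aux_dihedral [Finite G] {m : ℕ} (hm : m ≠ 0) (a b : G)
    (ha : orderOf a = 2 * m) (hb : b ^ 2 = 1) (hrel : a * b = b * a⁻¹)
    (hgen : ∀ x : G, (∃ k : ℕ, x = a ^ k) ∨ (∃ k : ℕ, x = b * a ^ k))
    (hcard : Nat.card G = 4 * m) : Nonempty (G ≃* DihedralGroup (2 * m)) := by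
  haveI : NeZero (2 * m) := ⟨by omega⟩
  let f : DihedralGroup (2 * m) → G := fun x => match x with
    | .r i => a ^ i.val
    | .sr i => b * a ^ i.val
  have hmul : ∀ x y : DihedralGroup (2 * m), f (x * y) = f x * f y := by
    rintro (i | i) (j | j)
    · exact aux_g_add ha i j
    · show b * a ^ (j - i).val = a ^ i.val * (b * a ^ j.val)
      rw [← mul_assoc, aux_gb ha hrel, mul_assoc, ← aux_g_add ha, sub_eq_neg_add, add_comm]
    · show b * a ^ (i + j).val = b * a ^ i.val * a ^ j.val
      rw [mul_assoc, aux_g_add ha]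
    · show a ^ (j - i).val = b * a ^ i.val * (b * a ^ j.val)
      rw [mul_assoc, ← mul_assoc (a ^ i.val), aux_gb ha hrel, ← mul_assoc, ← mul_assoc,
        ← pow_two, hb, one_mul, ← aux_g_add ha, sub_eq_neg_add, add_comm]
  have hsurj : Function.Surjective f := by
    intro x
    rcases hgen x with ⟨k, rfl⟩ | ⟨k, rfl⟩
    · exact ⟨.r (k : ZMod (2 * m)), by
        show a ^ ((k : ZMod (2 * m))).val = a ^ k
        rw [ZMod.val_natCast, aux_pow_mod ha]⟩
    · exact ⟨.sr (k : ZMod (2 * m)), by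
        show b * a ^ ((k : ZMod (2 * m))).val = b * a ^ k
        rw [ZMod.val_natCast, aux_pow_mod ha]⟩
  have hbij : Function.Bijective f := by
    rw [Nat.bijective_iff_surjective_and_card]
    exact ⟨hsurj, by rw [DihedralGroup.nat_card, hcard]; ring⟩
  exact ⟨(MulEquiv.ofBijective (MonoidHom.mk' f hmul) hbij).symm⟩

private lemma aux_quaternion [Finite G] {m : ℕ} (hm : m ≠ 0) (a b : G)
    (ha : orderOf a = 2 * m) (hb : b ^ 2 = a ^ m) (hrel : a * b = b * a⁻¹)
    (hgen : ∀ x : G, (∃ k : ℕ, x = a ^ k) ∨ (∃ k : ℕ, x = b * a ^ k))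
    (hcard : Nat.card G = 4 * m) : Nonempty (G ≃* QuaternionGroup m) := by
  haveI : NeZero (2 * m) := ⟨by omega⟩
  haveI : NeZero m := ⟨hm⟩
  have hmv : ((m : ZMod (2 * m))).val = m := by
    rw [ZMod.val_natCast, Nat.mod_eq_of_lt (by omega)]
  let f : QuaternionGroup m → G := fun x => match x with
    | .a i => a ^ i.val
    | .xa i => b * a ^ i.val
  have hmul : ∀ x y : QuaternionGroup m, f (x * y) = f x * f y := by
    rintro (i | i) (j | j)
    · exact aux_g_add ha i j
    · show b * a ^ (j - i).val = a ^ i.val * (b * a ^ j.val)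
      rw [← mul_assoc, aux_gb ha hrel, mul_assoc, ← aux_g_add ha, sub_eq_neg_add, add_comm]
    · show b * a ^ (i + j).val = b * a ^ i.val * a ^ j.val
      rw [mul_assoc, aux_g_add ha]
    · show a ^ (((m : ZMod (2 * m)) + j - i)).val = b * a ^ i.val * (b * a ^ j.val)
      rw [mul_assoc, ← mul_assoc (a ^ i.val), aux_gb ha hrel, ← mul_assoc, ← mul_assoc,
        ← pow_two, hb, add_sub_assoc, aux_g_add ha, hmv, mul_assoc, ← aux_g_add ha,
        sub_eq_neg_add]
  have hsurj : Function.Surjective f := by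
    intro x
    rcases hgen x with ⟨k, rfl⟩ | ⟨k, rfl⟩
    · exact ⟨.a (k : ZMod (2 * m)), by
        show a ^ ((k : ZMod (2 * m))).val = a ^ k
        rw [ZMod.val_natCast, aux_pow_mod ha]⟩
    · exact ⟨.xa (k : ZMod (2 * m)), by
        show b * a ^ ((k : ZMod (2 * m))).val = b * a ^ k
        rw [ZMod.val_natCast, aux_pow_mod ha]⟩
  have hbij : Function.Bijective f := by
    rw [Nat.bijective_iff_surjective_and_card]
    refine ⟨hsurj, ?_⟩
    rw [Nat.card_eq_fintype_card, QuaternionGroup.card, hcard]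
  exact ⟨(MulEquiv.ofBijective (MonoidHom.mk' f hmul) hbij).symm⟩

end Aux

/-- For odd `m ≥ 3`, every double covering of the dihedral group `D_m` is
isomorphic to `D_{2m}` or to the dicyclic group `Q_{2m}`. -/
theorem stmt_18 (m : ℕ) (hm : 3 ≤ m) (hmo : Odd m) {Ghat : Type*} [Group Ghat]
    (π : Ghat →* DihedralGroup m) (hπ : Function.Surjective π)
    (hker : Nat.card π.ker = 2) :
    Nonempty (Ghat ≃* DihedralGroup (2 * m)) ∨ Nonempty (Ghat ≃* QuaternionGroup m) := by
  haveI : NeZero m := ⟨by omega⟩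
  have e := QuotientGroup.quotientKerEquivOfSurjective π hπ
  haveI : Finite π.ker := Nat.finite_of_card_ne_zero (by rw [hker]; norm_num)
  haveI : Finite (Ghat ⧸ π.ker) := Finite.of_equiv _ e.symm.toEquiv
  haveI : Finite Ghat :=
    Finite.of_equiv _ (Subgroup.groupEquivQuotientProdSubgroup (s := π.ker)).symm
  have hcard : Nat.card Ghat = 4 * m := by
    rw [Subgroup.card_eq_card_quotient_mul_card_subgroup π.ker, hker,
      Nat.card_congr e.toEquiv, DihedralGroup.nat_card]
    ring
  -- the unique nontrivial kernel element
  obtain ⟨z0, hz0ne, hz0uniq⟩ := (Nat.card_eq_two_iff' (1 : π.ker)).mp hker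
  set zz : Ghat := (z0 : Ghat) with hzzdef
  have hzker : π zz = 1 := z0.2
  have hzne : zz ≠ 1 := fun h => hz0ne (Subtype.ext h)
  have hz2 : zz ^ 2 = 1 := by
    have : z0 ^ 2 = 1 := by
      have := pow_card_eq_one' (x := z0)
      rwa [hker] at this
    simpa [hzzdef] using congrArg (Subtype.val) this
  have hker_cases : ∀ w : Ghat, π w = 1 → w = 1 ∨ w = zz := by
    intro w hw
    by_cases h1 : w = 1
    · exact Or.inl h1
    · right
      have := hz0uniq ⟨w, hw⟩ (fun h => h1 (congrArg Subtype.val h))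
      exact congrArg Subtype.val this
  have hzc : ∀ g : Ghat, g * zz = zz * g := by
    intro g
    have h1 : π (g * zz * g⁻¹) = 1 := by simp [map_mul, hzker]
    have h2 : g * zz * g⁻¹ ≠ 1 := by
      intro h
      exact hzne (by simpa using h)
    rcases hker_cases _ h1 with h | h
    · exact absurd h h2
    · exact mul_inv_eq_iff_eq_mul.mp h
  -- an element of order 2m mapping to r 1
  obtain ⟨u, hu⟩ := hπ (.r 1)
  have hmdvd : m ∣ orderOf u := by
    have h := orderOf_map_dvd π u
    rwa [hu, DihedralGroup.orderOf_r_one] at h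
  have hum : u ^ m = 1 ∨ u ^ m = zz := by
    apply hker_cases
    rw [map_pow, hu]
    exact DihedralGroup.r_one_pow_n
  have hu2m : u ^ (2 * m) = 1 := by
    have h2 : u ^ (2 * m) = (u ^ m) ^ 2 := by rw [← pow_mul, mul_comm]
    rcases hum with h | h
    · rw [h2, h]; exact one_pow 2
    · rw [h2, h]; exact hz2
  have hAex : ∃ A : Ghat, orderOf A = 2 * m ∧ π A = .r 1 := by
    obtain ⟨t, ht⟩ := hmdvd
    have htdvd : t ∣ 2 := by
      have hd : orderOf u ∣ 2 * m := orderOf_dvd_of_pow_eq_one hu2m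
      rw [ht, mul_comm 2 m] at hd
      exact (mul_dvd_mul_iff_left (show (m:ℕ) ≠ 0 by omega)).mp hd
    rcases (Nat.dvd_prime Nat.prime_two).mp htdvd with ht1 | ht2
    · -- orderOf u = m; take u * zz
      have hou : orderOf u = m := by rw [ht, ht1, mul_one]
      have hoz : orderOf zz = 2 := by
        apply orderOf_eq_prime hz2 hzne
      have hcomm : Commute u zz := (hzc u)
      refine ⟨u * zz, ?_, ?_⟩
      · rw [Commute.orderOf_mul_eq_mul_orderOf_of_coprime hcomm, hou, hoz, mul_comm]
        rw [hou, hoz]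
        exact hmo.coprime_two_right
      · rw [map_mul, hu, hzker, mul_one]
    · refine ⟨u, by rw [ht, ht2, mul_comm], hu⟩
  obtain ⟨a, ha, hapi⟩ := hAex
  have ham : a ^ m = zz := by
    have h1 : π (a ^ m) = 1 := by
      rw [map_pow, hapi]; exact DihedralGroup.r_one_pow_n
    rcases hker_cases _ h1 with h | h
    · exfalso
      have := orderOf_dvd_of_pow_eq_one h
      rw [ha] at this
      have := Nat.le_of_dvd (by omega) this
      omega
    · exact h
  -- b mapping to sr 0
  obtain ⟨b, hbpi⟩ := hπ (.sr 0)
  have hsr0inv : (DihedralGroup.sr 0 : DihedralGroup m)⁻¹ = .sr 0 := by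
    apply inv_eq_of_mul_eq_one_right
    exact DihedralGroup.sr_mul_self 0
  have hb2 : b ^ 2 = 1 ∨ b ^ 2 = zz := by
    apply hker_cases
    rw [map_pow, hbpi, pow_two]
    exact DihedralGroup.sr_mul_self 0
  have hb2a : b ^ 2 * a = a * b ^ 2 := by
    rcases hb2 with h | h <;> rw [h]
    · rw [one_mul, mul_one]
    · exact (hzc a).symm
  have hd : b⁻¹ * a * b * a = 1 ∨ b⁻¹ * a * b * a = zz := by
    apply hker_cases
    rw [map_mul, map_mul, map_mul, map_inv, hapi, hbpi, hsr0inv]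
    simp
  have hrel : a * b = b * a⁻¹ := by
    rcases hd with h | h
    · have h2 : b⁻¹ * (a * b * a) = 1 := by rw [← h]; group
      have h3 : a * b * a = b := by
        have := inv_mul_eq_one.mp h2
        exact this.symm
      exact eq_mul_inv_iff_mul_eq.mpr h3
    · exfalso
      -- b⁻¹ a b = a ^ (m - 1), leading to contradiction with m odd
      have e1 : b⁻¹ * a * b = a ^ (m - 1) := by
        have h2 : b⁻¹ * a * b = zz * a⁻¹ := eq_mul_inv_iff_mul_eq.mpr h
        rw [h2, ← ham]
        have : a ^ m = a ^ (m - 1) * a := by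
          rw [← pow_succ]
          congr 1
          omega
        rw [this, mul_inv_cancel_right]
      have e2 : b⁻¹ * a ^ (m - 1) * b = a ^ ((m - 1) * (m - 1)) := by
        have h3 : (b⁻¹ * a * b⁻¹⁻¹) ^ (m - 1) = b⁻¹ * a ^ (m - 1) * b⁻¹⁻¹ := conj_pow
        rw [inv_inv] at h3
        rw [← h3, e1, ← pow_mul]
      have e3 : b⁻¹ * (b⁻¹ * a * b) * b = a := by
        have h4 : b⁻¹ * (b⁻¹ * a * b) * b = (b ^ 2)⁻¹ * (a * b ^ 2) := by
          simp [pow_two, mul_inv_rev, mul_assoc]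
        rw [h4, ← hb2a, ← mul_assoc, inv_mul_cancel, one_mul]
      have e4 : a = a ^ ((m - 1) * (m - 1)) := by
        rw [← e2, ← e1]
        exact e3.symm
      have hmod : 1 ≡ (m - 1) * (m - 1) [MOD 2 * m] := by
        rw [← ha]
        exact pow_eq_pow_iff_modEq.mp (by rw [pow_one]; exact e4)
      have hdvd2 : 2 * m ∣ (m - 1) * (m - 1) - 1 :=
        (Nat.modEq_iff_dvd' (by
          calc 1 = 1 * 1 := (one_mul 1).symm
          _ ≤ (m - 1) * (m - 1) := Nat.mul_le_mul (by omega) (by omega))).mp hmod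
      obtain ⟨s, hs⟩ := hmo
      have hkey : (m - 1) * (m - 1) - 1 = 4 * (s * s) - 1 := by
        subst hs
        have : 2 * s + 1 - 1 = 2 * s := by omega
        rw [this]
        ring_nf
      have h2d : 2 ∣ 4 * (s * s) - 1 := by
        rw [← hkey]
        exact dvd_trans ⟨m, by ring⟩ hdvd2
      obtain ⟨c, hc⟩ := h2d
      have hs1 : 1 ≤ s * s := by
        calc 1 = 1 * 1 := (one_mul 1).symm
        _ ≤ s * s := Nat.mul_le_mul (by omega) (by omega)
      omega
  -- generation
  have hkey : ∀ x : Ghat, ∀ i : ZMod m, π x = .r i → ∃ k : ℕ, x = a ^ k := by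
    intro x i hx
    have h1 : π (x * (a ^ i.val)⁻¹) = 1 := by
      rw [map_mul, map_inv, map_pow, hx, hapi, DihedralGroup.r_one_pow]
      simp [ZMod.natCast_zmod_val]
    rcases hker_cases _ h1 with h | h
    · exact ⟨i.val, by rw [← mul_inv_eq_one.mp h]⟩
    · refine ⟨m + i.val, ?_⟩
      have : x = zz * a ^ i.val := by
        rw [← h]; group
      rw [this, ← ham, ← pow_add]
  have hgen : ∀ x : Ghat, (∃ k : ℕ, x = a ^ k) ∨ (∃ k : ℕ, x = b * a ^ k) := by
    intro x
    cases hx : π x with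
    | r i => exact Or.inl (hkey x i hx)
    | sr i =>
      right
      have h1 : π (b⁻¹ * x) = .r i := by
        rw [map_mul, map_inv, hbpi, hsr0inv, hx]
        simp
      obtain ⟨k, hk⟩ := hkey _ i h1
      exact ⟨k, by rw [← hk]; group⟩
  rcases hb2 with h | h
  · exact Or.inl (aux_dihedral (by omega) a b ha h hrel hgen hcard)
  · refine Or.inr (aux_quaternion (by omega) a b ha ?_ hrel hgen hcard)
    rw [h, ham]
end

section
/- Let G be a nonabelian simple group, Ĝ a group, and π : Ĝ → G a surjective group homomorphism whose kernel has cardinality 2 (a double covering of G). Then the center of Ĝ equals ker π, and either Ĝ is isomorphic to G × Multiplicative (ZMod 2) or Ĝ is perfect (its commutator subgroup equals Ĝ). -/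
/-- If `G` is a nonabelian simple group and `π : Ĝ → G` a double covering,
then the center of `Ĝ` is `ker π`, and either `Ĝ ≅ G × C₂` or `Ĝ` is perfect. -/
theorem stmt_19 {G Ghat : Type*} [Group G] [IsSimpleGroup G]
    (hna : ∃ a b : G, a * b ≠ b * a) [Group Ghat]
    (π : Ghat →* G) (hπ : Function.Surjective π) (hker : Nat.card π.ker = 2) :
    Subgroup.center Ghat = π.ker ∧
      (Nonempty (Ghat ≃* G × Multiplicative (ZMod 2)) ∨ commutator Ghat = ⊤) := by
  obtain ⟨a, b, hab⟩ := hna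
  -- uniqueness of the nontrivial element of the kernel
  have huniq : ∀ x y : π.ker, x ≠ 1 → y ≠ 1 → x = y := by
    obtain ⟨u, v, huv, huniv⟩ := Nat.card_eq_two_iff.mp hker
    intro x y hx hy
    have hmem : ∀ z : π.ker, z = u ∨ z = v := by
      intro z
      have : z ∈ ({u, v} : Set π.ker) := huniv ▸ Set.mem_univ z
      simpa using this
    rcases hmem 1 with h1 | h1 <;> rcases hmem x with hx' | hx' <;>
      rcases hmem y with hy' | hy' <;> simp_all
  -- kernel is central (normal subgroup of order 2)
  have hkc : π.ker ≤ Subgroup.center Ghat := by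
    intro k hk
    rw [Subgroup.mem_center_iff]
    intro g
    by_cases hk1 : k = 1
    · simp [hk1]
    · have hconj : g * k * g⁻¹ ∈ π.ker := π.normal_ker.conj_mem k hk g
      have hne : g * k * g⁻¹ ≠ 1 := by
        intro h
        apply hk1
        have := congrArg (fun x => g⁻¹ * x * g) h
        simpa [mul_assoc] using this
      have := huniq ⟨g * k * g⁻¹, hconj⟩ ⟨k, hk⟩
        (by simpa [Subtype.ext_iff] using hne) (by simpa [Subtype.ext_iff] using hk1)
      have heq : g * k * g⁻¹ = k := by simpa [Subtype.ext_iff] using this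
      calc g * k = g * k * g⁻¹ * g := by group
        _ = k * g := by rw [heq]
  -- center maps into the (trivial) center of G, hence center ≤ ker
  have hZG : Subgroup.center G = ⊥ := by
    rcases (inferInstance : (Subgroup.center G).Normal).eq_bot_or_eq_top with h | h
    · exact h
    · exact absurd ((Subgroup.mem_center_iff.mp (h ▸ Subgroup.mem_top b)) a) hab
  have hck : Subgroup.center Ghat ≤ π.ker := by
    intro g hg
    have : π g ∈ Subgroup.center G := by
      rw [Subgroup.mem_center_iff]
      intro x
      obtain ⟨h, rfl⟩ := hπ x
      rw [← map_mul, ← map_mul, Subgroup.mem_center_iff.mp hg h]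
    rw [MonoidHom.mem_ker]
    simpa [hZG] using this
  refine ⟨le_antisymm hck hkc, ?_⟩
  -- G is perfect
  have hGperf : commutator G = ⊤ := by
    rcases (Subgroup.commutator_normal (⊤ : Subgroup G) ⊤).eq_bot_or_eq_top with h | h
    · exfalso
      apply hab
      open scoped commutatorElement in
      have hmem : ⁅a, b⁆ ∈ commutator G :=
        Subgroup.commutator_mem_commutator (Subgroup.mem_top a) (Subgroup.mem_top b)
      rw [commutator_def, h, Subgroup.mem_bot,
        commutatorElement_eq_one_iff_mul_comm] at hmem
      exact hmem
    · exact h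
  set D := commutator Ghat with hD
  -- π maps D onto G
  have hmapD : Subgroup.map π D = ⊤ := by
    rw [hD, commutator_def, Subgroup.map_commutator,
      Subgroup.map_top_of_surjective π hπ, ← commutator_def, hGperf]
  have hliftD : ∀ g : Ghat, ∃ d ∈ D, π d = π g := by
    intro g
    have : π g ∈ Subgroup.map π D := hmapD ▸ Subgroup.mem_top _
    obtain ⟨d, hd, hdg⟩ := this
    exact ⟨d, hd, hdg⟩
  by_cases hkD : π.ker ≤ D
  · -- kernel inside D : Ghat perfect
    right
    rw [eq_top_iff]
    intro g _
    obtain ⟨d, hd, hdg⟩ := hliftD g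
    have hk : d⁻¹ * g ∈ π.ker := by
      rw [MonoidHom.mem_ker, map_mul, map_inv, hdg]
      group
    have : g = d * (d⁻¹ * g) := by group
    rw [this]
    exact D.mul_mem hd (hkD hk)
  · -- split case : Ghat ≅ G × C₂
    left
    rw [SetLike.not_le_iff_exists] at hkD
    obtain ⟨z, hz, hzD⟩ := hkD
    have hdisj : ∀ x : Ghat, x ∈ D → x ∈ π.ker → x = 1 := by
      intro x hxD hxk
      by_contra hx1
      have hzne : (⟨z, hz⟩ : π.ker) ≠ 1 := by
        intro h
        apply hzD
        have hz1 : z = 1 := by simpa [Subtype.ext_iff] using h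
        rw [hz1]; exact D.one_mem
      have hxz := huniq ⟨x, hxk⟩ ⟨z, hz⟩ (by simpa [Subtype.ext_iff] using hx1) hzne
      have hxz' : x = z := by simpa [Subtype.ext_iff] using hxz
      exact hzD (hxz' ▸ hxD)
    haveI : D.Normal := Subgroup.commutator_normal ⊤ ⊤
    -- the quotient map restricted to the kernel is bijective
    have hmksurj : ∀ q : Ghat ⧸ D, ∃ k : π.ker, QuotientGroup.mk (k : Ghat) = q := by
      intro q
      obtain ⟨g, rfl⟩ := QuotientGroup.mk_surjective q
      obtain ⟨d, hd, hdg⟩ := hliftD g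
      have hk : d⁻¹ * g ∈ π.ker := by
        rw [MonoidHom.mem_ker, map_mul, map_inv, hdg]; group
      refine ⟨⟨d⁻¹ * g, hk⟩, ?_⟩
      rw [QuotientGroup.eq]
      have := (inferInstance : D.Normal).conj_mem' d hd g
      simpa [mul_assoc] using this
    have hcardQ : Nat.card (Ghat ⧸ D) = 2 := by
      rw [← hker]
      symm
      apply Nat.card_eq_of_bijective (fun k : π.ker => QuotientGroup.mk (k : Ghat))
      constructor
      · intro x y hxy
        rw [QuotientGroup.eq] at hxy
        have : ((x : Ghat)⁻¹ * y) = 1 :=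
          hdisj _ hxy (π.ker.mul_mem (π.ker.inv_mem x.2) y.2)
        ext
        exact (inv_mul_eq_one.mp this)
      · exact hmksurj
    haveI : Fact (Nat.Prime 2) := ⟨Nat.prime_two⟩
    have hcardC2 : Nat.card (Multiplicative (ZMod 2)) = 2 := by
      simp [Nat.card_eq_fintype_card]
    let e : (Ghat ⧸ D) ≃* Multiplicative (ZMod 2) := mulEquivOfPrimeCardEq hcardQ hcardC2
    let φ : Ghat →* G × Multiplicative (ZMod 2) :=
      π.prod (e.toMonoidHom.comp (QuotientGroup.mk' D))
    have hφinj : Function.Injective φ := by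
      rw [injective_iff_map_eq_one]
      intro g hg
      have h1 : π g = 1 := congrArg Prod.fst hg
      have h2 : e (QuotientGroup.mk g) = 1 := congrArg Prod.snd hg
      have hgD : g ∈ D := by
        have : (QuotientGroup.mk g : Ghat ⧸ D) = 1 := e.injective (by simp [h2])
        exact (QuotientGroup.eq_one_iff g).mp this
      exact hdisj g hgD h1
    have hφsurj : Function.Surjective φ := by
      rintro ⟨g, c⟩
      obtain ⟨d, hd, hdg⟩ := hliftD (Classical.choose (hπ g))
      obtain ⟨k, hkq⟩ := hmksurj (e.symm c)
      refine ⟨d * (k : Ghat), ?_⟩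
      have hπd : π d = g := by rw [hdg]; exact Classical.choose_spec (hπ g)
      have hπk : π (k : Ghat) = 1 := k.2
      have hmkd : (QuotientGroup.mk d : Ghat ⧸ D) = 1 := (QuotientGroup.eq_one_iff d).mpr hd
      have h1 : π (d * (k : Ghat)) = g := by rw [map_mul, hπd, hπk, mul_one]
      have h2 : e (QuotientGroup.mk (d * (k : Ghat))) = c := by
        rw [QuotientGroup.mk_mul, hmkd, one_mul, hkq, MulEquiv.apply_symm_apply]
      simp only [φ, MonoidHom.prod_apply, MonoidHom.coe_comp, Function.comp_apply,
        QuotientGroup.mk'_apply, MulEquiv.coe_toMonoidHom]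
      exact Prod.ext h1 h2
    exact ⟨MulEquiv.ofBijective φ ⟨hφinj, hφsurj⟩⟩
end
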